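/- arXiv:1804.04828 — 13 statements merged into one kernel-verified Lean document; each statement's English description precedes it below -/
import Mathlib

section
/- Let n be a positive integer and let U be a multilinear Littlewood family on n variables with u = |U|. Then there exists a choice of signs h_S ∈ {−1,+1} for S ∈ U such that for every x ∈ {−1,+1}^n, |∑_{S ∈ U} h_S ∏_{i ∈ S} x_i| ≤ √(2(n+1)u). -/
open Finset Real

lemma lw_card_pm : ({1, -1} : Finset ℝ).card = 2 := by
  rw [Finset.card_insert_of_notMem (by norm_num), Finset.card_singleton]

lemma lw_sum_exp {α : Type*} [Fintype α] [DecidableEq α] (U : Finset α) (t : ℝ)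
    (a : α → ℝ) (ha : ∀ S, a S = 1 ∨ a S = -1) :
    ∑ h ∈ Fintype.piFinset (fun _ : α => ({1, -1} : Finset ℝ)),
      Real.exp (t * ∑ S ∈ U, h S * a S)
    = ((Fintype.piFinset (fun _ : α => ({1, -1} : Finset ℝ))).card : ℝ)
        * (Real.cosh t) ^ U.card := by
  classical
  have key : ∀ h : α → ℝ, Real.exp (t * ∑ S ∈ U, h S * a S)
      = ∏ S : α, (if S ∈ U then Real.exp (t * (h S * a S)) else 1) := by
    intro h
    rw [Finset.prod_ite_mem, Finset.univ_inter, Finset.mul_sum, Real.exp_sum]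
  calc ∑ h ∈ Fintype.piFinset (fun _ : α => ({1, -1} : Finset ℝ)),
        Real.exp (t * ∑ S ∈ U, h S * a S)
      = ∑ h ∈ Fintype.piFinset (fun _ : α => ({1, -1} : Finset ℝ)),
          ∏ S : α, (if S ∈ U then Real.exp (t * (h S * a S)) else 1) := by
        exact Finset.sum_congr rfl fun h _ => key h
    _ = ∏ S : α, ∑ v ∈ ({1, -1} : Finset ℝ),
          (if S ∈ U then Real.exp (t * (v * a S)) else 1) := by
        exact Finset.sum_prod_piFinset ({1, -1} : Finset ℝ)
          (fun S v => if S ∈ U then Real.exp (t * (v * a S)) else 1)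
    _ = ∏ S : α, (2 * if S ∈ U then Real.cosh t else 1) := by
        refine Finset.prod_congr rfl fun S _ => ?_
        rw [Finset.sum_pair (by norm_num)]
        by_cases hS : S ∈ U
        · simp only [hS, if_true]
          rcases ha S with h1 | h1 <;>
            simp [h1, Real.cosh_eq] <;> ring
        · norm_num [hS]
    _ = ((Fintype.piFinset (fun _ : α => ({1, -1} : Finset ℝ))).card : ℝ)
          * (Real.cosh t) ^ U.card := by
        rw [Finset.prod_mul_distrib, Finset.prod_const, Finset.prod_ite_mem,
          Finset.univ_inter, Finset.prod_const, Fintype.card_piFinset]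
        simp [lw_card_pm]

/-- For any multilinear Littlewood family `U` on `n` variables with `u = |U|`,
there is a choice of signs `h S ∈ {-1,1}` such that for every `x ∈ {-1,1}^n`,
`|∑_{S ∈ U} h S ∏_{i ∈ S} x i| ≤ √(2(n+1)u)`. -/
theorem littlewood_upper_bound_simple
    (n : ℕ) (hn : 0 < n) (U : Finset (Finset (Fin n)))
    (hU : ∀ S ∈ U, S.Nonempty) :
    ∃ h : Finset (Fin n) → ℝ,
      (∀ S ∈ U, h S = 1 ∨ h S = -1) ∧
      ∀ x : Fin n → ℝ, (∀ i, x i = 1 ∨ x i = -1) →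
        |∑ S ∈ U, h S * ∏ i ∈ S, x i| ≤ Real.sqrt (2 * (n + 1) * U.card) := by
  classical
  rcases eq_or_ne U ∅ with hUe | hUe
  · exact ⟨fun _ => 1, by simp [hUe], fun x _ => by simp [hUe, Real.sqrt_nonneg]⟩
  have hu : 0 < (U.card : ℝ) := by
    exact_mod_cast Finset.card_pos.2 (Finset.nonempty_of_ne_empty hUe)
  set B := Real.sqrt (2 * (n + 1) * U.card) with hBdef
  have hBpos : 0 < B := Real.sqrt_pos.2 (by positivity)
  have hB2 : B ^ 2 = 2 * ((n : ℝ) + 1) * U.card := Real.sq_sqrt (by positivity)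
  set t : ℝ := 2 * ((n : ℝ) + 1) / B with htdef
  have ht : 0 < t := by positivity
  have htB : t * B = 2 * ((n : ℝ) + 1) := by rw [htdef]; field_simp
  have ht2 : t ^ 2 = 2 * ((n : ℝ) + 1) / U.card := by
    rw [htdef, div_pow, hB2]
    rw [div_eq_div_iff (by positivity) (by positivity)]
    ring
  have hut : (U.card : ℝ) * (t ^ 2 / 2) = (n : ℝ) + 1 := by
    rw [ht2]; field_simp
  set E := Fintype.piFinset (fun _ : Finset (Fin n) => ({1, -1} : Finset ℝ)) with hEdef
  set X := Fintype.piFinset (fun _ : Fin n => ({1, -1} : Finset ℝ)) with hXdef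
  have hXcard : (X.card : ℝ) = 2 ^ n := by
    rw [hXdef, Fintype.card_piFinset]
    simp [lw_card_pm]
  -- product of ±1 entries is ±1
  have hprod : ∀ x : Fin n → ℝ, (∀ i, x i = 1 ∨ x i = -1) →
      ∀ S : Finset (Fin n), (∏ i ∈ S, x i) = 1 ∨ (∏ i ∈ S, x i) = -1 := by
    intro x hx S
    have : |∏ i ∈ S, x i| = 1 := by
      rw [Finset.abs_prod]
      exact Finset.prod_eq_one fun i _ => by rcases hx i with h | h <;> simp [h]
    exact (abs_eq (by norm_num : (0:ℝ) ≤ 1)).1 this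
  -- the averaging bound
  have hsum : ∑ h ∈ E, ∑ x ∈ X,
      (Real.exp (t * ∑ S ∈ U, h S * ∏ i ∈ S, x i)
        + Real.exp (-t * ∑ S ∈ U, h S * ∏ i ∈ S, x i))
      ≤ ∑ _h ∈ E, (2 : ℝ) ^ (n + 1) * Real.exp ((n : ℝ) + 1) := by
    rw [Finset.sum_comm]
    rw [Finset.sum_const, nsmul_eq_mul]
    have hterm : ∀ x ∈ X, ∑ h ∈ E,
        (Real.exp (t * ∑ S ∈ U, h S * ∏ i ∈ S, x i)
          + Real.exp (-t * ∑ S ∈ U, h S * ∏ i ∈ S, x i))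
        = (E.card : ℝ) * (2 * Real.cosh t ^ U.card) := by
      intro x hxX
      have hx : ∀ i, x i = 1 ∨ x i = -1 := by
        intro i
        have := Fintype.mem_piFinset.1 hxX i
        simpa using this
      rw [Finset.sum_add_distrib,
        lw_sum_exp U t _ (hprod x hx),
        lw_sum_exp U (-t) _ (hprod x hx), Real.cosh_neg]
      ring
    rw [Finset.sum_congr rfl hterm, Finset.sum_const, nsmul_eq_mul]
    have hcosh : Real.cosh t ^ U.card ≤ Real.exp ((n : ℝ) + 1) := by
      calc Real.cosh t ^ U.card ≤ Real.exp (t ^ 2 / 2) ^ U.card :=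
            pow_le_pow_left₀ (le_of_lt (Real.cosh_pos t)) (Real.cosh_le_exp_half_sq t) _
        _ = Real.exp ((U.card : ℝ) * (t ^ 2 / 2)) := by
            rw [← Real.exp_nat_mul]
        _ = Real.exp ((n : ℝ) + 1) := by rw [hut]
    calc (X.card : ℝ) * ((E.card : ℝ) * (2 * Real.cosh t ^ U.card))
        ≤ (2 : ℝ) ^ n * ((E.card : ℝ) * (2 * Real.exp ((n : ℝ) + 1))) := by
          rw [hXcard]
          have h2 : (0:ℝ) < 2 := by norm_num
          gcongr
      _ = (E.card : ℝ) * ((2 : ℝ) ^ (n + 1) * Real.exp ((n : ℝ) + 1)) := by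
          rw [pow_succ]; ring
  have hEne : E.Nonempty := by
    rw [hEdef, Fintype.piFinset_nonempty]
    exact fun _ => ⟨1, by norm_num⟩
  obtain ⟨h, hhE, hF⟩ := Finset.exists_le_of_sum_le hEne hsum
  refine ⟨h, ?_, ?_⟩
  · intro S _
    have := Fintype.mem_piFinset.1 hhE S
    simpa using this
  · intro x hx
    set v : ℝ := ∑ S ∈ U, h S * ∏ i ∈ S, x i with hvdef
    have hxX : x ∈ X := Fintype.mem_piFinset.2 fun i => by
      rcases hx i with h1 | h1 <;> simp [h1]
    have hsingle : Real.exp (t * v) + Real.exp (-t * v)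
        ≤ (2 : ℝ) ^ (n + 1) * Real.exp ((n : ℝ) + 1) := by
      refine le_trans ?_ hF
      exact Finset.single_le_sum
        (f := fun y : Fin n → ℝ => Real.exp (t * ∑ S ∈ U, h S * ∏ i ∈ S, y i)
          + Real.exp (-t * ∑ S ∈ U, h S * ∏ i ∈ S, y i))
        (fun y _ => by positivity) hxX
    have habs : Real.exp (t * |v|) ≤ Real.exp (t * v) + Real.exp (-t * v) := by
      rcases abs_cases v with ⟨h1, _⟩ | ⟨h1, _⟩
      · rw [h1]; exact le_add_of_nonneg_right (Real.exp_pos _).le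
      · rw [h1, show t * -v = -t * v by ring]
        exact le_add_of_nonneg_left (Real.exp_pos _).le
    have hpow : (2 : ℝ) ^ (n + 1) * Real.exp ((n : ℝ) + 1) ≤ Real.exp (t * B) := by
      have h2e : (2 : ℝ) ^ (n + 1) ≤ Real.exp ((n : ℝ) + 1) := by
        calc (2 : ℝ) ^ (n + 1) ≤ Real.exp 1 ^ (n + 1) := by
              gcongr
              · linarith [Real.add_one_le_exp (1 : ℝ)]
          _ = Real.exp ((n : ℝ) + 1) := by
              rw [← Real.exp_nat_mul]; push_cast; ring_nf
      calc (2 : ℝ) ^ (n + 1) * Real.exp ((n : ℝ) + 1)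
          ≤ Real.exp ((n : ℝ) + 1) * Real.exp ((n : ℝ) + 1) := by
            gcongr
        _ = Real.exp (t * B) := by rw [← Real.exp_add, htB]; ring_nf
    have hfin : t * |v| ≤ t * B :=
      Real.exp_le_exp.1 ((habs.trans hsingle).trans hpow)
    exact le_of_mul_le_mul_left hfin ht
end

section
/- Let n be a positive integer, let d ≥ 2, and let U be a d-bounded multilinear Littlewood family on n variables (every S ∈ U satisfies 1 ≤ |S| ≤ d). Write u_i = |{S ∈ U : i ∈ S}|. Then for every choice of signs h_S ∈ {−1,+1} for S ∈ U, there exists x ∈ {−1,+1}^n such that |∑_{S ∈ U} h_S ∏_{i ∈ S} x_i| ≥ (1 / (3^{d−1} · 2^{5/2} · (d−1)^{3/2} · d)) · ∑_{i=1}^n √(u_i). -/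
/-!
Write `f = ∑_{S ∈ U} h_S x^S` and let `M` be the maximum of `|f|` on the cube. The partial
derivative `∂_i f` has degree at most `d - 1` and, by Parseval, `L²` norm `√u_i` on the cube;
Bonami's inequality `‖g‖₄⁴ ≤ 9^k ‖g‖₂⁴` for degree `k` together with Hölder's
`‖g‖₂³ ≤ ‖g‖₁ ‖g‖₄²` gives `‖∂_i f‖₁ ≥ 3^(1-d) √u_i`. Averaging over the cube gives a vertex `x`
with `∑_i |∂_i f(x)| ≥ 3^(1-d) ∑_i √u_i`. Let `P` be the coordinates where `x_i ∂_i f(x)` has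
the majority sign, and scale them by `t`: since `f` is multilinear, `Q(t) = f(x_P t, x_{Pᶜ})` is
bounded by `M` on `[-1, 1]`, it has degree at most `d`, and `Q'(1) = ∑_{i ∈ P} x_i ∂_i f(x)`
carries at least half of `∑_i |∂_i f(x)|`. Finally `|Q'(1)| ≤ 2^(3/2) (d-1)^(3/2) d M`: integrate
`Q(cos θ)` against `∑_{k ≤ d} k² cos kθ` and apply Cauchy–Schwarz (for `d = 2`, interpolate
`Q` at `-1, 0, 1`).
-/

open Finset Real

namespace Littlewood

section Cube

variable {ι : Type*}

def signs (ε : ι → Bool) (i : ι) : ℝ := if ε i then 1 else -1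

lemma signs_eq_one_or_eq_neg_one (ε : ι → Bool) (i : ι) : signs ε i = 1 ∨ signs ε i = -1 := by
  unfold signs; split_ifs <;> simp

lemma abs_signs (ε : ι → Bool) (i : ι) : |signs ε i| = 1 := by
  rcases signs_eq_one_or_eq_neg_one ε i with h | h <;> simp [h]

variable [DecidableEq ι]

def flipAt (j : ι) (ε : ι → Bool) : ι → Bool := Function.update ε j (!ε j)

lemma flipAt_involutive (j : ι) : Function.Involutive (flipAt j) := by
  intro ε; simp [flipAt]

lemma signs_flipAt (j : ι) (ε : ι → Bool) :
    signs (flipAt j ε) = Function.update (signs ε) j (-signs ε j) := by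
  funext i
  by_cases hij : i = j
  · subst hij; cases h : ε i <;> simp [signs, flipAt, h]
  · simp [signs, flipAt, hij]

end Cube

section MultilinearPolynomial

variable {ι : Type*}

def mlPoly (J : Finset ι) (a : Finset ι → ℝ) (x : ι → ℝ) : ℝ :=
  ∑ S ∈ J.powerset, a S * ∏ i ∈ S, x i

lemma mlPoly_empty (a : Finset ι → ℝ) (x : ι → ℝ) : mlPoly ∅ a x = a ∅ := by
  simp [mlPoly]

variable [DecidableEq ι]

lemma mlPoly_insert {J : Finset ι} {j : ι} (hj : j ∉ J) (a : Finset ι → ℝ) (x : ι → ℝ) :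
    mlPoly (insert j J) a x = mlPoly J a x + x j * mlPoly J (fun S => a (insert j S)) x := by
  rw [mlPoly, sum_powerset_insert hj, mlPoly, mlPoly, mul_sum]
  congr 1
  refine sum_congr rfl fun S hS => ?_
  rw [prod_insert fun h => hj (mem_powerset.1 hS h)]
  ring

lemma mlPoly_update_of_notMem {J : Finset ι} {j : ι} (hj : j ∉ J) (a : Finset ι → ℝ)
    (x : ι → ℝ) (t : ℝ) : mlPoly J a (Function.update x j t) = mlPoly J a x := by
  refine sum_congr rfl fun S hS => ?_
  congr 1
  refine prod_congr rfl fun i hi => Function.update_of_ne ?_ _ _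
  rintro rfl
  exact hj (mem_powerset.1 hS hi)

end MultilinearPolynomial

section CubeMoments

variable {ι : Type*} [Fintype ι] [DecidableEq ι]

/-- Pairing each sign vector with its flip in coordinate `j` replaces the coordinate `x_j` of
`f = g + x_j h` by both signs. -/
lemma two_mul_sum_cube_mlPoly_insert {J : Finset ι} {j : ι} (hj : j ∉ J) (a : Finset ι → ℝ)
    (φ : ℝ → ℝ) :
    2 * ∑ ε : ι → Bool, φ (mlPoly (insert j J) a (signs ε)) =
      ∑ ε : ι → Bool, (φ (mlPoly J a (signs ε) + mlPoly J (fun S => a (insert j S)) (signs ε)) +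
        φ (mlPoly J a (signs ε) - mlPoly J (fun S => a (insert j S)) (signs ε))) := by
  rw [two_mul]
  nth_rw 2 [← Equiv.sum_comp (flipAt_involutive j).toPerm]
  rw [← sum_add_distrib]
  refine sum_congr rfl fun ε _ => ?_
  simp only [Function.Involutive.coe_toPerm, signs_flipAt, mlPoly_insert hj,
    mlPoly_update_of_notMem hj, Function.update_self]
  rcases signs_eq_one_or_eq_neg_one ε j with h | h <;> rw [h]
  · ring_nf
  · rw [add_comm]; ring_nf

lemma sum_cube_mlPoly_insert_sq {J : Finset ι} {j : ι} (hj : j ∉ J) (a : Finset ι → ℝ) :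
    ∑ ε : ι → Bool, mlPoly (insert j J) a (signs ε) ^ 2 =
      ∑ ε : ι → Bool, mlPoly J a (signs ε) ^ 2 +
        ∑ ε : ι → Bool, mlPoly J (fun S => a (insert j S)) (signs ε) ^ 2 := by
  have h := two_mul_sum_cube_mlPoly_insert hj a (· ^ 2)
  rw [← sum_add_distrib]
  have : ∀ g h : ℝ, (g + h) ^ 2 + (g - h) ^ 2 = 2 * (g ^ 2 + h ^ 2) := fun _ _ => by ring
  simp only [this, ← mul_sum] at h
  linarith

lemma sum_cube_mlPoly_insert_pow_four {J : Finset ι} {j : ι} (hj : j ∉ J)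
    (a : Finset ι → ℝ) :
    ∑ ε : ι → Bool, mlPoly (insert j J) a (signs ε) ^ 4 =
      ∑ ε : ι → Bool, mlPoly J a (signs ε) ^ 4 +
        6 * ∑ ε : ι → Bool, mlPoly J a (signs ε) ^ 2 *
          mlPoly J (fun S => a (insert j S)) (signs ε) ^ 2 +
        ∑ ε : ι → Bool, mlPoly J (fun S => a (insert j S)) (signs ε) ^ 4 := by
  have h := two_mul_sum_cube_mlPoly_insert hj a (· ^ 4)
  rw [mul_sum, ← sum_add_distrib, ← sum_add_distrib]
  have : ∀ g h : ℝ, (g + h) ^ 4 + (g - h) ^ 4 = 2 * (g ^ 4 + 6 * (g ^ 2 * h ^ 2) + h ^ 4) :=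
    fun _ _ => by ring
  simp only [this, ← mul_sum] at h
  linarith

theorem sum_cube_mlPoly_sq (J : Finset ι) (a : Finset ι → ℝ) :
    ∑ ε : ι → Bool, mlPoly J a (signs ε) ^ 2 =
      2 ^ Fintype.card ι * ∑ S ∈ J.powerset, a S ^ 2 := by
  induction J using Finset.induction_on generalizing a with
  | empty => simp [mlPoly_empty, mul_comm]
  | insert j J hj ih =>
    rw [sum_cube_mlPoly_insert_sq hj, ih, ih, sum_powerset_insert hj, mul_add]

lemma add_six_mul_add_le_mul_add_sq {X Y Z A B C : ℝ} (hY0 : 0 ≤ Y) (hZ0 : 0 ≤ Z)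
    (hA : 0 ≤ A) (hB : 0 ≤ B) (hC : 0 ≤ C) (hY : Y ^ 2 ≤ X * Z) (hX : X ≤ C * A ^ 2)
    (hZ : 9 * Z ≤ C * B ^ 2) :
    X + 6 * Y + Z ≤ C * (A + B) ^ 2 := by
  have h3Y : 3 * Y ≤ C * A * B := by
    refine (pow_le_pow_iff_left₀ (by positivity) (by positivity) two_ne_zero).1 ?_
    calc (3 * Y) ^ 2 ≤ X * (9 * Z) := by nlinarith
      _ ≤ (C * A ^ 2) * (C * B ^ 2) := mul_le_mul hX hZ (by positivity) (by positivity)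
      _ = (C * A * B) ^ 2 := by ring
  linear_combination hX + 2 * h3Y + hZ + 8 * hZ0

theorem sum_cube_mlPoly_pow_four_le (J : Finset ι) (k : ℕ) (a : Finset ι → ℝ)
    (hdeg : ∀ S ⊆ J, k < #S → a S = 0) :
    ∑ ε : ι → Bool, mlPoly J a (signs ε) ^ 4 ≤
      9 ^ k * 2 ^ Fintype.card ι * (∑ S ∈ J.powerset, a S ^ 2) ^ 2 := by
  induction J using Finset.induction_on generalizing k a with
  | empty =>
    simp only [mlPoly_empty, sum_const, card_univ, Fintype.card_fun, Fintype.card_bool,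
      nsmul_eq_mul, powerset_empty, sum_singleton]
    push_cast
    have h9 : (1 : ℝ) ≤ 9 ^ k := one_le_pow₀ (by norm_num)
    linear_combination (2 ^ Fintype.card ι * a ∅ ^ 4) * h9
  | insert j J hj ih =>
    set b : Finset ι → ℝ := fun S => a (insert j S)
    have hZ : 9 * ∑ ε : ι → Bool, mlPoly J b (signs ε) ^ 4 ≤
        9 ^ k * 2 ^ Fintype.card ι * (∑ S ∈ J.powerset, b S ^ 2) ^ 2 := by
      have hb : ∀ S ⊆ J, k - 1 < #S → b S = 0 := fun S hS hk =>
        hdeg _ (insert_subset_insert j hS) (by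
          rw [card_insert_of_notMem fun h => hj (hS h)]; omega)
      have := ih (k - 1) b hb
      rcases k with _ | k
      · have hb0 : ∑ S ∈ J.powerset, b S ^ 2 = 0 := sum_eq_zero fun S hS => by
          simp [b, hdeg _ (insert_subset_insert j (mem_powerset.1 hS))]
        simp only [hb0] at this ⊢
        linarith
      · rw [Nat.add_sub_cancel] at this
        rw [pow_succ]
        linarith
    have hY := sum_mul_sq_le_sq_mul_sq univ (fun ε => mlPoly J a (signs ε) ^ 2)
      (fun ε => mlPoly J b (signs ε) ^ 2)
    simp only [← pow_mul] at hY
    rw [sum_cube_mlPoly_insert_pow_four hj, sum_powerset_insert hj]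
    exact add_six_mul_add_le_mul_add_sq (by positivity) (by positivity) (by positivity)
      (by positivity) (by positivity) hY (ih k a fun S hS => hdeg S (hS.trans (subset_insert j J)))
      hZ

lemma sum_sq_pow_three_le {α : Type*} (s : Finset α) (f : α → ℝ) :
    (∑ i ∈ s, f i ^ 2) ^ 3 ≤ (∑ i ∈ s, |f i|) ^ 2 * ∑ i ∈ s, f i ^ 4 := by
  have h1 : (∑ i ∈ s, f i ^ 2) ^ 2 ≤ (∑ i ∈ s, |f i|) * ∑ i ∈ s, |f i| ^ 3 :=
    sum_sq_le_sum_mul_sum_of_sq_le_mul s (fun _ _ => abs_nonneg _) (fun _ _ => by positivity)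
      fun i _ => le_of_eq (by rw [← sq_abs (f i)]; ring)
  have h2 : (∑ i ∈ s, |f i| ^ 3) ^ 2 ≤ (∑ i ∈ s, f i ^ 2) * ∑ i ∈ s, f i ^ 4 :=
    sum_sq_le_sum_mul_sum_of_sq_le_mul s (fun _ _ => by positivity) (fun _ _ => by positivity)
      fun i _ => le_of_eq (by rw [show f i ^ 4 = (f i ^ 2) ^ 2 by ring, ← sq_abs (f i)]; ring)
  set Q := ∑ i ∈ s, f i ^ 2
  rcases (show 0 ≤ Q from sum_nonneg fun i _ => sq_nonneg (f i)).eq_or_lt with hQ | hQ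
  · rw [← hQ, zero_pow three_ne_zero]; positivity
  · refine le_of_mul_le_mul_left ?_ hQ
    calc Q * Q ^ 3 = (Q ^ 2) ^ 2 := by ring
      _ ≤ ((∑ i ∈ s, |f i|) * ∑ i ∈ s, |f i| ^ 3) ^ 2 := by gcongr
      _ = (∑ i ∈ s, |f i|) ^ 2 * (∑ i ∈ s, |f i| ^ 3) ^ 2 := by ring
      _ ≤ (∑ i ∈ s, |f i|) ^ 2 * (Q * ∑ i ∈ s, f i ^ 4) := by gcongr
      _ = Q * ((∑ i ∈ s, |f i|) ^ 2 * ∑ i ∈ s, f i ^ 4) := by ring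

theorem pow_card_mul_sqrt_le_sum_cube_abs_mlPoly (J : Finset ι) (k : ℕ) (a : Finset ι → ℝ)
    (hdeg : ∀ S ⊆ J, k < #S → a S = 0) :
    2 ^ Fintype.card ι * √(∑ S ∈ J.powerset, a S ^ 2) ≤
      3 ^ k * ∑ ε : ι → Bool, |mlPoly J a (signs ε)| := by
  set N : ℝ := 2 ^ Fintype.card ι
  set A := ∑ S ∈ J.powerset, a S ^ 2
  set L := ∑ ε : ι → Bool, |mlPoly J a (signs ε)|
  have hA : 0 ≤ A := sum_nonneg fun _ _ => sq_nonneg _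
  have hN : 0 < N := by positivity
  have hHolder := sum_sq_pow_three_le univ fun ε => mlPoly J a (signs ε)
  rw [sum_cube_mlPoly_sq] at hHolder
  have hBonami := sum_cube_mlPoly_pow_four_le J k a hdeg
  have hcube : (N * A) ^ 3 ≤ (3 ^ k * L) ^ 2 * (N * A ^ 2) := by
    calc (N * A) ^ 3 ≤ L ^ 2 * (9 ^ k * N * A ^ 2) := hHolder.trans (by gcongr)
      _ = (3 ^ k * L) ^ 2 * (N * A ^ 2) := by
        rw [show (9 : ℝ) ^ k = (3 ^ k) ^ 2 by rw [← pow_mul, mul_comm, pow_mul]; norm_num]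
        ring
  rcases hA.eq_or_lt with hA0 | hApos
  · rw [← hA0, Real.sqrt_zero, mul_zero]; positivity
  refine (pow_le_pow_iff_left₀ (by positivity) (by positivity) two_ne_zero).1 ?_
  rw [mul_pow, Real.sq_sqrt hA]
  refine le_of_mul_le_mul_right ?_ (by positivity : 0 < N * A ^ 2)
  linear_combination hcube

end CubeMoments

section MaximumPrinciple

variable {ι : Type*} [Fintype ι]

/-- The product probability measure on the cube with coordinate means `x i`; averaging a
multilinear polynomial against it evaluates the polynomial at `x`. -/
noncomputable def cubeWeight (x : ι → ℝ) (ε : ι → Bool) : ℝ := ∏ i, (1 + x i * signs ε i) / 2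

lemma sum_cubeWeight_mul_prod_signs [DecidableEq ι] (x : ι → ℝ) (S : Finset ι) :
    ∑ ε : ι → Bool, cubeWeight x ε * ∏ i ∈ S, signs ε i = ∏ i ∈ S, x i := by
  let F : ι → Bool → ℝ := fun i b =>
    (1 + x i * (if b then 1 else -1)) / 2 * if i ∈ S then (if b then 1 else -1) else 1
  calc ∑ ε : ι → Bool, cubeWeight x ε * ∏ i ∈ S, signs ε i
      = ∑ ε : ι → Bool, ∏ i, F i (ε i) := by
        refine sum_congr rfl fun ε _ => ?_
        rw [cubeWeight, ← Fintype.prod_ite_mem S (signs ε), ← prod_mul_distrib]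
        rfl
    _ = ∏ i, ∑ b, F i b := (Fintype.prod_sum F).symm
    _ = ∏ i, if i ∈ S then x i else 1 := by
        refine prod_congr rfl fun i _ => ?_
        simp only [F, Fintype.sum_bool, if_true, Bool.false_eq_true, if_false]
        split_ifs <;> ring
    _ = ∏ i ∈ S, x i := Fintype.prod_ite_mem S x

lemma cubeWeight_nonneg {x : ι → ℝ} (hx : ∀ i, |x i| ≤ 1) (ε : ι → Bool) :
    0 ≤ cubeWeight x ε :=
  prod_nonneg fun i _ => by
    have := abs_le.1 (hx i)
    rcases signs_eq_one_or_eq_neg_one ε i with h | h <;> rw [h] <;> linarith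

theorem abs_mlPoly_le_of_forall_cube [DecidableEq ι] {J : Finset ι} {a : Finset ι → ℝ} {M : ℝ}
    (hM : ∀ ε, |mlPoly J a (signs ε)| ≤ M) {x : ι → ℝ} (hx : ∀ i, |x i| ≤ 1) :
    |mlPoly J a x| ≤ M := by
  have hmean : mlPoly J a x = ∑ ε : ι → Bool, cubeWeight x ε * mlPoly J a (signs ε) := by
    simp only [mlPoly, mul_sum, ← sum_cubeWeight_mul_prod_signs x]
    rw [sum_comm]
    exact sum_congr rfl fun _ _ => sum_congr rfl fun _ _ => by ring
  have htotal : ∑ ε : ι → Bool, cubeWeight x ε = 1 := by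
    simpa using sum_cubeWeight_mul_prod_signs x ∅
  rw [hmean]
  calc |∑ ε : ι → Bool, cubeWeight x ε * mlPoly J a (signs ε)|
      ≤ ∑ ε : ι → Bool, cubeWeight x ε * M := by
        refine (abs_sum_le_sum_abs _ _).trans (sum_le_sum fun ε _ => ?_)
        rw [abs_mul, abs_of_nonneg (cubeWeight_nonneg hx ε)]
        exact mul_le_mul_of_nonneg_left (hM ε) (cubeWeight_nonneg hx ε)
    _ = M := by rw [← sum_mul, htotal, one_mul]

end MaximumPrinciple


section BinomialCosine

/-- Pascal's rule, transported to the frequencies `n - 2m`. -/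
lemma sum_range_choose_succ_mul_comp (n : ℕ) (g : ℝ → ℝ) :
    ∑ m ∈ range (n + 2), ((n + 1).choose m : ℝ) * g (n + 1 - 2 * m) =
      ∑ m ∈ range (n + 1), (n.choose m : ℝ) * (g (n - 2 * m + 1) + g (n - 2 * m - 1)) := by
  have key := sum_choose_succ_mul (fun i k => g ((k : ℝ) - i)) n
  calc ∑ m ∈ range (n + 2), ((n + 1).choose m : ℝ) * g (n + 1 - 2 * m)
      = ∑ m ∈ range (n + 2), ((n + 1).choose m : ℝ) * g ((n + 1 - m : ℕ) - m) := by
        refine sum_congr rfl fun m hm => ?_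
        rw [Nat.cast_sub (by simp at hm; omega)]
        push_cast; ring_nf
    _ = _ := key
    _ = _ := by
        rw [← sum_add_distrib]
        refine sum_congr rfl fun m hm => ?_
        rw [Nat.cast_sub (by simp at hm; omega), Nat.cast_sub (by simp at hm; omega)]
        push_cast; ring_nf

lemma cos_pow_mul_two_pow (j : ℕ) (θ : ℝ) :
    cos θ ^ j * 2 ^ j = ∑ m ∈ range (j + 1), (j.choose m : ℝ) * cos ((j - 2 * m) * θ) := by
  induction j with
  | zero => simp
  | succ n ih =>
    have pascal := sum_range_choose_succ_mul_comp n fun z => cos (z * θ)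
    push_cast
    rw [pascal, pow_succ, pow_succ, show ∀ a b c d : ℝ, a * c * (b * d) = a * b * (c * d) by
      intros; ring, ih, sum_mul]
    refine sum_congr rfl fun m _ => ?_
    rw [show ((n : ℝ) - 2 * m + 1) * θ = (n - 2 * m) * θ + θ by ring,
      show ((n : ℝ) - 2 * m - 1) * θ = (n - 2 * m) * θ - θ by ring, cos_add, cos_sub]
    ring

lemma sum_range_choose_mul_sq (j : ℕ) :
    ∑ m ∈ range (j + 1), (j.choose m : ℝ) * ((j : ℝ) - 2 * m) ^ 2 = (j : ℝ) * 2 ^ j := by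
  induction j with
  | zero => simp
  | succ n ih =>
    have pascal := sum_range_choose_succ_mul_comp n (· ^ 2)
    push_cast
    rw [pascal]
    calc ∑ m ∈ range (n + 1), (n.choose m : ℝ) * ((n - 2 * m + 1) ^ 2 + (n - 2 * m - 1) ^ 2)
        = 2 * ∑ m ∈ range (n + 1), (n.choose m : ℝ) * ((n : ℝ) - 2 * m) ^ 2 +
            2 * ((∑ m ∈ range (n + 1), n.choose m : ℕ) : ℝ) := by
          push_cast
          rw [mul_sum, mul_sum, ← sum_add_distrib]
          exact sum_congr rfl fun _ _ => by ring
      _ = (n + 1) * 2 ^ (n + 1) := by rw [ih, Nat.sum_range_choose]; push_cast; ring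

end BinomialCosine

section Kernel

open intervalIntegral

lemma integral_cos_int_mul (z : ℤ) :
    ∫ θ in (0 : ℝ)..π, cos (z * θ) = if z = 0 then π else 0 := by
  split_ifs with hz
  · simp [hz]
  · rw [integral_comp_mul_left cos (Int.cast_ne_zero.mpr hz)]
    simp [integral_cos, sin_int_mul_pi]

lemma integral_cos_int_mul_mul_cos_nat_mul (z : ℤ) {k : ℕ} (hk : 1 ≤ k) :
    ∫ θ in (0 : ℝ)..π, cos (z * θ) * cos (k * θ) = if z.natAbs = k then π / 2 else 0 := by
  have hprod : ∀ θ : ℝ, cos (z * θ) * cos (k * θ) =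
      cos ((z + k : ℤ) * θ) / 2 + cos ((z - k : ℤ) * θ) / 2 := fun θ => by
    push_cast
    rw [add_mul, sub_mul, cos_add, cos_sub]
    ring
  simp only [hprod]
  rw [integral_add (Continuous.intervalIntegrable (by fun_prop) _ _)
    (Continuous.intervalIntegrable (by fun_prop) _ _), integral_div, integral_div,
    integral_cos_int_mul, integral_cos_int_mul]
  split_ifs <;> first | ring1 | omega

noncomputable def kernel (d : ℕ) (θ : ℝ) : ℝ := ∑ k ∈ Icc 1 d, (k : ℝ) ^ 2 * cos (k * θ)

@[fun_prop]
lemma continuous_kernel (d : ℕ) : Continuous (kernel d) := by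
  unfold kernel; fun_prop

/-- On cosines of frequency at most `d`, integration against the kernel is
`-(π/2) d²/dθ²` at `θ = 0`. -/
lemma integral_cos_int_mul_mul_kernel {d : ℕ} {z : ℤ} (hz : z.natAbs ≤ d) :
    ∫ θ in (0 : ℝ)..π, cos (z * θ) * kernel d θ = π / 2 * z ^ 2 := by
  simp only [kernel, mul_sum, mul_left_comm (cos _)]
  rw [integral_finsetSum fun k _ => Continuous.intervalIntegrable (by fun_prop) _ _]
  simp only [integral_const_mul]
  rw [sum_congr rfl fun k hk => by
    rw [integral_cos_int_mul_mul_cos_nat_mul z (mem_Icc.1 hk).1, mul_ite, mul_zero]]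
  rw [sum_ite_eq]
  split_ifs with hmem
  · rw [Nat.cast_natAbs, Int.cast_abs, sq_abs]; ring
  · have : z = 0 := by simp at hmem; omega
    simp [this]

lemma integral_cos_pow_mul_kernel {d j : ℕ} (hj : j ≤ d) :
    ∫ θ in (0 : ℝ)..π, cos θ ^ j * kernel d θ = π / 2 * j := by
  have hexp : ∀ θ, cos θ ^ j * kernel d θ = (∑ m ∈ range (j + 1),
      (j.choose m : ℝ) * (cos (((j - 2 * m : ℤ) : ℝ) * θ) * kernel d θ)) / 2 ^ j := fun θ => by
    rw [eq_div_iff (by positivity), mul_right_comm, cos_pow_mul_two_pow, sum_mul]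
    push_cast
    exact sum_congr rfl fun _ _ => by ring
  simp only [hexp]
  rw [integral_div, integral_finsetSum fun m _ => Continuous.intervalIntegrable (by fun_prop) _ _]
  simp only [integral_const_mul]
  rw [sum_congr rfl fun m hm => by
    rw [integral_cos_int_mul_mul_kernel (by simp at hm; omega)]]
  push_cast
  simp only [mul_left_comm _ (π / 2), ← mul_sum, sum_range_choose_mul_sq]
  field_simp

lemma integral_kernel_sq (d : ℕ) :
    ∫ θ in (0 : ℝ)..π, kernel d θ ^ 2 = π / 2 * ∑ k ∈ Icc 1 d, (k : ℝ) ^ 4 := by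
  have hexp : ∀ θ, kernel d θ ^ 2 =
      ∑ k ∈ Icc 1 d, (k : ℝ) ^ 2 * (cos (((k : ℤ) : ℝ) * θ) * kernel d θ) := fun θ => by
    rw [sq]
    nth_rw 1 [kernel]
    rw [sum_mul]
    push_cast
    exact sum_congr rfl fun _ _ => by ring
  simp only [hexp]
  rw [integral_finsetSum fun k _ => Continuous.intervalIntegrable (by fun_prop) _ _]
  simp only [integral_const_mul]
  rw [mul_sum]
  refine sum_congr rfl fun k hk => ?_
  rw [integral_cos_int_mul_mul_kernel (by simp at hk ⊢; omega)]
  push_cast; ring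

lemma sq_integral_mul_le {f g : ℝ → ℝ} (hf : Continuous f) (hg : Continuous g) {a b : ℝ}
    (hab : a ≤ b) :
    (∫ x in a..b, f x * g x) ^ 2 ≤ (∫ x in a..b, f x ^ 2) * ∫ x in a..b, g x ^ 2 := by
  have hquad : ∀ t : ℝ, 0 ≤ (∫ x in a..b, f x ^ 2) * (t * t) +
      (2 * ∫ x in a..b, f x * g x) * t + ∫ x in a..b, g x ^ 2 := fun t => by
    have hexp : ∀ x, (t * f x + g x) ^ 2 = t ^ 2 * f x ^ 2 + 2 * t * (f x * g x) + g x ^ 2 :=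
      fun x => by ring
    have h0 : 0 ≤ ∫ x in a..b, (t * f x + g x) ^ 2 :=
      integral_nonneg hab fun x _ => sq_nonneg _
    simp only [hexp] at h0
    rw [integral_add (Continuous.intervalIntegrable (by fun_prop) _ _)
        (Continuous.intervalIntegrable (by fun_prop) _ _),
      integral_add (Continuous.intervalIntegrable (by fun_prop) _ _)
        (Continuous.intervalIntegrable (by fun_prop) _ _),
      integral_const_mul, integral_const_mul] at h0
    linarith
  have := discrim_le_zero hquad
  rw [discrim] at this
  linarith

/-- `∑ c_i e_i` is `Q'(1)` for `Q t = ∑ c_i t ^ e_i`, and `Q (cos θ)` integrates against the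
kernel to `(π/2) Q'(1)`. -/
theorem sq_sum_mul_exponent_le_kernel {α : Type*} {F : Finset α} {c : α → ℝ} {e : α → ℕ}
    {d : ℕ} (hdeg : ∀ i ∈ F, d < e i → c i = 0) {M : ℝ}
    (hQ : ∀ t : ℝ, |t| ≤ 1 → |∑ i ∈ F, c i * t ^ e i| ≤ M) :
    (∑ i ∈ F, c i * e i) ^ 2 ≤ 2 * M ^ 2 * ∑ k ∈ Icc 1 d, (k : ℝ) ^ 4 := by
  set D := ∑ i ∈ F, c i * e i
  have hQK : ∫ θ in (0 : ℝ)..π, (∑ i ∈ F, c i * cos θ ^ e i) * kernel d θ = π / 2 * D := by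
    simp only [sum_mul, mul_assoc]
    rw [integral_finsetSum fun i _ => Continuous.intervalIntegrable (by fun_prop) _ _, mul_sum]
    refine sum_congr rfl fun i hi => ?_
    rw [integral_const_mul]
    rcases le_or_gt (e i) d with he | he
    · rw [integral_cos_pow_mul_kernel he]; ring
    · simp [hdeg i hi he]
  have hQ2 : ∫ θ in (0 : ℝ)..π, (∑ i ∈ F, c i * cos θ ^ e i) ^ 2 ≤ π * M ^ 2 := by
    calc ∫ θ in (0 : ℝ)..π, (∑ i ∈ F, c i * cos θ ^ e i) ^ 2 ≤ ∫ θ in (0 : ℝ)..π, M ^ 2 :=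
          integral_mono_on pi_pos.le (Continuous.intervalIntegrable (by fun_prop) _ _)
            intervalIntegrable_const fun θ _ => sq_le_sq' (abs_le.1 (hQ _ (abs_cos_le_one θ))).1
              (abs_le.1 (hQ _ (abs_cos_le_one θ))).2
      _ = π * M ^ 2 := by simp
  have hCS := sq_integral_mul_le (f := fun θ => ∑ i ∈ F, c i * cos θ ^ e i) (by fun_prop)
    (continuous_kernel d) pi_pos.le
  rw [hQK, integral_kernel_sq] at hCS
  have : π ^ 2 * D ^ 2 ≤ π ^ 2 * (2 * M ^ 2 * ∑ k ∈ Icc 1 d, (k : ℝ) ^ 4) := by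
    have := hCS.trans (mul_le_mul_of_nonneg_right hQ2 (by positivity))
    linarith
  exact le_of_mul_le_mul_left this (by positivity)

lemma sum_Icc_pow_four_le {d : ℕ} (hd : 3 ≤ d) :
    ∑ k ∈ Icc 1 d, (k : ℝ) ^ 4 ≤ 4 * ((d : ℝ) - 1) ^ 3 * d ^ 2 := by
  have hd' : (3 : ℝ) ≤ d := by exact_mod_cast hd
  calc ∑ k ∈ Icc 1 d, (k : ℝ) ^ 4 ≤ ∑ _k ∈ Icc 1 d, (d : ℝ) ^ 4 :=
        sum_le_sum fun k hk => by gcongr; exact_mod_cast (mem_Icc.1 hk).2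
    _ = (d : ℝ) ^ 3 * d ^ 2 := by simp; ring
    _ ≤ 4 * ((d : ℝ) - 1) ^ 3 * d ^ 2 := by
      gcongr
      nlinarith [mul_nonneg (sub_nonneg.2 hd') (sq_nonneg ((d : ℝ) - 2))]

/-- For degree two, `Q'(1) = (3/2) Q(1) + (1/2) Q(-1) - 2 Q(0)`. -/
lemma sq_sum_mul_exponent_le_of_degree_two {α : Type*} {F : Finset α} {c : α → ℝ}
    {e : α → ℕ} (hdeg : ∀ i ∈ F, 2 < e i → c i = 0) {M : ℝ}
    (hQ : ∀ t : ℝ, |t| ≤ 1 → |∑ i ∈ F, c i * t ^ e i| ≤ M) :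
    (∑ i ∈ F, c i * e i) ^ 2 ≤ 16 * M ^ 2 := by
  have hinterp : ∑ i ∈ F, c i * e i = 3 / 2 * ∑ i ∈ F, c i * 1 ^ e i +
      1 / 2 * ∑ i ∈ F, c i * (-1) ^ e i - 2 * ∑ i ∈ F, c i * 0 ^ e i := by
    simp only [mul_sum, ← sum_add_distrib, ← sum_sub_distrib]
    refine sum_congr rfl fun i hi => ?_
    rcases le_or_gt (e i) 2 with he | he
    · interval_cases h : e i <;> norm_num <;> ring
    · simp [hdeg i hi he]
  have h1 := abs_le.1 (hQ 1 (by norm_num))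
  have h2 := abs_le.1 (hQ (-1) (by norm_num))
  have h3 := abs_le.1 (hQ 0 (by norm_num))
  rw [hinterp]
  nlinarith

theorem sq_sum_mul_exponent_le {α : Type*} {F : Finset α} {c : α → ℝ} {e : α → ℕ}
    {d : ℕ} (hd : 2 ≤ d) (hdeg : ∀ i ∈ F, d < e i → c i = 0) {M : ℝ}
    (hQ : ∀ t : ℝ, |t| ≤ 1 → |∑ i ∈ F, c i * t ^ e i| ≤ M) :
    (∑ i ∈ F, c i * e i) ^ 2 ≤ 8 * ((d : ℝ) - 1) ^ 3 * d ^ 2 * M ^ 2 := by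
  rcases hd.eq_or_lt with rfl | hd3
  · have := sq_sum_mul_exponent_le_of_degree_two hdeg hQ
    norm_num
    linarith [sq_nonneg M]
  · calc (∑ i ∈ F, c i * e i) ^ 2 ≤ 2 * M ^ 2 * ∑ k ∈ Icc 1 d, (k : ℝ) ^ 4 :=
          sq_sum_mul_exponent_le_kernel hdeg hQ
      _ ≤ 2 * M ^ 2 * (4 * ((d : ℝ) - 1) ^ 3 * d ^ 2) := by
          gcongr; exact sum_Icc_pow_four_le hd3
      _ = 8 * ((d : ℝ) - 1) ^ 3 * d ^ 2 * M ^ 2 := by ring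

end Kernel

section PartialDerivatives

variable {ι : Type*} [DecidableEq ι]

lemma sum_powerset_erase_insert {β : Type*} [AddCommMonoid β] {s : Finset ι} {i : ι}
    (hi : i ∈ s) (f : Finset ι → β) :
    ∑ T ∈ (s.erase i).powerset, f (insert i T) = ∑ S ∈ s.powerset with i ∈ S, f S := by
  rw [sum_filter]
  conv_rhs => rw [← insert_erase hi]
  rw [sum_powerset_insert (notMem_erase i s)]
  simp only [mem_insert_self, if_true]
  rw [sum_eq_zero fun T hT => if_neg fun h => notMem_erase i s (mem_powerset.1 hT h), zero_add]

/-- `mlPoly (J.erase i) (fun T => a (insert i T))` is the partial derivative `∂_i f`. -/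
lemma mul_mlPoly_erase_insert {J : Finset ι} {i : ι} (hi : i ∈ J) (a : Finset ι → ℝ)
    (x : ι → ℝ) :
    x i * mlPoly (J.erase i) (fun T => a (insert i T)) x =
      ∑ S ∈ J.powerset with i ∈ S, a S * ∏ j ∈ S, x j := by
  rw [← sum_powerset_erase_insert hi, mlPoly, mul_sum]
  refine sum_congr rfl fun T hT => ?_
  rw [prod_insert fun h => notMem_erase i J (mem_powerset.1 hT h)]
  ring

variable [Fintype ι]

/-- Euler's identity: the right side is the derivative at `t = 1` of `f` with the coordinates
in `P` scaled by `t` (see `mlPoly_piecewise`). -/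
lemma sum_mul_mlPoly_erase_insert (P : Finset ι) (a : Finset ι → ℝ) (x : ι → ℝ) :
    ∑ i ∈ P, x i * mlPoly (univ.erase i) (fun T => a (insert i T)) x =
      ∑ S ∈ univ.powerset, a S * (∏ j ∈ S, x j) * #(S ∩ P) := by
  simp only [mul_mlPoly_erase_insert (mem_univ _), sum_filter]
  rw [sum_comm]
  refine sum_congr rfl fun S _ => ?_
  rw [sum_ite_mem, sum_const, nsmul_eq_mul, inter_comm]
  ring

lemma mlPoly_piecewise (P : Finset ι) (a : Finset ι → ℝ) (x : ι → ℝ) (t : ℝ) :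
    mlPoly univ a (P.piecewise (fun i => t * x i) x) =
      ∑ S ∈ univ.powerset, a S * (∏ j ∈ S, x j) * t ^ #(S ∩ P) := by
  refine sum_congr rfl fun S _ => ?_
  rw [prod_piecewise, prod_mul_distrib, prod_const, ← prod_inter_mul_prod_sdiff S P x]
  ring

end PartialDerivatives

/-- Half of the total mass of a family of reals is carried by its positive or by its negative
part. -/
lemma exists_subset_sum_abs_le_two_mul_abs_sum {ι : Type*} (s : Finset ι) (v : ι → ℝ) :
    ∃ P ⊆ s, ∑ i ∈ s, |v i| ≤ 2 * |∑ i ∈ P, v i| := by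
  set p := ∑ i ∈ s with 0 ≤ v i, v i
  set q := ∑ i ∈ s with ¬0 ≤ v i, v i
  have hp : 0 ≤ p := sum_nonneg fun i hi => (mem_filter.1 hi).2
  have hq : q ≤ 0 := sum_nonpos fun i hi => (not_le.1 (mem_filter.1 hi).2).le
  have htotal : ∑ i ∈ s, |v i| = p - q := by
    rw [← sum_filter_add_sum_filter_not s (fun i => 0 ≤ v i), sub_eq_add_neg, ← sum_neg_distrib]
    congr 1
    · exact sum_congr rfl fun i hi => abs_of_nonneg (mem_filter.1 hi).2
    · exact sum_congr rfl fun i hi => abs_of_neg (not_le.1 (mem_filter.1 hi).2)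
  rcases le_total (-q) p with h | h
  · exact ⟨_, filter_subset _ s, by rw [htotal, abs_of_nonneg hp]; linarith⟩
  · exact ⟨_, filter_subset _ s, by rw [htotal, abs_of_nonpos hq]; linarith⟩

section LowerBound

variable {ι : Type*} [Fintype ι] [DecidableEq ι]

/-- Averaging the `L¹` bounds for all partial derivatives over the cube. -/
lemma exists_sum_sqrt_le_sum_abs_partial (k : ℕ) (a : Finset ι → ℝ)
    (hdeg : ∀ S, k < #S → a S = 0) :
    ∃ ε : ι → Bool, ∑ i, √(∑ T ∈ (univ.erase i).powerset, a (insert i T) ^ 2) ≤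
      3 ^ (k - 1) * ∑ i, |mlPoly (univ.erase i) (fun T => a (insert i T)) (signs ε)| := by
  have hL1 : ∀ i, 2 ^ Fintype.card ι * √(∑ T ∈ (univ.erase i).powerset, a (insert i T) ^ 2) ≤
      3 ^ (k - 1) * ∑ ε : ι → Bool, |mlPoly (univ.erase i) (fun T => a (insert i T)) (signs ε)| :=
    fun i => pow_card_mul_sqrt_le_sum_cube_abs_mlPoly _ _ _ fun T hT hk => hdeg _ (by
      rw [card_insert_of_notMem fun h => notMem_erase i univ (hT h)]; omega)
  refine (exists_le_of_sum_le univ_nonempty ?_).imp fun ε hε => hε.2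
  calc ∑ _ε : ι → Bool, ∑ i, √(∑ T ∈ (univ.erase i).powerset, a (insert i T) ^ 2)
      = ∑ i, 2 ^ Fintype.card ι * √(∑ T ∈ (univ.erase i).powerset, a (insert i T) ^ 2) := by
        simp [mul_sum]
    _ ≤ ∑ i, 3 ^ (k - 1) * ∑ ε : ι → Bool,
          |mlPoly (univ.erase i) (fun T => a (insert i T)) (signs ε)| := sum_le_sum fun i _ => hL1 i
    _ = ∑ ε : ι → Bool, 3 ^ (k - 1) *
          ∑ i, |mlPoly (univ.erase i) (fun T => a (insert i T)) (signs ε)| := by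
        simp only [← mul_sum]; rw [sum_comm]

theorem sq_sum_sqrt_le_of_forall_cube {d : ℕ} (hd : 2 ≤ d) (a : Finset ι → ℝ)
    (hdeg : ∀ S, d < #S → a S = 0) {M : ℝ} (hM : ∀ ε, |mlPoly univ a (signs ε)| ≤ M) :
    (∑ i, √(∑ T ∈ (univ.erase i).powerset, a (insert i T) ^ 2)) ^ 2 ≤
      32 * 9 ^ (d - 1) * ((d : ℝ) - 1) ^ 3 * d ^ 2 * M ^ 2 := by
  obtain ⟨ε, hε⟩ := exists_sum_sqrt_le_sum_abs_partial d a hdeg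
  set x := signs ε
  set v : ι → ℝ := fun i => x i * mlPoly (univ.erase i) (fun T => a (insert i T)) x
  obtain ⟨P, -, hP⟩ := exists_subset_sum_abs_le_two_mul_abs_sum univ v
  have hQ : ∀ t : ℝ, |t| ≤ 1 →
      |∑ S ∈ univ.powerset, a S * (∏ j ∈ S, x j) * t ^ #(S ∩ P)| ≤ M := fun t ht => by
    rw [← mlPoly_piecewise]
    refine abs_mlPoly_le_of_forall_cube hM fun i => ?_
    by_cases hi : i ∈ P <;> simp [hi, abs_mul, abs_signs, ht, x]
  have hD := sq_sum_mul_exponent_le hd (fun S _ hS => by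
    simp [hdeg S (hS.trans_le (card_le_card inter_subset_left))]) hQ
  rw [← sum_mul_mlPoly_erase_insert] at hD
  have hB : ∑ i, √(∑ T ∈ (univ.erase i).powerset, a (insert i T) ^ 2) ≤
      3 ^ (d - 1) * (2 * |∑ i ∈ P, v i|) := by
    refine hε.trans (mul_le_mul_of_nonneg_left (le_of_eq_of_le (sum_congr rfl fun i _ => ?_) hP)
      (by positivity))
    simp [v, x, abs_mul, abs_signs]
  calc (∑ i, √(∑ T ∈ (univ.erase i).powerset, a (insert i T) ^ 2)) ^ 2
      ≤ (3 ^ (d - 1) * (2 * |∑ i ∈ P, v i|)) ^ 2 :=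
        pow_le_pow_left₀ (sum_nonneg fun _ _ => Real.sqrt_nonneg _) hB 2
    _ = 4 * 9 ^ (d - 1) * (∑ i ∈ P, v i) ^ 2 := by
        rw [mul_pow, mul_pow, sq_abs, ← pow_mul, mul_comm (d - 1), pow_mul]; norm_num; ring
    _ ≤ 4 * 9 ^ (d - 1) * (8 * ((d : ℝ) - 1) ^ 3 * d ^ 2 * M ^ 2) := by gcongr
    _ = 32 * 9 ^ (d - 1) * ((d : ℝ) - 1) ^ 3 * d ^ 2 * M ^ 2 := by ring

lemma mlPoly_univ_ite_mem (U : Finset (Finset ι)) (h : Finset ι → ℝ) (x : ι → ℝ) :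
    mlPoly univ (fun S => if S ∈ U then h S else 0) x = ∑ S ∈ U, h S * ∏ i ∈ S, x i := by
  simp only [mlPoly, ite_mul, zero_mul]
  rw [sum_ite_mem, powerset_univ, univ_inter]

lemma sum_powerset_erase_sq_ite_mem {U : Finset (Finset ι)} {h : Finset ι → ℝ}
    (hsign : ∀ S ∈ U, h S = 1 ∨ h S = -1) (i : ι) :
    ∑ T ∈ (univ.erase i).powerset, (if insert i T ∈ U then h (insert i T) else 0) ^ 2 =
      #{S ∈ U | i ∈ S} := by
  rw [sum_powerset_erase_insert (mem_univ i) fun S => (if S ∈ U then h S else 0) ^ 2]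
  have hsq : ∀ S, (if S ∈ U then h S else 0) ^ 2 = if S ∈ U then 1 else 0 := fun S => by
    split_ifs with hS
    · rcases hsign S hS with h1 | h1 <;> simp [h1]
    · simp
  simp only [hsq, sum_ite_mem, sum_const, nsmul_one]
  congr 2
  ext S
  simp [and_comm]

end LowerBound

lemma sq_littlewood_constant {d : ℕ} (hd : 1 ≤ d) :
    ((3 : ℝ) ^ (d - 1) * (2 : ℝ) ^ ((5 : ℝ) / 2) * ((d : ℝ) - 1) ^ ((3 : ℝ) / 2) * d) ^ 2 =
      32 * 9 ^ (d - 1) * ((d : ℝ) - 1) ^ 3 * d ^ 2 := by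
  have hd1 : (0 : ℝ) ≤ d - 1 := by
    have : (1 : ℝ) ≤ d := by exact_mod_cast hd
    linarith
  have h9 : ((3 : ℝ) ^ (d - 1)) ^ 2 = 9 ^ (d - 1) := by
    rw [← pow_mul, mul_comm, pow_mul]; norm_num
  have h32 : ((2 : ℝ) ^ ((5 : ℝ) / 2)) ^ 2 = 32 := by
    rw [← Real.rpow_natCast, ← Real.rpow_mul zero_le_two]; norm_num
  have hcube : (((d : ℝ) - 1) ^ ((3 : ℝ) / 2)) ^ 2 = ((d : ℝ) - 1) ^ 3 := by
    rw [← Real.rpow_natCast, ← Real.rpow_mul hd1]; norm_num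
  rw [mul_pow, mul_pow, mul_pow, h9, h32, hcube]
  ring

end Littlewood

theorem littlewood_lower_bound_degrees_general
    (n : ℕ) (d : ℕ) (hd : 2 ≤ d)
    (U : Finset (Finset (Fin n)))
    (hU : ∀ S ∈ U, S.Nonempty ∧ S.card ≤ d)
    (h : Finset (Fin n) → ℝ) (hsign : ∀ S ∈ U, h S = 1 ∨ h S = -1) :
    ∃ x : Fin n → ℝ, (∀ i, x i = 1 ∨ x i = -1) ∧
      (1 / ((3:ℝ) ^ (d - 1) * (2:ℝ) ^ ((5:ℝ)/2) * ((d:ℝ) - 1) ^ ((3:ℝ)/2) * d)) *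
          ∑ i : Fin n, Real.sqrt ((U.filter (fun S => i ∈ S)).card) ≤
        |∑ S ∈ U, h S * ∏ i ∈ S, x i| := by
  set a : Finset (Fin n) → ℝ := fun S => if S ∈ U then h S else 0
  obtain ⟨εm, -, hmax⟩ := exists_max_image univ
    (fun ε => |Littlewood.mlPoly univ a (Littlewood.signs ε)|) univ_nonempty
  refine ⟨Littlewood.signs εm, Littlewood.signs_eq_one_or_eq_neg_one εm, ?_⟩
  have hdeg : ∀ S, d < #S → a S = 0 := fun S hS =>
    if_neg fun hSU => (hU S hSU).2.not_gt hS
  have hcore := Littlewood.sq_sum_sqrt_le_of_forall_cube hd a hdeg fun ε => hmax ε (mem_univ ε)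
  simp only [a, Littlewood.sum_powerset_erase_sq_ite_mem hsign,
    Littlewood.mlPoly_univ_ite_mem] at hcore
  have hC : 0 < (3:ℝ) ^ (d - 1) * (2:ℝ) ^ ((5:ℝ)/2) * ((d:ℝ) - 1) ^ ((3:ℝ)/2) * d := by
    have : (2 : ℝ) ≤ d := by exact_mod_cast hd
    have := Real.rpow_pos_of_pos (show (0 : ℝ) < d - 1 by linarith) ((3 : ℝ) / 2)
    positivity
  rw [one_div_mul_eq_div, div_le_iff₀ hC]
  refine (pow_le_pow_iff_left₀ (sum_nonneg fun _ _ => Real.sqrt_nonneg _) (by positivity)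
    two_ne_zero).1 ?_
  rw [mul_pow, Littlewood.sq_littlewood_constant (by omega)]
  linear_combination hcore

/-- For `d ≥ 2` and a `d`-bounded multilinear Littlewood family `U` on `n`
variables, for every choice of signs `h S ∈ {-1,1}` there exists `x ∈ {-1,1}^n` with
`|∑_{S ∈ U} h S ∏_{i ∈ S} x i| ≥ (1/(3^(d-1) · 2^(5/2) · (d-1)^(3/2) · d)) · ∑_i √(u_i)`. -/
theorem littlewood_lower_bound_degrees
    (n : ℕ) (hn : 0 < n) (d : ℕ) (hd : 2 ≤ d)
    (U : Finset (Finset (Fin n)))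
    (hU : ∀ S ∈ U, S.Nonempty ∧ S.card ≤ d)
    (h : Finset (Fin n) → ℝ) (hsign : ∀ S ∈ U, h S = 1 ∨ h S = -1) :
    ∃ x : Fin n → ℝ, (∀ i, x i = 1 ∨ x i = -1) ∧
      (1 / ((3:ℝ) ^ (d - 1) * (2:ℝ) ^ ((5:ℝ)/2) * ((d:ℝ) - 1) ^ ((3:ℝ)/2) * d)) *
          ∑ i : Fin n, Real.sqrt ((U.filter (fun S => i ∈ S)).card) ≤
        |∑ S ∈ U, h S * ∏ i ∈ S, x i| :=
  littlewood_lower_bound_degrees_general n d hd U hU h hsign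
end

section
/- Let n be a positive integer and let U be a multilinear Littlewood family on n variables whose vertex degrees u_i = |{S ∈ U : i ∈ S}| satisfy u_1 ≥ u_2 ≥ … ≥ u_n ≥ 1. Let K = ⌈log₂(n+1)⌉ and for 1 ≤ k ≤ K define V_k = {S ∈ U : S ∩ {2^{k−1},…,2^k−1} ≠ ∅ and S ∩ {2^k,…,n} = ∅} and v_k = |V_k|. Then there exists a choice of signs h_S ∈ {−1,+1} for S ∈ U such that for every x ∈ {−1,+1}^n, |∑_{S ∈ U} h_S ∏_{i ∈ S} x_i| ≤ 1.18 · ∑_{k=1}^K 2^{k/2} · √(v_k). -/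
/-!
Signs are chosen separately on each level `V_k`, whose monomials only involve the variables
`1, …, 2^k - 1`, so fewer than `2^k` sign patterns `x` matter there. Averaging the exponential
moment `∑_x 2 cosh (λ h(x))` over all signings `h` of `V_k` gives `∏_{S ∈ V_k} 2 cosh λ` per
pattern, and `cosh λ ≤ exp (λ² / 2)`; optimising `λ` yields a signing with
`|h(x)| ≤ √(2 log 2 · 2^k · v_k)` for all `x`, and `2 log 2 < 1.18²`. The triangle inequality over
the levels then gives the bound.
-/

open Finset Real

section SignedSums

variable {ι α : Type*} [DecidableEq ι]

def signOn (T : Finset ι) (S : ι) : ℝ := if S ∈ T then 1 else -1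

lemma signOn_eq_one_or_neg_one (T : Finset ι) (S : ι) :
    signOn T S = 1 ∨ signOn T S = -1 := by
  unfold signOn; split_ifs <;> simp

lemma two_mul_cosh (x : ℝ) : 2 * cosh x = exp x + exp (-x) := by
  rw [cosh_eq]; ring

lemma sum_powerset_exp_sum_signOn_mul (V : Finset ι) (a : ι → ℝ) :
    ∑ T ∈ V.powerset, exp (∑ S ∈ V, signOn T S * a S) = ∏ S ∈ V, 2 * cosh (a S) := by
  simp_rw [two_mul_cosh, prod_add]
  refine sum_congr rfl fun T hT => ?_
  rw [← sum_sdiff (mem_powerset.1 hT), exp_add, exp_sum, exp_sum, mul_comm]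
  congr 1
  · exact prod_congr rfl fun S hS => by simp [signOn, hS]
  · exact prod_congr rfl fun S hS => by simp [signOn, (mem_sdiff.1 hS).2]

lemma cosh_mul_le_exp_half_sq {l y : ℝ} (hy : |y| ≤ 1) : cosh (l * y) ≤ exp (l ^ 2 / 2) := by
  refine (cosh_le_exp_half_sq _).trans (exp_le_exp.2 ?_)
  have : y ^ 2 ≤ 1 := by nlinarith [abs_nonneg y, sq_abs y]
  nlinarith [sq_nonneg l]

lemma sum_powerset_exp_mul_sum_signOn_le (V : Finset ι) {a : ι → ℝ}
    (ha : ∀ S ∈ V, |a S| ≤ 1) (l : ℝ) :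
    ∑ T ∈ V.powerset, exp (l * ∑ S ∈ V, signOn T S * a S) ≤ (2 * exp (l ^ 2 / 2)) ^ #V := by
  simp_rw [mul_sum, mul_left_comm l]
  rw [sum_powerset_exp_sum_signOn_mul, ← prod_const]
  exact prod_le_prod (fun S _ => by positivity)
    fun S hS => mul_le_mul_of_nonneg_left (cosh_mul_le_exp_half_sq (ha S hS)) zero_le_two

lemma exists_subset_sum_cosh_le (V : Finset ι) (X : Finset α) {f : ι → α → ℝ}
    (hf : ∀ S ∈ V, ∀ x ∈ X, |f S x| ≤ 1) (l : ℝ) :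
    ∃ T ⊆ V, ∑ x ∈ X, 2 * cosh (l * ∑ S ∈ V, signOn T S * f S x) ≤
      2 * #X * exp (#V * l ^ 2 / 2) := by
  have hmgf : ∀ x ∈ X, ∀ l' : ℝ, l' ^ 2 = l ^ 2 →
      ∑ T ∈ V.powerset, exp (l' * ∑ S ∈ V, signOn T S * f S x) ≤ (2 * exp (l ^ 2 / 2)) ^ #V :=
    fun x hx l' hl' => hl' ▸ sum_powerset_exp_mul_sum_signOn_le V (fun S hS => hf S hS x hx) l'
  have htotal : ∑ T ∈ V.powerset, ∑ x ∈ X, 2 * cosh (l * ∑ S ∈ V, signOn T S * f S x) ≤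
      ∑ T ∈ V.powerset, 2 * #X * exp (#V * l ^ 2 / 2) := by
    rw [sum_comm, sum_const, card_powerset, nsmul_eq_mul, Nat.cast_pow, Nat.cast_two]
    calc ∑ x ∈ X, ∑ T ∈ V.powerset, 2 * cosh (l * ∑ S ∈ V, signOn T S * f S x)
        ≤ ∑ x ∈ X, 2 * (2 * exp (l ^ 2 / 2)) ^ #V := by
          refine sum_le_sum fun x hx => ?_
          simp_rw [two_mul_cosh, sum_add_distrib, ← neg_mul]
          linarith [hmgf x hx l rfl, hmgf x hx (-l) (neg_sq l)]
      _ = (2 : ℝ) ^ #V * (2 * #X * exp (#V * l ^ 2 / 2)) := by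
          rw [sum_const, nsmul_eq_mul, mul_pow, ← exp_nat_mul]
          ring_nf
  obtain ⟨T, hT, hle⟩ := exists_le_of_sum_le (powerset_nonempty V) htotal
  exact ⟨T, mem_powerset.1 hT, hle⟩

lemma exists_subset_forall_abs_sum_signOn_mul_le (V : Finset ι) (X : Finset α)
    {f : ι → α → ℝ} (hf : ∀ S ∈ V, ∀ x ∈ X, |f S x| ≤ 1) :
    ∃ T ⊆ V, ∀ x ∈ X, |∑ S ∈ V, signOn T S * f S x| ≤ √(2 * log (2 * #X) * #V) := by
  rcases V.eq_empty_or_nonempty with rfl | hV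
  · exact ⟨∅, subset_rfl, fun x _ => by simp⟩
  rcases X.eq_empty_or_nonempty with rfl | hX
  · exact ⟨∅, empty_subset _, by simp⟩
  set L := log (2 * #X)
  have hL : 0 < L := log_pos (by have := card_pos.2 hX; norm_cast; omega)
  have hv : (0 : ℝ) < #V := by exact_mod_cast card_pos.2 hV
  -- this choice of `l` turns the moment bound into `exp (l * |s|) ≤ exp (2 * L)`
  set l := √(2 * L / #V)
  have hl : 0 < l := sqrt_pos.2 (by positivity)
  have hvl : (#V : ℝ) * l ^ 2 / 2 = L := by
    rw [sq_sqrt (by positivity)]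
    field_simp
  have hl_mul : l * √(2 * L * #V) = 2 * L := by
    rw [← sqrt_mul (by positivity), show 2 * L / #V * (2 * L * #V) = (2 * L) ^ 2 by
      field_simp, sqrt_sq (by positivity)]
  obtain ⟨T, hTV, hT⟩ := exists_subset_sum_cosh_le V X hf l
  refine ⟨T, hTV, fun x hx => le_of_mul_le_mul_left ?_ hl⟩
  rw [hl_mul, ← exp_le_exp]
  calc exp (l * |∑ S ∈ V, signOn T S * f S x|)
      ≤ 2 * cosh (l * ∑ S ∈ V, signOn T S * f S x) := by
        rw [← cosh_abs, abs_mul, abs_of_pos hl, two_mul_cosh]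
        linarith [exp_pos (-(l * |∑ S ∈ V, signOn T S * f S x|))]
    _ ≤ ∑ y ∈ X, 2 * cosh (l * ∑ S ∈ V, signOn T S * f S y) :=
        single_le_sum (f := fun y => 2 * cosh (l * ∑ S ∈ V, signOn T S * f S y))
          (fun _ _ => by positivity) hx
    _ ≤ 2 * #X * exp (#V * l ^ 2 / 2) := hT
    _ = exp (2 * L) := by rw [hvl, two_mul L, exp_add, exp_log (by positivity)]

end SignedSums

section Characters

variable {α : Type*} [DecidableEq α]

lemma abs_prod_ite_mem_le_one (S W : Finset α) :
    |∏ i ∈ S, if i ∈ W then (1 : ℝ) else -1| ≤ 1 := by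
  rw [abs_prod]
  exact prod_le_one (fun _ _ => abs_nonneg _) fun i _ => by split_ifs <;> simp

lemma prod_eq_prod_ite_mem_filter {N S : Finset α} {x : α → ℝ} (hS : S ⊆ N)
    (hx : ∀ i ∈ N, x i = 1 ∨ x i = -1) :
    ∏ i ∈ S, x i = ∏ i ∈ S, if i ∈ N.filter (x · = 1) then 1 else -1 :=
  prod_congr rfl fun i hi => by rcases hx i (hS hi) with h | h <;> simp [h, hS hi]

lemma exists_signs_abs_sum_mul_prod_le {N : Finset α} (V : Finset (Finset α))
    (hV : ∀ S ∈ V, S ⊆ N) :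
    ∃ ε : Finset α → ℝ, (∀ S ∈ V, ε S = 1 ∨ ε S = -1) ∧
      ∀ x : α → ℝ, (∀ i ∈ N, x i = 1 ∨ x i = -1) →
        |∑ S ∈ V, ε S * ∏ i ∈ S, x i| ≤ √(2 * (#N + 1) * log 2 * #V) := by
  obtain ⟨T, -, hT⟩ := exists_subset_forall_abs_sum_signOn_mul_le V N.powerset
    (f := fun S W => ∏ i ∈ S, if i ∈ W then (1 : ℝ) else -1)
    fun S _ W _ => abs_prod_ite_mem_le_one S W
  have hlog : log (2 * #N.powerset) = (#N + 1) * log 2 := by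
    rw [card_powerset, Nat.cast_pow, Nat.cast_two, ← pow_succ', log_pow]
    push_cast; ring
  refine ⟨signOn T, fun S _ => signOn_eq_one_or_neg_one T S, fun x hx => ?_⟩
  calc |∑ S ∈ V, signOn T S * ∏ i ∈ S, x i|
      = |∑ S ∈ V, signOn T S * ∏ i ∈ S, if i ∈ N.filter (x · = 1) then 1 else -1| := by
        rw [sum_congr rfl fun S hS => by rw [prod_eq_prod_ite_mem_filter (hV S hS) hx]]
    _ ≤ √(2 * log (2 * #N.powerset) * #V) := hT _ (mem_powerset.2 (filter_subset _ N))
    _ = √(2 * (#N + 1) * log 2 * #V) := by rw [hlog]; ring_nf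

end Characters

lemma exists_signs_abs_sum_le_sum_of_fiberwise {ι κ α : Type*} [DecidableEq κ]
    (U : Finset ι) {g : ι → κ} {K : Finset κ} (hg : ∀ S ∈ U, g S ∈ K) (f : ι → α → ℝ)
    (P : α → Prop) (b : κ → ℝ)
    (hfiber : ∀ k ∈ K, ∃ ε : ι → ℝ, (∀ S ∈ U.filter (g · = k), ε S = 1 ∨ ε S = -1) ∧
      ∀ x, P x → |∑ S ∈ U.filter (g · = k), ε S * f S x| ≤ b k) :
    ∃ ε : ι → ℝ, (∀ S ∈ U, ε S = 1 ∨ ε S = -1) ∧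
      ∀ x, P x → |∑ S ∈ U, ε S * f S x| ≤ ∑ k ∈ K, b k := by
  choose! ε hε_sign hε_bound using hfiber
  refine ⟨fun S => ε (g S) S, fun S hS => hε_sign _ (hg S hS) S (mem_filter.2 ⟨hS, rfl⟩),
    fun x hx => ?_⟩
  rw [← sum_fiberwise_of_maps_to hg]
  refine (abs_sum_le_sum_abs _ _).trans (sum_le_sum fun k hk => ?_)
  calc |∑ S ∈ U.filter (g · = k), ε (g S) S * f S x|
      = |∑ S ∈ U.filter (g · = k), ε k S * f S x| := by
        rw [sum_congr rfl fun S hS => by rw [(mem_filter.1 hS).2]]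
    _ ≤ b k := hε_bound k hk x hx

lemma sqrt_two_mul_mul_log_two_mul_le {c t v : ℝ} (hc : c ≤ 2 ^ t) (hv : 0 ≤ v) :
    √(2 * c * log 2 * v) ≤ 1.18 * (2 ^ (t / 2) * √v) := by
  have h2t : (0 : ℝ) < 2 ^ t := by positivity
  have hle : 2 * c * log 2 * v ≤ 1.18 ^ 2 * 2 ^ t * v := by
    have := log_two_lt_d9
    have := log_pos one_lt_two
    have : 2 * c * log 2 ≤ 1.18 ^ 2 * 2 ^ t := by nlinarith
    exact mul_le_mul_of_nonneg_right this hv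
  calc √(2 * c * log 2 * v) ≤ √(1.18 ^ 2 * 2 ^ t * v) := sqrt_le_sqrt hle
    _ = 1.18 * (2 ^ (t / 2) * √v) := by
      rw [sqrt_mul (by positivity), sqrt_mul (by positivity), sqrt_sq (by norm_num),
        sqrt_eq_rpow, ← rpow_mul zero_le_two, mul_one_div, mul_assoc]

section DyadicLevel

def dyadicLevel (S : Finset ℕ) : ℕ := Nat.clog 2 (S.sup id + 1)

lemma clog_two_add_one_eq_iff {M k : ℕ} (hM : 1 ≤ M) :
    Nat.clog 2 (M + 1) = k ↔ 2 ^ (k - 1) ≤ M ∧ M < 2 ^ k := by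
  rcases k with _ | j
  · have := Nat.clog_pos one_lt_two (by omega : 1 < M + 1)
    simp only [pow_zero]
    omega
  · rw [le_antisymm_iff, Nat.clog_le_iff_le_pow one_lt_two, (Nat.lt_iff_add_one_le (m := j)).symm,
      Nat.lt_clog_iff_pow_lt one_lt_two, Nat.add_sub_cancel]
    omega

variable {n : ℕ} {S : Finset ℕ}

lemma dyadicLevel_mem_Icc (hS : S.Nonempty) (hSn : S ⊆ Icc 1 n) :
    dyadicLevel S ∈ Icc 1 (Nat.clog 2 (n + 1)) := by
  obtain ⟨M, hMS, hM⟩ := S.exists_mem_eq_sup hS id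
  obtain ⟨hM1, hMn⟩ := mem_Icc.1 (hSn hMS)
  rw [dyadicLevel, hM, id]
  exact mem_Icc.2 ⟨Nat.clog_pos one_lt_two (by omega), Nat.clog_mono_right 2 (by omega)⟩

lemma dyadicLevel_eq_iff {k : ℕ} (hS : S.Nonempty) (hSn : S ⊆ Icc 1 n) :
    dyadicLevel S = k ↔
      (S ∩ Icc (2 ^ (k - 1)) (2 ^ k - 1)).Nonempty ∧ S ∩ Icc (2 ^ k) n = ∅ := by
  obtain ⟨M, hMS, hM⟩ := S.exists_mem_eq_sup hS id
  have hbounds : ∀ i ∈ S, 1 ≤ i ∧ i ≤ n := fun i hi => mem_Icc.1 (hSn hi)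
  have hle : ∀ i ∈ S, i ≤ M := fun i hi => (le_sup (f := id) hi).trans_eq hM
  rw [dyadicLevel, hM, id, clog_two_add_one_eq_iff (hbounds M hMS).1]
  constructor
  · rintro ⟨hlow, hup⟩
    refine ⟨⟨M, mem_inter.2 ⟨hMS, mem_Icc.2 ⟨hlow, by omega⟩⟩⟩,
      eq_empty_of_forall_notMem fun i hi => ?_⟩
    have := hle i (mem_inter.1 hi).1
    have := mem_Icc.1 (mem_inter.1 hi).2
    omega
  · rintro ⟨⟨i, hi⟩, hempty⟩
    refine ⟨(mem_Icc.1 (mem_inter.1 hi).2).1.trans (hle i (mem_inter.1 hi).1), ?_⟩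
    by_contra! h
    exact eq_empty_iff_forall_notMem.1 hempty M
      (mem_inter.2 ⟨hMS, mem_Icc.2 ⟨h, (hbounds M hMS).2⟩⟩)

lemma subset_Icc_inter_Ico_of_inter_Icc_eq_empty {k : ℕ} (hSn : S ⊆ Icc 1 n)
    (hS : S ∩ Icc (2 ^ k) n = ∅) : S ⊆ Icc 1 n ∩ Ico 1 (2 ^ k) := fun i hi => by
  have hin := mem_Icc.1 (hSn hi)
  have : i ∉ Icc (2 ^ k) n := fun h => by simpa [hS] using mem_inter.2 ⟨hi, h⟩
  simp only [mem_inter, mem_Icc, mem_Ico] at this ⊢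
  omega

lemma card_Icc_inter_Ico_add_one_le (k : ℕ) :
    (#(Icc 1 n ∩ Ico 1 (2 ^ k)) : ℝ) + 1 ≤ 2 ^ (k : ℝ) := by
  have := card_le_card (inter_subset_right (s₁ := Icc 1 n) (s₂ := Ico 1 (2 ^ k)))
  rw [Nat.card_Ico] at this
  rw [rpow_natCast]
  exact_mod_cast (by have := Nat.one_le_two_pow (n := k); omega)

end DyadicLevel

theorem littlewood_chaining_upper_bound_general
    (n : ℕ) (U : Finset (Finset ℕ))
    (hU : ∀ S ∈ U, S.Nonempty ∧ S ⊆ Finset.Icc 1 n) :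
    ∃ h : Finset ℕ → ℝ,
      (∀ S ∈ U, h S = 1 ∨ h S = -1) ∧
      ∀ x : ℕ → ℝ, (∀ i ∈ Finset.Icc 1 n, x i = 1 ∨ x i = -1) →
        |∑ S ∈ U, h S * ∏ i ∈ S, x i| ≤
          1.18 * ∑ k ∈ Finset.Icc 1 (Nat.clog 2 (n + 1)),
            (2:ℝ) ^ ((k:ℝ)/2) *
              Real.sqrt ((U.filter (fun S =>
                (S ∩ Finset.Icc (2 ^ (k - 1)) (2 ^ k - 1)).Nonempty ∧
                  S ∩ Finset.Icc (2 ^ k) n = ∅)).card) := by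
  simp_rw [mul_sum]
  refine exists_signs_abs_sum_le_sum_of_fiberwise U
    (fun S hS => dyadicLevel_mem_Icc (hU S hS).1 (hU S hS).2)
    (fun S (x : ℕ → ℝ) => ∏ i ∈ S, x i) _ _ fun k _ => ?_
  rw [filter_congr fun S hS => dyadicLevel_eq_iff (k := k) (hU S hS).1 (hU S hS).2]
  refine (exists_signs_abs_sum_mul_prod_le (N := Icc 1 n ∩ Ico 1 (2 ^ k)) _ fun S hS => ?_).imp
    fun ε ⟨hε, hbound⟩ => ⟨hε, fun x hx => (hbound x fun i hi => hx i (mem_inter.1 hi).1).trans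
      (sqrt_two_mul_mul_log_two_mul_le (card_Icc_inter_Ico_add_one_le k) (Nat.cast_nonneg _))⟩
  exact subset_Icc_inter_Ico_of_inter_Icc_eq_empty (hU S (mem_filter.1 hS).1).2
    (mem_filter.1 hS).2.2

/-- chaining upper bound: With variables `{1,…,n}`, degrees
`u i = |{S ∈ U : i ∈ S}|` nonincreasing and at least `1`, `K = ⌈log₂(n+1)⌉`, and
`V k = {S ∈ U : S ∩ [2^(k-1), 2^k - 1] ≠ ∅ ∧ S ∩ [2^k, n] = ∅}` with `v k = |V k|`,
there is a choice of signs `h S ∈ {-1,1}` such that for every `x ∈ {-1,1}^n`,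
`|∑_{S ∈ U} h S ∏_{i ∈ S} x i| ≤ 1.18 ∑_{k=1}^{K} 2^(k/2) √(v k)`. -/
theorem littlewood_chaining_upper_bound
    (n : ℕ) (hn : 0 < n) (U : Finset (Finset ℕ))
    (hU : ∀ S ∈ U, S.Nonempty ∧ S ⊆ Finset.Icc 1 n)
    (hmono : ∀ i ∈ Finset.Icc 1 n, ∀ j ∈ Finset.Icc 1 n, i ≤ j →
      (U.filter (fun S => j ∈ S)).card ≤ (U.filter (fun S => i ∈ S)).card)
    (hdeg : ∀ i ∈ Finset.Icc 1 n, 1 ≤ (U.filter (fun S => i ∈ S)).card) :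
    ∃ h : Finset ℕ → ℝ,
      (∀ S ∈ U, h S = 1 ∨ h S = -1) ∧
      ∀ x : ℕ → ℝ, (∀ i ∈ Finset.Icc 1 n, x i = 1 ∨ x i = -1) →
        |∑ S ∈ U, h S * ∏ i ∈ S, x i| ≤
          1.18 * ∑ k ∈ Finset.Icc 1 (Nat.clog 2 (n + 1)),
            (2:ℝ) ^ ((k:ℝ)/2) *
              Real.sqrt ((U.filter (fun S =>
                (S ∩ Finset.Icc (2 ^ (k - 1)) (2 ^ k - 1)).Nonempty ∧
                  S ∩ Finset.Icc (2 ^ k) n = ∅)).card) :=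
  littlewood_chaining_upper_bound_general n U hU
end

section
/- Let n and δ be positive integers and let p be a multilinear Littlewood polynomial on n variables: p(x) = ∑_{S ∈ U} p_S ∏_{i∈S} x_i where U is a finite set of nonempty subsets of {1,…,n}, each of size at most δ, and p_S ∈ {−1,+1} for S ∈ U. Let w = |U|. Then 2^{−n} · ∑_{x ∈ {−1,+1}^n} |p(x)| ≥ 3^{−δ} · √w. -/
open Finset

noncomputable def lwval {ι : Type*} [DecidableEq ι] (U : Finset (Finset ι))
    (q : Finset ι → ℝ) (T : Finset ι) : ℝ :=
  ∑ S ∈ U, q S * (-1 : ℝ) ^ (S ∩ T).card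

lemma lwval_decomp {ι : Type*} [DecidableEq ι] (a : ι) (U : Finset (Finset ι))
    (q : Finset ι → ℝ) (T : Finset ι) (haT : a ∉ T) :
    lwval U q T
      = lwval (U.filter (fun S => a ∉ S)) q T
        + lwval ((U.filter (fun S => a ∈ S)).image (fun S => S.erase a)) (fun S => q (insert a S)) T
    ∧ lwval U q (insert a T)
      = lwval (U.filter (fun S => a ∉ S)) q T
        - lwval ((U.filter (fun S => a ∈ S)).image (fun S => S.erase a)) (fun S => q (insert a S)) T := by
  have hinj : Set.InjOn (fun S : Finset ι => S.erase a) (U.filter (fun S => a ∈ S)) := by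
    intro S hS S' hS' h
    simp only [mem_coe, mem_filter] at hS hS'
    have h' : S.erase a = S'.erase a := h
    have : insert a (S.erase a) = insert a (S'.erase a) := by rw [h']
    rwa [insert_erase hS.2, insert_erase hS'.2] at this
  have himg : ∀ T' : Finset ι,
      lwval ((U.filter (fun S => a ∈ S)).image (fun S => S.erase a)) (fun S => q (insert a S)) T'
        = ∑ S ∈ U.filter (fun S => a ∈ S), q S * (-1 : ℝ) ^ ((S.erase a) ∩ T').card := by
    intro T'
    rw [lwval, sum_image hinj]
    refine Finset.sum_congr rfl fun S hS => ?_
    simp only [mem_filter] at hS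
    rw [insert_erase hS.2]
  constructor
  · rw [lwval, ← Finset.sum_filter_add_sum_filter_not U (fun S => a ∉ S), himg]
    simp only [not_not]
    congr 1
    refine Finset.sum_congr rfl fun S hS => ?_
    simp only [mem_filter] at hS
    congr 2
    rw [Finset.erase_inter, Finset.erase_eq_of_notMem (fun h => haT (Finset.mem_of_mem_inter_right h))]
  · rw [lwval, ← Finset.sum_filter_add_sum_filter_not U (fun S => a ∉ S), himg]
    have h1 : ∀ S ∈ U.filter (fun S => a ∉ S),
        q S * (-1 : ℝ) ^ (S ∩ insert a T).card = q S * (-1 : ℝ) ^ (S ∩ T).card := by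
      intro S hS
      simp only [mem_filter] at hS
      rw [Finset.inter_insert_of_notMem hS.2]
    have h2 : ∀ S ∈ U.filter (fun S => a ∈ S),
        q S * (-1 : ℝ) ^ (S ∩ insert a T).card
          = -(q S * (-1 : ℝ) ^ ((S.erase a) ∩ T).card) := by
      intro S hS
      simp only [mem_filter] at hS
      have hST : S ∩ insert a T = insert a ((S.erase a) ∩ T) := by
        ext x
        simp only [mem_inter, mem_insert, mem_erase]
        constructor
        · rintro ⟨hxS, hx | hxT⟩
          · exact Or.inl hx
          · exact Or.inr ⟨⟨fun h => haT (h ▸ hxT), hxS⟩, hxT⟩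
        · rintro (rfl | ⟨⟨hxa, hxS⟩, hxT⟩)
          · exact ⟨hS.2, Or.inl rfl⟩
          · exact ⟨hxS, Or.inr hxT⟩
      have hna : a ∉ (S.erase a) ∩ T := fun h => (Finset.mem_erase.1 (Finset.mem_of_mem_inter_left h)).1 rfl
      rw [hST, Finset.card_insert_of_notMem hna, pow_succ]
      ring
    simp only [not_not]
    rw [Finset.sum_congr rfl h1, Finset.sum_congr rfl h2, Finset.sum_neg_distrib]
    rw [lwval]
    ring

lemma lwval_parseval {ι : Type*} [DecidableEq ι] (V : Finset ι) :
    ∀ (U : Finset (Finset ι)) (q : Finset ι → ℝ), (∀ S ∈ U, S ⊆ V) →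
    ∑ T ∈ V.powerset, (lwval U q T) ^ 2 = 2 ^ V.card * ∑ S ∈ U, (q S) ^ 2 := by
  classical
  induction V using Finset.induction_on with
  | empty =>
    intro U q hUV
    have hU : U ⊆ {∅} := fun S hS => Finset.mem_singleton.2 (Finset.subset_empty.1 (hUV S hS))
    rcases Finset.subset_singleton_iff.1 hU with rfl | rfl
    · simp [lwval]
    · simp [lwval]
  | @insert a V' ha ih =>
    intro U q hUV
    set U₀ := U.filter (fun S => a ∉ S) with hU₀
    set W := (U.filter (fun S => a ∈ S)).image (fun S => S.erase a) with hW
    set q' := fun S => q (insert a S) with hq'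
    have hinj : Set.InjOn (fun S : Finset ι => S.erase a) (U.filter (fun S => a ∈ S)) := by
      intro S hS S' hS' h
      simp only [mem_coe, mem_filter] at hS hS'
      have h' : S.erase a = S'.erase a := h
      have : insert a (S.erase a) = insert a (S'.erase a) := by rw [h']
      rwa [insert_erase hS.2, insert_erase hS'.2] at this
    have hB : ∑ S ∈ W, (q' S) ^ 2 = ∑ S ∈ U.filter (fun S => a ∈ S), (q S) ^ 2 := by
      rw [hW, sum_image hinj]
      refine Finset.sum_congr rfl fun S hS => ?_
      simp only [mem_filter] at hS
      simp only [hq', insert_erase hS.2]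
    have hsplit : ∑ S ∈ U₀, (q S) ^ 2 + ∑ S ∈ W, (q' S) ^ 2 = ∑ S ∈ U, (q S) ^ 2 := by
      rw [hB, hU₀]
      rw [← Finset.sum_filter_add_sum_filter_not U (fun S => a ∉ S)]
      simp only [not_not]
    have hdec : ∀ T ∈ V'.powerset,
        lwval U q T = lwval U₀ q T + lwval W q' T ∧
        lwval U q (insert a T) = lwval U₀ q T - lwval W q' T := by
      intro T hT
      exact lwval_decomp a U q T
        (fun h => ha (Finset.mem_powerset.1 hT h))
    rw [Finset.sum_powerset_insert ha]
    have e1 : ∑ T ∈ V'.powerset, (lwval U q T) ^ 2 + ∑ T ∈ V'.powerset, (lwval U q (insert a T)) ^ 2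
        = 2 * ∑ T ∈ V'.powerset, (lwval U₀ q T) ^ 2 + 2 * ∑ T ∈ V'.powerset, (lwval W q' T) ^ 2 := by
      rw [← Finset.sum_add_distrib, Finset.mul_sum, Finset.mul_sum, ← Finset.sum_add_distrib]
      refine Finset.sum_congr rfl fun T hT => ?_
      rw [(hdec T hT).1, (hdec T hT).2]
      ring
    have hUV₀ : ∀ S ∈ U₀, S ⊆ V' := by
      intro S hS
      simp only [hU₀, mem_filter] at hS
      exact (Finset.subset_insert_iff_of_notMem hS.2).1 (hUV S hS.1)
    have hUVW : ∀ S ∈ W, S ⊆ V' := by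
      intro S hS
      simp only [hW, Finset.mem_image, mem_filter] at hS
      obtain ⟨S', ⟨hS'U, haS'⟩, rfl⟩ := hS
      intro x hx
      have hx' := Finset.mem_erase.1 hx
      have := hUV S' hS'U hx'.2
      rcases Finset.mem_insert.1 this with rfl | h
      · exact absurd rfl hx'.1
      · exact h
    rw [e1, ih U₀ q hUV₀, ih W q' hUVW, Finset.card_insert_of_notMem ha, ← hsplit]
    ring

lemma lwval_hyper {ι : Type*} [DecidableEq ι] (V : Finset ι) :
    ∀ (δ : ℕ) (U : Finset (Finset ι)) (q : Finset ι → ℝ),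
    (∀ S ∈ U, S ⊆ V ∧ S.card ≤ δ) →
    ∑ T ∈ V.powerset, (lwval U q T) ^ 4
      ≤ 9 ^ δ * 2 ^ V.card * (∑ S ∈ U, (q S) ^ 2) ^ 2 := by
  classical
  induction V using Finset.induction_on with
  | empty =>
    intro δ U q hUV
    have hU : U ⊆ {∅} := fun S hS => Finset.mem_singleton.2 (Finset.subset_empty.1 (hUV S hS).1)
    have h9 : (1:ℝ) ≤ 9 ^ δ := one_le_pow₀ (by norm_num)
    rcases Finset.subset_singleton_iff.1 hU with rfl | rfl
    · simp [lwval]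
    · simp only [lwval, Finset.powerset_empty, Finset.sum_singleton, Finset.card_empty,
        Finset.empty_inter, Finset.sum_singleton, pow_zero, mul_one]
      nlinarith [sq_nonneg ((q ∅)^2), sq_nonneg (q ∅)]
  | @insert a V' ha ih =>
    intro δ U q hUV
    set U₀ := U.filter (fun S => a ∉ S) with hU₀
    set U₁ := U.filter (fun S => a ∈ S) with hU₁
    set W := U₁.image (fun S => S.erase a) with hW
    set q' := fun S => q (insert a S) with hq'
    have hinj : Set.InjOn (fun S : Finset ι => S.erase a) U₁ := by
      intro S hS S' hS' h
      simp only [hU₁, mem_coe, mem_filter] at hS hS'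
      have h' : S.erase a = S'.erase a := h
      have : insert a (S.erase a) = insert a (S'.erase a) := by rw [h']
      rwa [insert_erase hS.2, insert_erase hS'.2] at this
    have hB : ∑ S ∈ W, (q' S) ^ 2 = ∑ S ∈ U₁, (q S) ^ 2 := by
      rw [hW, sum_image hinj]
      refine Finset.sum_congr rfl fun S hS => ?_
      simp only [hU₁, mem_filter] at hS
      simp only [hq', insert_erase hS.2]
    have hsplit : ∑ S ∈ U₀, (q S) ^ 2 + ∑ S ∈ W, (q' S) ^ 2 = ∑ S ∈ U, (q S) ^ 2 := by
      rw [hB, hU₀, hU₁]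
      rw [← Finset.sum_filter_add_sum_filter_not U (fun S => a ∉ S)]
      simp only [not_not]
    have hdec : ∀ T ∈ V'.powerset,
        lwval U q T = lwval U₀ q T + lwval W q' T ∧
        lwval U q (insert a T) = lwval U₀ q T - lwval W q' T := by
      intro T hT
      exact lwval_decomp a U q T (fun h => ha (Finset.mem_powerset.1 hT h))
    have hUV₀ : ∀ S ∈ U₀, S ⊆ V' ∧ S.card ≤ δ := by
      intro S hS
      simp only [hU₀, mem_filter] at hS
      exact ⟨(Finset.subset_insert_iff_of_notMem hS.2).1 (hUV S hS.1).1, (hUV S hS.1).2⟩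
    -- abbreviations
    set A := ∑ S ∈ U₀, (q S) ^ 2 with hA
    set B := ∑ S ∈ W, (q' S) ^ 2 with hBdef
    have hAnn : 0 ≤ A := Finset.sum_nonneg fun _ _ => sq_nonneg _
    have hBnn : 0 ≤ B := Finset.sum_nonneg fun _ _ => sq_nonneg _
    have e1 : ∑ T ∈ (insert a V').powerset, (lwval U q T) ^ 4
        = 2 * ∑ T ∈ V'.powerset, (lwval U₀ q T) ^ 4
          + 12 * ∑ T ∈ V'.powerset, (lwval U₀ q T) ^ 2 * (lwval W q' T) ^ 2
          + 2 * ∑ T ∈ V'.powerset, (lwval W q' T) ^ 4 := by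
      rw [Finset.sum_powerset_insert ha]
      rw [Finset.mul_sum, Finset.mul_sum, Finset.mul_sum, ← Finset.sum_add_distrib,
        ← Finset.sum_add_distrib, ← Finset.sum_add_distrib]
      refine Finset.sum_congr rfl fun T hT => ?_
      rw [(hdec T hT).1, (hdec T hT).2]
      ring
    have hG4 : ∑ T ∈ V'.powerset, (lwval U₀ q T) ^ 4 ≤ 9 ^ δ * 2 ^ V'.card * A ^ 2 :=
      ih δ U₀ q hUV₀
    have hG4nn : (0:ℝ) ≤ ∑ T ∈ V'.powerset, (lwval U₀ q T) ^ 4 :=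
      Finset.sum_nonneg fun _ _ => by positivity
    have hH4nn : (0:ℝ) ≤ ∑ T ∈ V'.powerset, (lwval W q' T) ^ 4 :=
      Finset.sum_nonneg fun _ _ => by positivity
    have hcard : (insert a V').card = V'.card + 1 := Finset.card_insert_of_notMem ha
    by_cases hU1e : U₁ = ∅
    · -- no monomial contains a
      have hWe : W = ∅ := by rw [hW, hU1e, Finset.image_empty]
      have hBz : B = 0 := by rw [hBdef, hWe, Finset.sum_empty]
      have hhz : ∀ T, lwval W q' T = 0 := by intro T; rw [hWe]; simp [lwval]
      rw [e1, hcard]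
      have h2 : ∑ T ∈ V'.powerset, (lwval U₀ q T) ^ 2 * (lwval W q' T) ^ 2 = 0 := by
        refine Finset.sum_eq_zero fun T _ => by rw [hhz]; ring
      have h4 : ∑ T ∈ V'.powerset, (lwval W q' T) ^ 4 = 0 := by
        refine Finset.sum_eq_zero fun T _ => by rw [hhz]; ring
      rw [h2, h4, ← hsplit, hBz]
      have h9nn : (0:ℝ) ≤ 9 ^ δ := by positivity
      have h2nn : (0:ℝ) ≤ (2:ℝ) ^ V'.card := by positivity
      rw [pow_succ]
      nlinarith [mul_nonneg (mul_nonneg h9nn h2nn) (sq_nonneg A)]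
    · -- δ ≥ 1
      obtain ⟨S₀, hS₀⟩ := Finset.nonempty_iff_ne_empty.2 hU1e
      have haS₀ : a ∈ S₀ := (Finset.mem_filter.1 hS₀).2
      have hδ1 : 1 ≤ δ := le_trans (Finset.card_pos.2 ⟨a, haS₀⟩)
        (hUV S₀ (Finset.mem_filter.1 hS₀).1).2
      obtain ⟨d, rfl⟩ : ∃ d, δ = d + 1 := ⟨δ - 1, (Nat.succ_pred_eq_of_pos hδ1).symm⟩
      have hUVW : ∀ S ∈ W, S ⊆ V' ∧ S.card ≤ d := by
        intro S hS
        simp only [hW, hU₁, Finset.mem_image, mem_filter] at hS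
        obtain ⟨S', ⟨hS'U, haS'⟩, rfl⟩ := hS
        constructor
        · intro x hx
          have hx' := Finset.mem_erase.1 hx
          rcases Finset.mem_insert.1 ((hUV S' hS'U).1 hx'.2) with rfl | h
          · exact absurd rfl hx'.1
          · exact h
        · have := Finset.card_erase_of_mem haS'
          have hc := (hUV S' hS'U).2
          omega
      have hH4 : ∑ T ∈ V'.powerset, (lwval W q' T) ^ 4 ≤ 9 ^ d * 2 ^ V'.card * B ^ 2 :=
        ih d W q' hUVW
      -- cross term via Cauchy-Schwarz
      have hC2 : (∑ T ∈ V'.powerset, (lwval U₀ q T) ^ 2 * (lwval W q' T) ^ 2) ^ 2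
          ≤ (∑ T ∈ V'.powerset, (lwval U₀ q T) ^ 4) * (∑ T ∈ V'.powerset, (lwval W q' T) ^ 4) := by
        have := Finset.sum_mul_sq_le_sq_mul_sq V'.powerset
          (fun T => (lwval U₀ q T) ^ 2) (fun T => (lwval W q' T) ^ 2)
        calc (∑ T ∈ V'.powerset, (lwval U₀ q T) ^ 2 * (lwval W q' T) ^ 2) ^ 2
            ≤ (∑ T ∈ V'.powerset, ((lwval U₀ q T) ^ 2) ^ 2) * ∑ T ∈ V'.powerset, ((lwval W q' T) ^ 2) ^ 2 := this
          _ = (∑ T ∈ V'.powerset, (lwval U₀ q T) ^ 4) * (∑ T ∈ V'.powerset, (lwval W q' T) ^ 4) := by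
              congr 1 <;> exact Finset.sum_congr rfl fun T _ => by ring
      have hCnn : 0 ≤ ∑ T ∈ V'.powerset, (lwval U₀ q T) ^ 2 * (lwval W q' T) ^ 2 :=
        Finset.sum_nonneg fun _ _ => mul_nonneg (sq_nonneg _) (sq_nonneg _)
      set K := (3:ℝ) ^ (2*d+1) * 2 ^ V'.card * (A * B) with hK
      have hKnn : 0 ≤ K := by positivity
      have hC : ∑ T ∈ V'.powerset, (lwval U₀ q T) ^ 2 * (lwval W q' T) ^ 2 ≤ K := by
        have hK2 : (∑ T ∈ V'.powerset, (lwval U₀ q T) ^ 2 * (lwval W q' T) ^ 2) ^ 2 ≤ K ^ 2 := by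
          refine le_trans hC2 ?_
          have hGH : (∑ T ∈ V'.powerset, (lwval U₀ q T) ^ 4) * (∑ T ∈ V'.powerset, (lwval W q' T) ^ 4)
              ≤ (9 ^ (d+1) * 2 ^ V'.card * A ^ 2) * (9 ^ d * 2 ^ V'.card * B ^ 2) :=
            mul_le_mul hG4 hH4 hH4nn (by positivity)
          refine le_trans hGH (le_of_eq ?_)
          rw [hK]
          have h9 : (9:ℝ) = 3 ^ 2 := by norm_num
          rw [h9, ← pow_mul, ← pow_mul]
          ring
        calc ∑ T ∈ V'.powerset, (lwval U₀ q T) ^ 2 * (lwval W q' T) ^ 2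
            = Real.sqrt ((∑ T ∈ V'.powerset, (lwval U₀ q T) ^ 2 * (lwval W q' T) ^ 2) ^ 2) :=
              (Real.sqrt_sq hCnn).symm
          _ ≤ Real.sqrt (K ^ 2) := Real.sqrt_le_sqrt hK2
          _ = K := Real.sqrt_sq hKnn
      rw [e1, hcard, ← hsplit]
      have key : 2 * (9 ^ (d+1) * 2 ^ V'.card * A ^ 2) + 12 * K + 2 * (9 ^ d * 2 ^ V'.card * B ^ 2)
          ≤ 9 ^ (d+1) * 2 ^ (V'.card + 1) * (A + B) ^ 2 := by
        rw [hK]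
        have h9d : (0:ℝ) ≤ 9 ^ d := by positivity
        have h2v : (0:ℝ) ≤ (2:ℝ) ^ V'.card := by positivity
        have h3 : (3:ℝ) ^ (2*d+1) = 3 * 9 ^ d := by
          have h9 : (9:ℝ) = 3 ^ 2 := by norm_num
          rw [h9, ← pow_mul, pow_add, pow_one]
          ring
        rw [h3, pow_succ (9:ℝ) d, pow_succ (2:ℝ) V'.card]
        nlinarith [mul_nonneg (mul_nonneg h9d h2v) (mul_nonneg hAnn hBnn),
          mul_nonneg (mul_nonneg h9d h2v) (sq_nonneg B)]
      refine le_trans ?_ key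
      have h12 : (0:ℝ) ≤ 12 := by norm_num
      gcongr

lemma prod_ite_eq_neg_one_pow {n : ℕ} (s : Fin n → Bool) (S : Finset (Fin n)) :
    ∏ i ∈ S, (if s i then (1:ℝ) else -1)
      = (-1 : ℝ) ^ ((S ∩ (univ.filter (fun i => s i = false))).card) := by
  have hset : S ∩ (univ.filter (fun i => s i = false)) = S.filter (fun i => s i = false) := by
    ext i
    simp [Finset.mem_filter, Finset.mem_inter, and_comm]
  rw [hset, ← Finset.prod_const (-1 : ℝ), Finset.prod_filter]
  refine Finset.prod_congr rfl fun i _ => ?_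
  cases h : s i <;> simp [h]

set_option maxHeartbeats 1000000 in
/-- Khintchine-type lower bound: For a multilinear Littlewood polynomial `p`
on `n` variables whose `w = |U|` monomials all have size at most `δ`,
`E|p| ≥ 3^(-δ) √w`, where the expectation is the uniform average over `{-1,1}^n`
(points encoded by `s : Fin n → Bool`). -/
theorem littlewood_khintchine
    (n δ : ℕ) (hn : 0 < n) (hδ : 0 < δ)
    (U : Finset (Finset (Fin n)))
    (hU : ∀ S ∈ U, S.Nonempty ∧ S.card ≤ δ)
    (p : Finset (Fin n) → ℝ) (hsign : ∀ S ∈ U, p S = 1 ∨ p S = -1) :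
    (3:ℝ) ^ (-(δ:ℤ)) * Real.sqrt U.card ≤
      (2:ℝ) ^ (-(n:ℤ)) *
        ∑ s : Fin n → Bool,
          |∑ S ∈ U, p S * ∏ i ∈ S, (if s i then (1:ℝ) else -1)| := by
  classical
  set w : ℝ := (U.card : ℝ) with hw
  have hwnn : 0 ≤ w := Nat.cast_nonneg _
  -- convert the sum over sign vectors to a sum over subsets
  have hbij : Function.Bijective
      (fun s : Fin n → Bool => (univ.filter (fun i => s i = false) : Finset (Fin n))) := by
    rw [Function.bijective_iff_has_inverse]
    refine ⟨fun T => fun i => decide (i ∉ T), ?_, ?_⟩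
    · intro s
      funext i
      cases h : s i <;> simp [h]
    · intro T
      ext i
      simp
  have hpt : ∀ s : Fin n → Bool,
      |∑ S ∈ U, p S * ∏ i ∈ S, (if s i then (1:ℝ) else -1)|
        = |lwval U p (univ.filter (fun i => s i = false))| := by
    intro s
    congr 1
    rw [lwval]
    exact Finset.sum_congr rfl fun S _ => by rw [prod_ite_eq_neg_one_pow]
  have conv : (∑ s : Fin n → Bool, |∑ S ∈ U, p S * ∏ i ∈ S, (if s i then (1:ℝ) else -1)|)
      = ∑ T ∈ (univ : Finset (Fin n)).powerset, |lwval U p T| := by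
    rw [Finset.powerset_univ]
    exact Fintype.sum_bijective _ hbij _ _ hpt
  -- notation for the moment sums
  set S1 := ∑ T ∈ (univ : Finset (Fin n)).powerset, |lwval U p T| with hS1
  set S2 := ∑ T ∈ (univ : Finset (Fin n)).powerset, (lwval U p T) ^ 2 with hS2
  set S3 := ∑ T ∈ (univ : Finset (Fin n)).powerset, |lwval U p T| ^ 3 with hS3
  set S4 := ∑ T ∈ (univ : Finset (Fin n)).powerset, (lwval U p T) ^ 4 with hS4
  have hcardV : (univ : Finset (Fin n)).card = n := by simp
  have hq2 : ∀ S ∈ U, (p S) ^ 2 = 1 := by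
    intro S hS
    rcases hsign S hS with h | h <;> rw [h] <;> norm_num
  -- Parseval
  have hParseval : S2 = 2 ^ n * w := by
    rw [hS2, lwval_parseval (univ : Finset (Fin n)) U p (fun S _ => Finset.subset_univ S), hcardV,
      Finset.sum_congr rfl hq2, Finset.sum_const, nsmul_eq_mul, mul_one, hw]
  -- hypercontractivity
  have hHyper : S4 ≤ 9 ^ δ * 2 ^ n * w ^ 2 := by
    have := lwval_hyper (univ : Finset (Fin n)) δ U p
      (fun S hS => ⟨Finset.subset_univ S, (hU S hS).2⟩)
    rw [hcardV, Finset.sum_congr rfl hq2, Finset.sum_const, nsmul_eq_mul, mul_one] at this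
    rw [hS4, hw]
    exact this
  -- nonnegativity
  have hS1nn : 0 ≤ S1 := Finset.sum_nonneg fun _ _ => abs_nonneg _
  have hS2nn : 0 ≤ S2 := Finset.sum_nonneg fun _ _ => sq_nonneg _
  have hS3nn : 0 ≤ S3 := Finset.sum_nonneg fun _ _ => by positivity
  have hS4nn : 0 ≤ S4 := Finset.sum_nonneg fun _ _ => by positivity
  -- Cauchy-Schwarz twice
  have cs1 : S2 ^ 2 ≤ S1 * S3 := by
    have h := Finset.sum_mul_sq_le_sq_mul_sq (univ : Finset (Fin n)).powerset
      (fun T => Real.sqrt |lwval U p T|) (fun T => |lwval U p T| * Real.sqrt |lwval U p T|)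
    have e1 : ∑ T ∈ (univ : Finset (Fin n)).powerset,
        Real.sqrt |lwval U p T| * (|lwval U p T| * Real.sqrt |lwval U p T|) = S2 := by
      rw [hS2]
      refine Finset.sum_congr rfl fun T _ => ?_
      rw [show Real.sqrt |lwval U p T| * (|lwval U p T| * Real.sqrt |lwval U p T|)
          = (Real.sqrt |lwval U p T|) ^ 2 * |lwval U p T| by ring,
        Real.sq_sqrt (abs_nonneg _), abs_mul_abs_self]
      ring
    have e2 : ∑ T ∈ (univ : Finset (Fin n)).powerset, (Real.sqrt |lwval U p T|) ^ 2 = S1 := by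
      rw [hS1]
      exact Finset.sum_congr rfl fun T _ => Real.sq_sqrt (abs_nonneg _)
    have e3 : ∑ T ∈ (univ : Finset (Fin n)).powerset,
        (|lwval U p T| * Real.sqrt |lwval U p T|) ^ 2 = S3 := by
      rw [hS3]
      refine Finset.sum_congr rfl fun T _ => ?_
      rw [mul_pow, Real.sq_sqrt (abs_nonneg _)]
      ring
    rw [e1, e2, e3] at h
    exact h
  have cs2 : S3 ^ 2 ≤ S2 * S4 := by
    have h := Finset.sum_mul_sq_le_sq_mul_sq (univ : Finset (Fin n)).powerset
      (fun T => |lwval U p T|) (fun T => (lwval U p T) ^ 2)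
    have e1 : ∑ T ∈ (univ : Finset (Fin n)).powerset,
        |lwval U p T| * (lwval U p T) ^ 2 = S3 := by
      rw [hS3]
      refine Finset.sum_congr rfl fun T _ => ?_
      rw [← abs_of_nonneg (sq_nonneg (lwval U p T)), ← abs_mul, ← abs_pow]
      congr 1
      ring
    have e2 : ∑ T ∈ (univ : Finset (Fin n)).powerset, |lwval U p T| ^ 2 = S2 := by
      rw [hS2]
      exact Finset.sum_congr rfl fun T _ => by rw [← abs_pow, abs_of_nonneg (sq_nonneg _)]
    have e3 : ∑ T ∈ (univ : Finset (Fin n)).powerset, ((lwval U p T) ^ 2) ^ 2 = S4 := by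
      rw [hS4]
      exact Finset.sum_congr rfl fun T _ => by ring
    rw [e1, e2, e3] at h
    exact h
  -- case w = 0
  rcases eq_or_lt_of_le hwnn with hw0 | hwpos
  · rw [← hw0, Real.sqrt_zero, mul_zero, conv]
    positivity
  -- main case
  have h2n : (0:ℝ) < 2 ^ n := by positivity
  have h3d : (0:ℝ) < 3 ^ δ := by positivity
  have hS2pos : 0 < S2 := by rw [hParseval]; positivity
  have hkey : S2 ^ 3 ≤ S1 ^ 2 * S4 := by
    have h4 : S2 ^ 4 ≤ S1 ^ 2 * S4 * S2 := by
      calc S2 ^ 4 = (S2 ^ 2) ^ 2 := by ring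
        _ ≤ (S1 * S3) ^ 2 := pow_le_pow_left₀ (sq_nonneg _) cs1 2
        _ = S1 ^ 2 * S3 ^ 2 := by ring
        _ ≤ S1 ^ 2 * (S2 * S4) := mul_le_mul_of_nonneg_left cs2 (sq_nonneg _)
        _ = S1 ^ 2 * S4 * S2 := by ring
    have h4' : S2 ^ 3 * S2 ≤ S1 ^ 2 * S4 * S2 := by
      calc S2 ^ 3 * S2 = S2 ^ 4 := by ring
        _ ≤ S1 ^ 2 * S4 * S2 := h4
    exact le_of_mul_le_mul_right h4' hS2pos
  have h9 : (9:ℝ) ^ δ = (3:ℝ) ^ δ * 3 ^ δ := by rw [← mul_pow]; norm_num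
  have hMpos : (0:ℝ) < 9 ^ δ * 2 ^ n * w ^ 2 :=
    mul_pos (mul_pos (by positivity) h2n) (pow_pos hwpos 2)
  have hX2M : (2 ^ n * Real.sqrt w / 3 ^ δ) ^ 2 * (9 ^ δ * 2 ^ n * w ^ 2) = S2 ^ 3 := by
    rw [hParseval, div_pow, mul_pow, Real.sq_sqrt hwnn, h9]
    field_simp
  have hX2 : (2 ^ n * Real.sqrt w / 3 ^ δ) ^ 2 ≤ S1 ^ 2 := by
    have h1 : (2 ^ n * Real.sqrt w / 3 ^ δ) ^ 2 * (9 ^ δ * 2 ^ n * w ^ 2)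
        ≤ S1 ^ 2 * (9 ^ δ * 2 ^ n * w ^ 2) := by
      rw [hX2M]
      calc S2 ^ 3 ≤ S1 ^ 2 * S4 := hkey
        _ ≤ S1 ^ 2 * (9 ^ δ * 2 ^ n * w ^ 2) := mul_le_mul_of_nonneg_left hHyper (sq_nonneg _)
    exact le_of_mul_le_mul_right h1 hMpos
  have hXnn : (0:ℝ) ≤ 2 ^ n * Real.sqrt w / 3 ^ δ := by positivity
  have hXS1 : 2 ^ n * Real.sqrt w / 3 ^ δ ≤ S1 := by
    calc 2 ^ n * Real.sqrt w / 3 ^ δ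
        = Real.sqrt ((2 ^ n * Real.sqrt w / 3 ^ δ) ^ 2) := (Real.sqrt_sq hXnn).symm
      _ ≤ Real.sqrt (S1 ^ 2) := Real.sqrt_le_sqrt hX2
      _ = S1 := Real.sqrt_sq hS1nn
  rw [conv]
  have hzp2 : (2:ℝ) ^ (-(n:ℤ)) = ((2:ℝ) ^ n)⁻¹ := by rw [zpow_neg, zpow_natCast]
  have hzp3 : (3:ℝ) ^ (-(δ:ℤ)) = ((3:ℝ) ^ δ)⁻¹ := by rw [zpow_neg, zpow_natCast]
  rw [hzp2, hzp3]
  calc ((3:ℝ) ^ δ)⁻¹ * Real.sqrt w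
      = ((2:ℝ) ^ n)⁻¹ * (2 ^ n * Real.sqrt w / 3 ^ δ) := by
        field_simp
      _ ≤ ((2:ℝ) ^ n)⁻¹ * S1 := mul_le_mul_of_nonneg_left hXS1 (by positivity)
end

section
/- Let n and δ be positive integers and let p be a multilinear Littlewood polynomial on n variables whose monomials all have size at most δ, with w ≥ 1 monomials. Then the fraction of points x ∈ {−1,+1}^n at which |p(x)| > (1/2)·√w is at least (9/16) · 9^{−δ}; consequently 2^{−n} · ∑_{x ∈ {−1,+1}^n} |p(x)| ≥ (9/32) · 9^{−δ} · √w. -/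
/-!
Write `p = ∑_{S ∈ U} p_S χ_S` in the Walsh basis `χ_S(x) = ∏_{i ∈ S} x_i`. Orthogonality of the
characters gives `E p² = w`, and the Bonami lemma, proved by splitting off one variable at a time,
`p = g + x_a h`, bounds the fourth moment by `E p⁴ ≤ 9^δ w²`. The Paley–Zygmund inequality for
`p²` at a quarter of its mean then shows that `p² > w / 4` on a set of density at least
`(3/4)² (E p²)² / E p⁴ ≥ (9/16) 9^{-δ}`, and on that set `|p| > √w / 2`.
-/

open Finset

theorem paley_zygmund {α : Type*} (s : Finset α) (Z : α → ℝ) {t : ℝ} (ht : 0 ≤ t)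
    (hts : #s * t ≤ ∑ x ∈ s, Z x) :
    (∑ x ∈ s, Z x - #s * t) ^ 2 ≤ #{x ∈ s | t < Z x} * ∑ x ∈ s, Z x ^ 2 := by
  have hlow : ∑ x ∈ s with ¬t < Z x, Z x ≤ #s * t :=
    calc ∑ x ∈ s with ¬t < Z x, Z x ≤ #{x ∈ s | ¬t < Z x} * t :=
          (sum_le_card_nsmul _ _ _ fun x hx => not_lt.1 (mem_filter.1 hx).2).trans_eq
            (nsmul_eq_mul _ _)
      _ ≤ #s * t := mul_le_mul_of_nonneg_right (by exact_mod_cast card_filter_le _ _) ht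
  have hhigh : ∑ x ∈ s, Z x - #s * t ≤ ∑ x ∈ s with t < Z x, Z x := by
    linarith [sum_filter_add_sum_filter_not s (fun x => t < Z x) Z]
  calc (∑ x ∈ s, Z x - #s * t) ^ 2 ≤ (∑ x ∈ s with t < Z x, Z x) ^ 2 :=
        pow_le_pow_left₀ (sub_nonneg.2 hts) hhigh 2
    _ ≤ #{x ∈ s | t < Z x} * ∑ x ∈ s with t < Z x, Z x ^ 2 := sq_sum_le_card_mul_sum_sq
    _ ≤ #{x ∈ s | t < Z x} * ∑ x ∈ s, Z x ^ 2 := by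
        gcongr
        exact filter_subset _ _

theorem card_filter_lt_mul_le_sum {α : Type*} (s : Finset α) {f : α → ℝ}
    (hf : ∀ x ∈ s, 0 ≤ f x) (t : ℝ) : #{x ∈ s | t < f x} * t ≤ ∑ x ∈ s, f x :=
  calc #{x ∈ s | t < f x} * t = ∑ x ∈ s with t < f x, t := by rw [sum_const, nsmul_eq_mul]
    _ ≤ ∑ x ∈ s with t < f x, f x := sum_le_sum fun x hx => (mem_filter.1 hx).2.le
    _ ≤ ∑ x ∈ s, f x := sum_le_sum_of_subset_of_nonneg (filter_subset _ _) fun x hx _ => hf x hx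

-- The arithmetic of the Bonami induction step, with `X = ∑ g²h²` controlled by Cauchy–Schwarz.
theorem add_six_mul_add_le {G H X T a b : ℝ} (hT : 0 ≤ T) (ha : 0 ≤ a) (hb : 0 ≤ b)
    (hG : G ≤ T * a ^ 2) (hH : 9 * H ≤ T * b ^ 2) (hH₀ : 0 ≤ H) (hX : X ^ 2 ≤ G * H) :
    G + 6 * X + H ≤ T * (a + b) ^ 2 := by
  have hX3 : 3 * X ≤ T * a * b := by
    refine (le_abs_self _).trans (abs_le_of_sq_le_sq ?_ (by positivity))
    calc (3 * X) ^ 2 ≤ G * (9 * H) := by linarith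
      _ ≤ T * a ^ 2 * (T * b ^ 2) := mul_le_mul hG hH (by positivity) (by positivity)
      _ = (T * a * b) ^ 2 := by ring
  nlinarith [show 0 ≤ T * b ^ 2 by positivity]

namespace BooleanCube

variable {ι : Type*}

noncomputable def sign (b : Bool) : ℝ := if b then 1 else -1

lemma sign_eq_one_or_neg_one (b : Bool) : sign b = 1 ∨ sign b = -1 := by
  cases b <;> simp [sign]

lemma sign_not (b : Bool) : sign (!b) = -sign b := by cases b <;> simp [sign]

noncomputable def walsh (S : Finset ι) (x : ι → Bool) : ℝ := ∏ i ∈ S, sign (x i)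

noncomputable def walshPoly (F : Finset (Finset ι)) (c : Finset ι → ℝ) (x : ι → Bool) : ℝ :=
  ∑ S ∈ F, c S * walsh S x

lemma walsh_sq (S : Finset ι) (x : ι → Bool) : walsh S x ^ 2 = 1 := by
  simp only [walsh, ← prod_pow, sq_eq_one_iff.2 (sign_eq_one_or_neg_one _), prod_const_one]

variable [DecidableEq ι]

def flip (a : ι) (x : ι → Bool) : ι → Bool := Function.update x a (!x a)

lemma flip_involutive (a : ι) : Function.Involutive (flip a) := by
  intro x
  ext i
  by_cases h : i = a
  · subst h; simp [flip]
  · simp [flip, h]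

lemma sign_flip_self (a : ι) (x : ι → Bool) : sign (flip a x a) = -sign (x a) := by
  rw [flip, Function.update_self, sign_not]

lemma walsh_insert {S : Finset ι} {a : ι} (ha : a ∉ S) (x : ι → Bool) :
    walsh (insert a S) x = sign (x a) * walsh S x :=
  prod_insert ha

lemma walsh_flip_of_notMem {S : Finset ι} {a : ι} (ha : a ∉ S) (x : ι → Bool) :
    walsh S (flip a x) = walsh S x :=
  prod_congr rfl fun i hi => by rw [flip, Function.update_of_ne (ne_of_mem_of_not_mem hi ha)]

lemma walsh_flip_of_mem {S : Finset ι} {a : ι} (ha : a ∈ S) (x : ι → Bool) :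
    walsh S (flip a x) = -walsh S x := by
  rw [← insert_erase ha, walsh_insert (notMem_erase a S), walsh_insert (notMem_erase a S),
    walsh_flip_of_notMem (notMem_erase a S), sign_flip_self, neg_mul]

lemma walshPoly_flip {F : Finset (Finset ι)} {a : ι} (ha : ∀ S ∈ F, a ∉ S) (c : Finset ι → ℝ)
    (x : ι → Bool) : walshPoly F c (flip a x) = walshPoly F c x :=
  sum_congr rfl fun S hS => by rw [walsh_flip_of_notMem (ha S hS)]

lemma walshPoly_powerset_insert {A : Finset ι} {a : ι} (ha : a ∉ A) (c : Finset ι → ℝ)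
    (x : ι → Bool) :
    walshPoly (insert a A).powerset c x =
      walshPoly A.powerset c x + sign (x a) * walshPoly A.powerset (fun S => c (insert a S)) x := by
  rw [walshPoly, sum_powerset_insert ha, walshPoly, walshPoly, mul_sum]
  refine congrArg _ (sum_congr rfl fun S hS => ?_)
  rw [walsh_insert fun h => ha (mem_powerset.1 hS h)]
  ring

variable [Fintype ι]

lemma sum_eq_zero_of_flip_eq_neg (a : ι) {F : (ι → Bool) → ℝ} (hF : ∀ x, F (flip a x) = -F x) :
    ∑ x, F x = 0 := by
  have h := Equiv.sum_comp (flip_involutive a).toPerm F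
  simp only [Function.Involutive.coe_toPerm, hF, sum_neg_distrib] at h
  linarith

lemma sum_walsh_mul_walsh (S T : Finset ι) :
    ∑ x : ι → Bool, walsh S x * walsh T x = if S = T then 2 ^ Fintype.card ι else 0 := by
  split_ifs with h
  · simp [h, ← sq, walsh_sq]
  · obtain ⟨a, ha⟩ := symmDiff_nonempty.2 h
    refine sum_eq_zero_of_flip_eq_neg a fun x => ?_
    rcases mem_symmDiff.1 ha with ⟨haS, haT⟩ | ⟨haT, haS⟩
    · rw [walsh_flip_of_mem haS, walsh_flip_of_notMem haT, neg_mul]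
    · rw [walsh_flip_of_mem haT, walsh_flip_of_notMem haS, mul_neg]

theorem sum_walshPoly_sq (F : Finset (Finset ι)) (c : Finset ι → ℝ) :
    ∑ x, walshPoly F c x ^ 2 = 2 ^ Fintype.card ι * ∑ S ∈ F, c S ^ 2 := by
  calc ∑ x, walshPoly F c x ^ 2
      = ∑ S ∈ F, ∑ T ∈ F, c S * c T * ∑ x : ι → Bool, walsh S x * walsh T x := by
        simp_rw [walshPoly, sq, sum_mul_sum, mul_sum]
        rw [sum_comm]
        refine sum_congr rfl fun S _ => ?_
        rw [sum_comm]
        exact sum_congr rfl fun T _ => sum_congr rfl fun x _ => by ring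
    _ = 2 ^ Fintype.card ι * ∑ S ∈ F, c S ^ 2 := by
        simp [sum_walsh_mul_walsh, mul_sum, sq, mul_comm]

lemma sum_sign_mul_pow_four_eq (a : ι) {g h : (ι → Bool) → ℝ}
    (hg : ∀ x, g (flip a x) = g x) (hh : ∀ x, h (flip a x) = h x) :
    ∑ x, (g x + sign (x a) * h x) ^ 4 =
      ∑ x, g x ^ 4 + 6 * ∑ x, g x ^ 2 * h x ^ 2 + ∑ x, h x ^ 4 := by
  have hodd : ∑ x, sign (x a) * (4 * g x ^ 3 * h x + 4 * g x * h x ^ 3) = 0 :=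
    sum_eq_zero_of_flip_eq_neg a fun x => by rw [hg, hh, sign_flip_self, neg_mul]
  have hexpand : ∀ x, (g x + sign (x a) * h x) ^ 4 =
      g x ^ 4 + 6 * (g x ^ 2 * h x ^ 2) + h x ^ 4 +
        sign (x a) * (4 * g x ^ 3 * h x + 4 * g x * h x ^ 3) := fun x => by
    rcases sign_eq_one_or_neg_one (x a) with h | h <;> rw [h] <;> ring
  simp only [hexpand, sum_add_distrib, hodd, add_zero, mul_sum]

theorem sum_walshPoly_powerset_pow_four_le (A : Finset ι) (δ : ℕ) (c : Finset ι → ℝ)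
    (hc : ∀ S ⊆ A, c S ≠ 0 → S.card ≤ δ) :
    ∑ x, walshPoly A.powerset c x ^ 4 ≤
      9 ^ δ * 2 ^ Fintype.card ι * (∑ S ∈ A.powerset, c S ^ 2) ^ 2 := by
  induction A using Finset.induction generalizing δ c with
  | empty =>
    have hnine : (1 : ℝ) ≤ 9 ^ δ := one_le_pow₀ (by norm_num)
    simp only [walshPoly, powerset_empty, sum_singleton, walsh, prod_empty, mul_one, sum_const,
      card_univ, Fintype.card_fun, Fintype.card_bool, nsmul_eq_mul, Nat.cast_pow, Nat.cast_ofNat]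
    nlinarith [show 0 ≤ 2 ^ Fintype.card ι * c ∅ ^ 4 by positivity]
  | @insert a A ha ih =>
    have haS : ∀ S ∈ A.powerset, a ∉ S := fun S hS h => ha (mem_powerset.1 hS h)
    set g := walshPoly A.powerset c
    set h := walshPoly A.powerset fun S => c (insert a S)
    have hdeg : ∀ S ⊆ A, c (insert a S) ≠ 0 → S.card + 1 ≤ δ := fun S hS hne => by
      rw [← card_insert_of_notMem fun h => ha (hS h)]
      exact hc _ (insert_subset_insert a hS) hne
    have hg : ∑ x, g x ^ 4 ≤ 9 ^ δ * 2 ^ Fintype.card ι * (∑ S ∈ A.powerset, c S ^ 2) ^ 2 :=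
      ih δ c fun S hS => hc S (hS.trans (subset_insert a A))
    -- `h` has degree at most `δ - 1`, so it vanishes when `δ = 0`.
    have hh : 9 * ∑ x, h x ^ 4 ≤ 9 ^ δ * 2 ^ Fintype.card ι *
        (∑ S ∈ A.powerset, c (insert a S) ^ 2) ^ 2 := by
      cases δ with
      | zero =>
        have hc0 : ∀ S ⊆ A, c (insert a S) = 0 := fun S hS =>
          by_contra fun hne => absurd (hdeg S hS hne) (by omega)
        have h0 : ∀ x, h x = 0 := fun x => sum_eq_zero fun S hS => by
          simp only [hc0 S (mem_powerset.1 hS), zero_mul]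
        simp only [h0, zero_pow four_ne_zero, sum_const_zero, mul_zero]
        positivity
      | succ m =>
        rw [pow_succ, mul_comm _ (9 : ℝ), mul_assoc 9, mul_assoc 9]
        exact mul_le_mul_of_nonneg_left (ih m _ fun S hS hne => by linarith [hdeg S hS hne])
          (by norm_num)
    have hgh : (∑ x, g x ^ 2 * h x ^ 2) ^ 2 ≤ (∑ x, g x ^ 4) * ∑ x, h x ^ 4 := by
      refine (sum_mul_sq_le_sq_mul_sq univ (fun x => g x ^ 2) (fun x => h x ^ 2)).trans_eq ?_
      simp only [← pow_mul]
    simp only [walshPoly_powerset_insert ha, sum_powerset_insert ha,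
      sum_sign_mul_pow_four_eq a (walshPoly_flip haS c) (walshPoly_flip haS _)]
    exact add_six_mul_add_le (by positivity) (sum_nonneg fun _ _ => sq_nonneg _)
      (sum_nonneg fun _ _ => sq_nonneg _) hg hh (sum_nonneg fun _ _ => by positivity) hgh

theorem sum_walshPoly_pow_four_le (F : Finset (Finset ι)) {δ : ℕ} (hF : ∀ S ∈ F, S.card ≤ δ)
    (c : Finset ι → ℝ) :
    ∑ x, walshPoly F c x ^ 4 ≤ 9 ^ δ * 2 ^ Fintype.card ι * (∑ S ∈ F, c S ^ 2) ^ 2 := by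
  have h := sum_walshPoly_powerset_pow_four_le univ δ (fun S => if S ∈ F then c S else 0)
    fun S _ hS => hF S (by_contra fun h => hS (if_neg h))
  simpa [walshPoly, ite_mul, apply_ite (· ^ 2), sum_ite_mem, powerset_univ] using h

theorem anticoncentration (F : Finset (Finset ι)) {δ : ℕ} (hF : ∀ S ∈ F, S.card ≤ δ)
    (c : Finset ι → ℝ) (hc : 0 < ∑ S ∈ F, c S ^ 2) :
    9 / 16 * (9 : ℝ) ^ (-(δ : ℤ)) ≤
      (#{x | 1 / 2 * √(∑ S ∈ F, c S ^ 2) < |walshPoly F c x|} : ℝ) / 2 ^ Fintype.card ι := by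
  set w := ∑ S ∈ F, c S ^ 2
  set N := Fintype.card ι
  have hcube : (#(univ : Finset (ι → Bool)) : ℝ) = 2 ^ N := by simp [N]
  have hB : #{x | 1 / 2 * √w < |walshPoly F c x|} = #{x | w / 4 < walshPoly F c x ^ 2} := by
    refine congrArg card (filter_congr fun x _ => ?_)
    rw [← sq_lt_sq₀ (by positivity) (abs_nonneg _), sq_abs, mul_pow, Real.sq_sqrt hc.le]
    ring_nf
  have hpz := paley_zygmund univ (fun x => walshPoly F c x ^ 2) (t := w / 4) (by positivity)
    (by rw [hcube, sum_walshPoly_sq]; linarith [mul_pos (pow_pos two_pos N) hc])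
  rw [hcube, sum_walshPoly_sq, ← hB] at hpz
  set β : ℝ := (#{x | 1 / 2 * √w < |walshPoly F c x|} : ℝ)
  have h4 : ∑ x, (walshPoly F c x ^ 2) ^ 2 ≤ 9 ^ δ * 2 ^ N * w ^ 2 := by
    simpa only [← pow_mul] using sum_walshPoly_pow_four_le F hF c
  have hβ : 9 / 16 * 2 ^ N * (2 ^ N * w ^ 2) ≤ β * 9 ^ δ * (2 ^ N * w ^ 2) :=
    calc 9 / 16 * 2 ^ N * (2 ^ N * w ^ 2) = (2 ^ N * w - 2 ^ N * (w / 4)) ^ 2 := by ring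
      _ ≤ β * ∑ x, (walshPoly F c x ^ 2) ^ 2 := hpz
      _ ≤ β * (9 ^ δ * 2 ^ N * w ^ 2) := by gcongr
      _ = β * 9 ^ δ * (2 ^ N * w ^ 2) := by ring
  rw [zpow_neg, zpow_natCast, le_div_iff₀ (by positivity), ← div_eq_mul_inv, div_mul_eq_mul_div,
    div_le_iff₀ (by positivity)]
  exact le_of_mul_le_mul_right hβ (by positivity)

end BooleanCube

open BooleanCube

theorem littlewood_paley_zygmund_general
    (n δ : ℕ)
    (U : Finset (Finset (Fin n)))
    (hU : ∀ S ∈ U, S.Nonempty ∧ S.card ≤ δ) (hw : 1 ≤ U.card)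
    (p : Finset (Fin n) → ℝ) (hsign : ∀ S ∈ U, p S = 1 ∨ p S = -1) :
    (9/16 : ℝ) * (9:ℝ) ^ (-(δ:ℤ)) ≤
        ((Finset.univ.filter (fun s : Fin n → Bool =>
            (1/2 : ℝ) * Real.sqrt U.card <
              |∑ S ∈ U, p S * ∏ i ∈ S, (if s i then (1:ℝ) else -1)|)).card : ℝ) /
          2 ^ n ∧
      (9/32 : ℝ) * (9:ℝ) ^ (-(δ:ℤ)) * Real.sqrt U.card ≤
        (2:ℝ) ^ (-(n:ℤ)) *
          ∑ s : Fin n → Bool,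
            |∑ S ∈ U, p S * ∏ i ∈ S, (if s i then (1:ℝ) else -1)| := by
  change _ ≤ (#{x | _ < |walshPoly U p x|} : ℝ) / 2 ^ n ∧ _ ≤ _ * ∑ x, |walshPoly U p x|
  have hp2 : ∑ S ∈ U, p S ^ 2 = U.card := by
    rw [sum_congr rfl fun S hS => sq_eq_one_iff.2 (hsign S hS), sum_const, nsmul_one]
  have hfrac := anticoncentration U (fun S hS => (hU S hS).2) p (by rw [hp2]; exact_mod_cast hw)
  rw [hp2, Fintype.card_fin] at hfrac
  refine ⟨hfrac, ?_⟩
  have hmarkov := card_filter_lt_mul_le_sum univ (fun x _ => abs_nonneg (walshPoly U p x))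
    (1 / 2 * √U.card)
  calc 9 / 32 * (9 : ℝ) ^ (-(δ : ℤ)) * √U.card
      = 9 / 16 * (9 : ℝ) ^ (-(δ : ℤ)) * (1 / 2 * √U.card) := by ring
    _ ≤ (#{x | 1 / 2 * √U.card < |walshPoly U p x|} : ℝ) / 2 ^ n * (1 / 2 * √U.card) := by
      gcongr
    _ ≤ 2 ^ (-(n : ℤ)) * ∑ x, |walshPoly U p x| := by
      rw [zpow_neg, zpow_natCast, div_eq_inv_mul, mul_assoc]
      gcongr

/-- Paley–Zygmund anti-concentration: For a multilinear Littlewood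
polynomial `p` on `n` variables whose `w = |U| ≥ 1` monomials all have size at most `δ`,
the fraction of points of `{-1,1}^n` where `|p| > (1/2)√w` is at least `(9/16)·9^(-δ)`;
consequently `E|p| ≥ (9/32)·9^(-δ)·√w`. -/
theorem littlewood_paley_zygmund
    (n δ : ℕ) (hn : 0 < n) (hδ : 0 < δ)
    (U : Finset (Finset (Fin n)))
    (hU : ∀ S ∈ U, S.Nonempty ∧ S.card ≤ δ) (hw : 1 ≤ U.card)
    (p : Finset (Fin n) → ℝ) (hsign : ∀ S ∈ U, p S = 1 ∨ p S = -1) :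
    (9/16 : ℝ) * (9:ℝ) ^ (-(δ:ℤ)) ≤
        ((Finset.univ.filter (fun s : Fin n → Bool =>
            (1/2 : ℝ) * Real.sqrt U.card <
              |∑ S ∈ U, p S * ∏ i ∈ S, (if s i then (1:ℝ) else -1)|)).card : ℝ) /
          2 ^ n ∧
      (9/32 : ℝ) * (9:ℝ) ^ (-(δ:ℤ)) * Real.sqrt U.card ≤
        (2:ℝ) ^ (-(n:ℤ)) *
          ∑ s : Fin n → Bool,
            |∑ S ∈ U, p S * ∏ i ∈ S, (if s i then (1:ℝ) else -1)| :=
  littlewood_paley_zygmund_general n δ U hU hw p hsign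
end

section
/- Let δ be a positive integer and consider the polynomial p in 2δ variables x_1,…,x_δ, y_1,…,y_δ given by p(x,y) = ∏_{i=1}^{δ}(1+x_i) − ∏_{i=1}^{δ}(1+y_i). Then the mean of |p| over all (x,y) ∈ {−1,+1}^{2δ} equals 2 − 2^{1−δ}; in particular, since p is a constant-free multilinear Littlewood polynomial with w = 2^{δ+1} − 2 monomials, 2^{−2δ} ∑_{(x,y)∈{−1,+1}^{2δ}} |p(x,y)| ≤ 2^{(1−δ)/2} · √w. -/
lemma kce_prod (δ : ℕ) (s : Fin δ → Bool) :
    (∏ i : Fin δ, (1 + if s i then (1:ℝ) else -1)) =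
      if (∀ i, s i = true) then (2:ℝ)^δ else 0 := by
  by_cases h : ∀ i, s i = true
  · simp [h, Finset.prod_const]
    norm_num
  · push_neg at h
    obtain ⟨i, hi⟩ := h
    rw [if_neg]
    · exact Finset.prod_eq_zero (Finset.mem_univ i) (by simp [hi])
    · push_neg; exact ⟨i, hi⟩

lemma kce_sum_ite (δ : ℕ) (a b : ℝ) :
    (∑ s : Fin δ → Bool, if (∀ i, s i = true) then a else b) =
      a + ((2:ℝ)^δ - 1) * b := by
  have h1 : (∑ s : Fin δ → Bool, if (∀ i, s i = true) then a - b else 0) = a - b := by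
    have : ∀ s : Fin δ → Bool, (if (∀ i, s i = true) then a - b else (0:ℝ)) =
        if s = (fun _ => true) then a - b else 0 := by
      intro s
      congr 1
      simp [funext_iff, eq_iff_iff]
    rw [Finset.sum_congr rfl (fun s _ => this s)]
    simp
  have h2 : ∀ s : Fin δ → Bool, (if (∀ i, s i = true) then a else b) =
      b + (if (∀ i, s i = true) then a - b else 0) := by
    intro s; by_cases h : ∀ i, s i = true <;> simp [h]
  rw [Finset.sum_congr rfl (fun s _ => h2 s), Finset.sum_add_distrib, h1]
  simp [Finset.card_univ]
  ring

lemma kce_sum (δ : ℕ) :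
    (∑ s : Fin δ → Bool, ∑ t : Fin δ → Bool,
          |(∏ i : Fin δ, (1 + if s i then (1:ℝ) else -1)) -
            ∏ i : Fin δ, (1 + if t i then (1:ℝ) else -1)|) =
      2 * ((2:ℝ)^δ - 1) * (2:ℝ)^δ := by
  have hN : (0:ℝ) ≤ (2:ℝ)^δ := by positivity
  have inner : ∀ s : Fin δ → Bool,
      (∑ t : Fin δ → Bool,
          |(∏ i : Fin δ, (1 + if s i then (1:ℝ) else -1)) -
            ∏ i : Fin δ, (1 + if t i then (1:ℝ) else -1)|) =
      if (∀ i, s i = true) then ((2:ℝ)^δ - 1) * (2:ℝ)^δ else (2:ℝ)^δ := by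
    intro s
    by_cases hs : ∀ i, s i = true
    · rw [if_pos hs]
      have : ∀ t : Fin δ → Bool,
          |(∏ i : Fin δ, (1 + if s i then (1:ℝ) else -1)) -
            ∏ i : Fin δ, (1 + if t i then (1:ℝ) else -1)| =
          if (∀ i, t i = true) then 0 else (2:ℝ)^δ := by
        intro t
        rw [kce_prod, kce_prod, if_pos hs]
        by_cases ht : ∀ i, t i = true <;> simp [ht, abs_of_nonneg hN]
      rw [Finset.sum_congr rfl (fun t _ => this t), kce_sum_ite]
      ring
    · rw [if_neg hs]
      have : ∀ t : Fin δ → Bool,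
          |(∏ i : Fin δ, (1 + if s i then (1:ℝ) else -1)) -
            ∏ i : Fin δ, (1 + if t i then (1:ℝ) else -1)| =
          if (∀ i, t i = true) then (2:ℝ)^δ else 0 := by
        intro t
        rw [kce_prod, kce_prod, if_neg hs]
        by_cases ht : ∀ i, t i = true <;> simp [ht, abs_of_nonneg hN]
      rw [Finset.sum_congr rfl (fun t _ => this t), kce_sum_ite]
      ring
  rw [Finset.sum_congr rfl (fun s _ => inner s), kce_sum_ite]
  ring

/-- Khintchine converse example: For `p(x,y) = ∏(1+x_i) − ∏(1+y_i)` on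
`{-1,1}^(2δ)` (points encoded by `s t : Fin δ → Bool`), the mean of `|p|` equals
`2 − 2^(1−δ)`, and in particular is at most `2^((1−δ)/2) √w` with `w = 2^(δ+1) − 2`. -/
theorem khintchine_converse_example (δ : ℕ) (hδ : 0 < δ) :
    (2:ℝ) ^ (-(2 * δ : ℤ)) *
        ∑ s : Fin δ → Bool, ∑ t : Fin δ → Bool,
          |(∏ i : Fin δ, (1 + if s i then (1:ℝ) else -1)) -
            ∏ i : Fin δ, (1 + if t i then (1:ℝ) else -1)| =
      2 - (2:ℝ) ^ ((1:ℤ) - δ) ∧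
    (2:ℝ) ^ (-(2 * δ : ℤ)) *
        ∑ s : Fin δ → Bool, ∑ t : Fin δ → Bool,
          |(∏ i : Fin δ, (1 + if s i then (1:ℝ) else -1)) -
            ∏ i : Fin δ, (1 + if t i then (1:ℝ) else -1)| ≤
      (2:ℝ) ^ (((1:ℝ) - δ) / 2) * Real.sqrt ((2:ℝ) ^ (δ + 1) - 2) := by
  rw [kce_sum]
  set N : ℝ := (2:ℝ)^δ with hNdef
  have hN2 : (2:ℝ) ≤ N := by
    calc (2:ℝ) = 2^1 := (pow_one 2).symm
    _ ≤ 2^δ := pow_le_pow_right₀ (by norm_num) hδ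
  have hN0 : N ≠ 0 := by linarith
  have e1 : (2:ℝ)^(-(2*δ:ℤ)) = N⁻¹ * N⁻¹ := by
    rw [show -(2*(δ:ℤ)) = (-(δ:ℤ)) + (-(δ:ℤ)) by ring, zpow_add₀ (by norm_num : (2:ℝ) ≠ 0),
      zpow_neg, zpow_natCast]
  have e2 : (2:ℝ)^((1:ℤ)-δ) = 2 * N⁻¹ := by
    rw [zpow_sub₀ (by norm_num : (2:ℝ) ≠ 0), zpow_one, zpow_natCast, div_eq_mul_inv]
  have eq1 : (2:ℝ)^(-(2*δ:ℤ)) * (2 * (N - 1) * N) = 2 - (2:ℝ)^((1:ℤ)-δ) := by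
    rw [e1, e2]; field_simp
  refine ⟨eq1, ?_⟩
  rw [eq1, e2]
  have e3 : (2:ℝ)^(((1:ℝ)-δ)/2) = Real.sqrt ((2:ℝ)^((1:ℝ)-(δ:ℝ))) := by
    rw [Real.sqrt_eq_rpow, ← Real.rpow_mul (by norm_num : (0:ℝ) ≤ 2)]
    congr 1; ring
  have e4 : (2:ℝ)^((1:ℝ)-(δ:ℝ)) = 2 * N⁻¹ := by
    rw [Real.rpow_sub (by norm_num : (0:ℝ) < 2), Real.rpow_one, Real.rpow_natCast,
      div_eq_mul_inv]
  have e5 : ((2:ℝ)^(δ+1) - 2) = 2*N - 2 := by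
    rw [pow_succ]; ring
  have hinv : N⁻¹ * N = 1 := inv_mul_cancel₀ hN0
  have hrhs : (2:ℝ)^(((1:ℝ)-δ)/2) * Real.sqrt ((2:ℝ)^(δ+1) - 2) =
      Real.sqrt ((2 * N⁻¹) * (2*N - 2)) := by
    rw [e3, e4, e5, ← Real.sqrt_mul (by positivity)]
  rw [hrhs]
  have hNinvpos : (0:ℝ) < N⁻¹ := by positivity
  rw [Real.le_sqrt (by nlinarith)]
  · nlinarith [sq_nonneg (N⁻¹ - 1), sq_nonneg N⁻¹]
  · nlinarith
end

section
/- Let δ be a positive integer and consider the polynomial p in 2δ variables given by p(x,y) = ∏_{i=1}^{δ}(1+x_i) − ∏_{i=1}^{δ}(1+y_i). Then the fraction of points (x,y) ∈ {−1,+1}^{2δ} at which p(x,y) = 0 is exactly 1 − 2·2^{−δ}(1 − 2^{−δ}); in particular this fraction is greater than 1 − 2^{1−δ}. -/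
lemma prod_one_add_sign {δ : ℕ} (f : Fin δ → Bool) :
    (∏ i : Fin δ, (1 + if f i then (1:ℝ) else -1)) =
      if (∀ i, f i = true) then (2:ℝ) ^ δ else 0 := by
  by_cases h : ∀ i, f i = true
  · rw [if_pos h]
    have h2 : ∀ i ∈ Finset.univ, (1 + if f i then (1:ℝ) else -1) = 2 :=
      fun i _ => by rw [h i]; norm_num
    rw [Finset.prod_congr rfl h2, Finset.prod_const]
    simp
  · rw [if_neg h]
    push_neg at h
    obtain ⟨i, hi⟩ := h
    apply Finset.prod_eq_zero (Finset.mem_univ i)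
    simp [hi]

lemma filter_all_true_card (δ : ℕ) :
    (Finset.univ.filter (fun s : Fin δ → Bool => ∀ i, s i = true)).card = 1 := by
  have : (Finset.univ.filter (fun s : Fin δ → Bool => ∀ i, s i = true)) =
      {fun _ => true} := by
    ext s
    simp [funext_iff]
  rw [this]; simp

/-- anti-concentration failure: For `p(x,y) = ∏(1+x_i) − ∏(1+y_i)` on
`{-1,1}^(2δ)`, the fraction of points where `p = 0` is exactly
`1 − 2·2^(−δ)·(1 − 2^(−δ))`, and in particular is greater than `1 − 2^(1−δ)`. -/
theorem anticoncentration_failure_example (δ : ℕ) (hδ : 0 < δ) :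
    ((Finset.univ.filter (fun st : (Fin δ → Bool) × (Fin δ → Bool) =>
          (∏ i : Fin δ, (1 + if st.1 i then (1:ℝ) else -1)) -
              (∏ i : Fin δ, (1 + if st.2 i then (1:ℝ) else -1)) = 0)).card : ℝ) /
        2 ^ (2 * δ) =
      1 - 2 * (2:ℝ) ^ (-(δ:ℤ)) * (1 - (2:ℝ) ^ (-(δ:ℤ))) ∧
    1 - (2:ℝ) ^ ((1:ℤ) - δ) <
      ((Finset.univ.filter (fun st : (Fin δ → Bool) × (Fin δ → Bool) =>
          (∏ i : Fin δ, (1 + if st.1 i then (1:ℝ) else -1)) -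
              (∏ i : Fin δ, (1 + if st.2 i then (1:ℝ) else -1)) = 0)).card : ℝ) /
        2 ^ (2 * δ) := by
  set P : (Fin δ → Bool) → Prop := fun s => ∀ i, s i = true with hP
  have hpow : ((2:ℝ) ^ δ) ≠ 0 := by positivity
  -- rewrite the filter
  have hfilter : (Finset.univ.filter (fun st : (Fin δ → Bool) × (Fin δ → Bool) =>
          (∏ i : Fin δ, (1 + if st.1 i then (1:ℝ) else -1)) -
              (∏ i : Fin δ, (1 + if st.2 i then (1:ℝ) else -1)) = 0)) =
      (Finset.univ.filter (fun st : (Fin δ → Bool) × (Fin δ → Bool) =>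
          P st.1 ↔ P st.2)) := by
    apply Finset.filter_congr
    intro st _
    rw [prod_one_add_sign st.1, prod_one_add_sign st.2]
    by_cases h1 : (∀ i, st.1 i = true) <;> by_cases h2 : (∀ i, st.2 i = true) <;>
      simp [hP, h1, h2, sub_eq_zero, hpow]
  rw [hfilter]
  -- compute the card
  set A : Finset (Fin δ → Bool) := Finset.univ.filter (fun s => P s) with hA
  set B : Finset (Fin δ → Bool) := Finset.univ.filter (fun s => ¬ P s) with hB
  have hsplit : (Finset.univ.filter (fun st : (Fin δ → Bool) × (Fin δ → Bool) =>
          P st.1 ↔ P st.2)) = (A ×ˢ A) ∪ (B ×ˢ B) := by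
    ext st
    simp only [Finset.mem_filter, Finset.mem_univ, true_and, Finset.mem_union,
      Finset.mem_product, hA, hB]
    by_cases h1 : P st.1 <;> by_cases h2 : P st.2 <;> tauto
  have hdisj : Disjoint (A ×ˢ A) (B ×ˢ B) := by
    rw [Finset.disjoint_left]
    rintro st hst hst'
    simp only [Finset.mem_product, Finset.mem_filter, hA, hB] at hst hst'
    exact hst'.1.2 hst.1.2
  have hAcard : A.card = 1 := filter_all_true_card δ
  have hBcard : B.card = 2 ^ δ - 1 := by
    have := Finset.card_filter_add_card_filter_not (s := Finset.univ)
      (p := fun s : Fin δ → Bool => P s)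
    rw [← hA, ← hB] at this
    have huniv : (Finset.univ : Finset (Fin δ → Bool)).card = 2 ^ δ := by
      simp [Finset.card_univ]
    omega
  have hcard : (Finset.univ.filter (fun st : (Fin δ → Bool) × (Fin δ → Bool) =>
          P st.1 ↔ P st.2)).card = 1 + (2 ^ δ - 1) * (2 ^ δ - 1) := by
    rw [hsplit, Finset.card_union_of_disjoint hdisj, Finset.card_product,
      Finset.card_product, hAcard, hBcard]
  rw [hcard]
  have h1 : (1:ℕ) ≤ 2 ^ δ := Nat.one_le_two_pow
  have hcast : ((1 + (2 ^ δ - 1) * (2 ^ δ - 1) : ℕ) : ℝ) =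
      1 + ((2:ℝ) ^ δ - 1) * ((2:ℝ) ^ δ - 1) := by
    push_cast [Nat.cast_sub h1]
    ring
  rw [hcast]
  have hzpow : (2:ℝ) ^ (-(δ:ℤ)) = ((2:ℝ) ^ δ)⁻¹ := by
    rw [zpow_neg, zpow_natCast]
  have hzpow2 : (2:ℝ) ^ ((1:ℤ) - δ) = 2 * ((2:ℝ) ^ δ)⁻¹ := by
    rw [sub_eq_add_neg, zpow_add₀ (by norm_num : (2:ℝ) ≠ 0), zpow_neg, zpow_natCast]
    norm_num
  have hsq : (2:ℝ) ^ (2 * δ) = (2:ℝ) ^ δ * (2:ℝ) ^ δ := by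
    rw [two_mul, pow_add]
  constructor
  · rw [hzpow, hsq]
    field_simp
    ring
  · rw [hzpow2, hsq]
    have hpos : (0:ℝ) < (2:ℝ) ^ δ := by positivity
    have hinv : ((2:ℝ) ^ δ)⁻¹ * (2:ℝ) ^ δ = 1 := inv_mul_cancel₀ hpow
    rw [lt_div_iff₀ (by positivity)]
    nlinarith [hpos, hinv]
end

section
/- Let n be a positive integer, let d ≥ 2, and let U be a d-bounded multilinear Littlewood family on n variables with vertex degrees u_i = |{S ∈ U : i ∈ S}|. Then there exists a subset X ⊆ {1,…,n} such that, setting m_i = |{S ∈ U : S ∩ X = {i}}| for each i, one has ∑_{i=1}^n √(m_i) ≥ (1 / (2^{5/2} · (d−1)^{3/2})) · ∑_{i=1}^n √(u_i). -/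
open Finset

lemma sum_pow_powerset {α : Type*} [DecidableEq α] (s : Finset α) (p q : ℝ) :
    ∑ X ∈ s.powerset, p ^ X.card * q ^ (s.card - X.card) = (p + q) ^ s.card := by
  have h := Finset.prod_add (fun _ : α => p) (fun _ : α => q) s
  rw [Finset.prod_const] at h
  rw [h]
  refine Finset.sum_congr rfl fun t ht => ?_
  rw [Finset.prod_const, Finset.prod_const,
    Finset.card_sdiff_of_subset (Finset.mem_powerset.mp ht)]

lemma sum_pow_filter {α : Type*} [DecidableEq α] (s S : Finset α) (hS : S ⊆ s) (i : α)
    (hi : i ∈ S) (p q : ℝ) (hpq : p + q = 1) :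
    ∑ X ∈ s.powerset.filter (fun X => S ∩ X = {i}),
        p ^ X.card * q ^ (s.card - X.card) = p * q ^ (S.card - 1) := by
  have hiS : i ∉ s \ S := fun h => (Finset.mem_sdiff.mp h).2 hi
  have himg : s.powerset.filter (fun X => S ∩ X = {i})
      = (s \ S).powerset.image (insert i) := by
    ext X
    simp only [mem_filter, mem_powerset, mem_image]
    constructor
    · rintro ⟨hXs, hSX⟩
      have hiX : i ∈ X := by
        have : i ∈ S ∩ X := hSX ▸ Finset.mem_singleton_self i
        exact (Finset.mem_inter.mp this).2
      refine ⟨X \ S, fun x hx => ?_, ?_⟩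
      · rcases Finset.mem_sdiff.mp hx with ⟨h1, h2⟩
        exact Finset.mem_sdiff.mpr ⟨hXs h1, h2⟩
      · ext j
        simp only [Finset.mem_insert, Finset.mem_sdiff]
        constructor
        · rintro (rfl | ⟨hj, _⟩)
          · exact hiX
          · exact hj
        · intro hj
          by_cases hjS : j ∈ S
          · left
            have h2 : j ∈ S ∩ X := Finset.mem_inter.mpr ⟨hjS, hj⟩
            rw [hSX] at h2
            exact Finset.mem_singleton.mp h2
          · exact Or.inr ⟨hj, hjS⟩
    · rintro ⟨Y, hY, rfl⟩
      constructor
      · intro x hx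
        rcases Finset.mem_insert.mp hx with rfl | hx
        · exact hS hi
        · exact (Finset.mem_sdiff.mp (hY hx)).1
      · ext j
        simp only [Finset.mem_inter, Finset.mem_insert, Finset.mem_singleton]
        constructor
        · rintro ⟨hjS, rfl | hjY⟩
          · rfl
          · exact absurd hjS (Finset.mem_sdiff.mp (hY hjY)).2
        · rintro rfl
          exact ⟨hi, Or.inl rfl⟩
  rw [himg, Finset.sum_image (by
    intro Y1 h1 Y2 h2 he
    have hi1 : i ∉ Y1 := fun h => hiS (Finset.mem_powerset.mp h1 h)
    have hi2 : i ∉ Y2 := fun h => hiS (Finset.mem_powerset.mp h2 h)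
    rw [← Finset.erase_insert hi1, he, Finset.erase_insert hi2])]
  have hcard : S.card ≤ s.card := Finset.card_le_card hS
  have hS1 : 1 ≤ S.card := Finset.card_pos.mpr ⟨i, hi⟩
  have hsd : (s \ S).card = s.card - S.card := Finset.card_sdiff_of_subset hS
  have hstep : ∀ Y ∈ (s \ S).powerset,
      p ^ (insert i Y).card * q ^ (s.card - (insert i Y).card)
        = (p * q ^ (S.card - 1)) * (p ^ Y.card * q ^ ((s \ S).card - Y.card)) := by
    intro Y hY
    have hiY : i ∉ Y := fun h => hiS (Finset.mem_powerset.mp hY h)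
    have hYc : Y.card ≤ (s \ S).card := Finset.card_le_card (Finset.mem_powerset.mp hY)
    rw [Finset.card_insert_of_notMem hiY]
    have hexp : s.card - (Y.card + 1) = (S.card - 1) + ((s \ S).card - Y.card) := by omega
    rw [hexp, pow_add, pow_succ]
    ring
  rw [Finset.sum_congr rfl hstep, ← Finset.mul_sum, sum_pow_powerset, hpq, one_pow, mul_one]

lemma div_sqrt_le (a b : ℕ) (hab : a ≤ b) :
    (a : ℝ) / Real.sqrt b ≤ Real.sqrt a := by
  rcases Nat.eq_zero_or_pos a with h | h
  · simp [h]
  · have ha : (0:ℝ) < a := by exact_mod_cast h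
    have h1 : (a:ℝ) / Real.sqrt b ≤ (a:ℝ) / Real.sqrt a :=
      div_le_div_of_nonneg_left ha.le (Real.sqrt_pos.mpr ha)
        (Real.sqrt_le_sqrt (by exact_mod_cast hab))
    calc (a:ℝ) / Real.sqrt b ≤ (a:ℝ) / Real.sqrt a := h1
      _ = Real.sqrt a := Real.div_sqrt

/-- good split: For `d ≥ 2` and a `d`-bounded multilinear Littlewood
family `U` on `n` variables, there exists `X ⊆ {1,…,n}` such that, with
`m i = |{S ∈ U : S ∩ X = {i}}|`, one has
`∑_i √(m i) ≥ (1/(2^(5/2)·(d−1)^(3/2))) ∑_i √(u i)`. -/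
theorem littlewood_good_split
    (n : ℕ) (hn : 0 < n) (d : ℕ) (hd : 2 ≤ d)
    (U : Finset (Finset (Fin n)))
    (hU : ∀ S ∈ U, S.Nonempty ∧ S.card ≤ d) :
    ∃ X : Finset (Fin n),
      (1 / ((2:ℝ) ^ ((5:ℝ)/2) * ((d:ℝ) - 1) ^ ((3:ℝ)/2))) *
          ∑ i : Fin n, Real.sqrt ((U.filter (fun S => i ∈ S)).card) ≤
        ∑ i : Fin n, Real.sqrt ((U.filter (fun S => S ∩ X = {i})).card) := by
  classical
  have hd1 : (1:ℝ) ≤ (d:ℝ) - 1 := by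
    have : (2:ℝ) ≤ (d:ℝ) := by exact_mod_cast hd
    linarith
  set p : ℝ := 1 / (2 * ((d:ℝ) - 1)) with hpdef
  set q : ℝ := 1 - p with hqdef
  have hp0 : 0 < p := by
    have : (0:ℝ) < 2 * ((d:ℝ) - 1) := by linarith
    exact one_div_pos.mpr this
  have hp2 : p ≤ 1/2 := by
    rw [hpdef]
    rw [div_le_div_iff₀ (by linarith) (by norm_num)]
    linarith
  have hq0 : 0 < q := by rw [hqdef]; linarith
  have hq1 : q ≤ 1 := by rw [hqdef]; linarith
  have hpq : p + q = 1 := by rw [hqdef]; ring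
  -- Bernoulli: q ^ (d-1) ≥ 1/2
  have hdp : ((d:ℝ) - 1) * p = 1/2 := by
    rw [hpdef]; field_simp
  have hcast : ((d - 1 : ℕ) : ℝ) = (d:ℝ) - 1 := by
    have h1 : 1 ≤ d := by omega
    push_cast [Nat.cast_sub h1]
    ring
  have hqd : (1:ℝ)/2 ≤ q ^ (d - 1) := by
    have hber := one_add_mul_le_pow (a := -p) (by linarith) (d - 1)
    have he : (1 + -p) = q := by rw [hqdef]; ring
    rw [he, hcast] at hber
    linarith [hber]
  -- weights
  set P : Finset (Finset (Fin n)) := (Finset.univ : Finset (Fin n)).powerset with hP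
  set w : Finset (Fin n) → ℝ :=
    fun X => p ^ X.card * q ^ ((Finset.univ : Finset (Fin n)).card - X.card) with hw
  have hwpos : ∀ X, 0 < w X := fun X => by
    rw [hw]; positivity
  have hw1 : ∑ X ∈ P, w X = 1 := by
    rw [hP, hw]
    rw [sum_pow_powerset, hpq, one_pow]
  set u : Fin n → ℕ := fun i => (U.filter (fun S => i ∈ S)).card with hu
  set m : Finset (Fin n) → Fin n → ℕ :=
    fun X i => (U.filter (fun S => S ∩ X = {i})).card with hm
  have hmu : ∀ X i, m X i ≤ u i := by
    intro X i
    apply Finset.card_le_card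
    intro S hS
    rw [Finset.mem_filter] at hS ⊢
    refine ⟨hS.1, ?_⟩
    have : i ∈ S ∩ X := hS.2 ▸ Finset.mem_singleton_self i
    exact (Finset.mem_inter.mp this).1
  -- expected value of m X i
  have hEm : ∀ i : Fin n, ∑ X ∈ P, w X * (m X i : ℝ)
      = ∑ S ∈ U.filter (fun S => i ∈ S), p * q ^ (S.card - 1) := by
    intro i
    have step1 : ∀ X, w X * (m X i : ℝ)
        = ∑ S ∈ U, if S ∩ X = {i} then w X else 0 := by
      intro X
      simp only [hm, Finset.card_filter]
      push_cast
      rw [Finset.mul_sum]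
      refine Finset.sum_congr rfl fun S _ => ?_
      split <;> simp
    rw [Finset.sum_congr rfl (fun X _ => step1 X), Finset.sum_comm]
    have step2 : ∀ S ∈ U, (∑ X ∈ P, if S ∩ X = {i} then w X else 0)
        = if i ∈ S then p * q ^ (S.card - 1) else 0 := by
      intro S hS
      rw [← Finset.sum_filter]
      split
      · next hiS =>
        rw [hP, hw]
        exact sum_pow_filter Finset.univ S (Finset.subset_univ S) i hiS p q hpq
      · next hiS =>
        apply Finset.sum_eq_zero
        intro X hX
        rw [Finset.mem_filter] at hX
        exfalso
        apply hiS
        have : i ∈ S ∩ X := hX.2 ▸ Finset.mem_singleton_self i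
        exact (Finset.mem_inter.mp this).1
    rw [Finset.sum_congr rfl step2, Finset.sum_ite, Finset.sum_const_zero, add_zero]
  -- lower bound on expected value
  have hElb : ∀ i : Fin n, (u i : ℝ) * (p / 2) ≤ ∑ X ∈ P, w X * (m X i : ℝ) := by
    intro i
    rw [hEm i]
    have hb : ∀ S ∈ U.filter (fun S => i ∈ S), p / 2 ≤ p * q ^ (S.card - 1) := by
      intro S hS
      rw [Finset.mem_filter] at hS
      have hcd : S.card ≤ d := (hU S hS.1).2
      have : q ^ (d - 1) ≤ q ^ (S.card - 1) :=
        pow_le_pow_of_le_one hq0.le hq1 (by omega)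
      calc p / 2 = p * (1/2) := by ring
        _ ≤ p * q ^ (d - 1) := by
            apply mul_le_mul_of_nonneg_left hqd hp0.le
        _ ≤ p * q ^ (S.card - 1) := by
            apply mul_le_mul_of_nonneg_left this hp0.le
    calc (u i : ℝ) * (p / 2) = ∑ _S ∈ U.filter (fun S => i ∈ S), (p/2) := by
          rw [Finset.sum_const, hu]; ring
      _ ≤ ∑ S ∈ U.filter (fun S => i ∈ S), p * q ^ (S.card - 1) :=
          Finset.sum_le_sum hb
  -- pointwise sqrt bound
  have hpt : ∀ X, ∑ i : Fin n, (m X i : ℝ) / Real.sqrt (u i)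
      ≤ ∑ i : Fin n, Real.sqrt (m X i) :=
    fun X => Finset.sum_le_sum fun i _ => div_sqrt_le _ _ (hmu X i)
  set T : ℝ := ∑ i : Fin n, Real.sqrt (u i) with hT
  -- main averaging inequality
  have hmain : ∑ X ∈ P, w X * ((p/2) * T) ≤ ∑ X ∈ P, w X * ∑ i : Fin n, Real.sqrt (m X i) := by
    have h1 : ∑ X ∈ P, w X * ((p/2) * T) = (p/2) * T := by
      rw [← Finset.sum_mul, hw1, one_mul]
    rw [h1]
    have h2 : (p/2) * T ≤ ∑ i : Fin n, (∑ X ∈ P, w X * (m X i : ℝ)) / Real.sqrt (u i) := by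
      rw [hT, Finset.mul_sum]
      apply Finset.sum_le_sum
      intro i _
      have hdiv : ((u i : ℝ) * (p/2)) / Real.sqrt (u i)
          ≤ (∑ X ∈ P, w X * (m X i : ℝ)) / Real.sqrt (u i) := by
        gcongr
        exact hElb i
      calc (p/2) * Real.sqrt (u i) = (p/2) * ((u i : ℝ) / Real.sqrt (u i)) := by
            rw [Real.div_sqrt]
        _ = ((u i : ℝ) * (p/2)) / Real.sqrt (u i) := by ring
        _ ≤ _ := hdiv
    have h3 : ∑ i : Fin n, (∑ X ∈ P, w X * (m X i : ℝ)) / Real.sqrt (u i)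
        ≤ ∑ X ∈ P, w X * ∑ i : Fin n, Real.sqrt (m X i) := by
      have hsw : ∑ i : Fin n, (∑ X ∈ P, w X * (m X i : ℝ)) / Real.sqrt (u i)
          = ∑ X ∈ P, ∑ i : Fin n, w X * ((m X i : ℝ) / Real.sqrt (u i)) := by
        rw [Finset.sum_comm]
        refine Finset.sum_congr rfl fun i _ => ?_
        rw [Finset.sum_div]
        refine Finset.sum_congr rfl fun X _ => ?_
        rw [mul_div_assoc]
      rw [hsw]
      apply Finset.sum_le_sum
      intro X _
      rw [← Finset.mul_sum]
      exact mul_le_mul_of_nonneg_left (hpt X) (hwpos X).le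
    linarith
  -- extract a good X
  have hPne : P.Nonempty := ⟨∅, by simp [hP]⟩
  obtain ⟨X, _, hX⟩ := Finset.exists_le_of_sum_le hPne hmain
  refine ⟨X, ?_⟩
  have hgood : (p/2) * T ≤ ∑ i : Fin n, Real.sqrt (m X i) :=
    le_of_mul_le_mul_left hX (hwpos X)
  -- compare constants
  have hT0 : 0 ≤ T := Finset.sum_nonneg fun i _ => Real.sqrt_nonneg _
  have hconst : 1 / ((2:ℝ) ^ ((5:ℝ)/2) * ((d:ℝ) - 1) ^ ((3:ℝ)/2)) ≤ p/2 := by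
    have h4 : (4:ℝ) ≤ (2:ℝ) ^ ((5:ℝ)/2) := by
      have := Real.rpow_le_rpow_of_exponent_le (by norm_num : (1:ℝ) ≤ 2)
        (by norm_num : (2:ℝ) ≤ 5/2)
      rwa [show ((2:ℝ):ℝ) ^ (2:ℝ) = 4 by
        rw [show (2:ℝ) = ((2:ℕ):ℝ) by norm_num, Real.rpow_natCast]; norm_num] at this
    have h5 : (d:ℝ) - 1 ≤ ((d:ℝ) - 1) ^ ((3:ℝ)/2) := by
      have := Real.rpow_le_rpow_of_exponent_le hd1 (by norm_num : (1:ℝ) ≤ 3/2)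
      rwa [Real.rpow_one] at this
    have hprod : 4 * ((d:ℝ) - 1) ≤ (2:ℝ) ^ ((5:ℝ)/2) * ((d:ℝ) - 1) ^ ((3:ℝ)/2) := by
      apply mul_le_mul h4 h5 (by linarith) (by positivity)
    have hpos : (0:ℝ) < 4 * ((d:ℝ) - 1) := by linarith
    calc 1 / ((2:ℝ) ^ ((5:ℝ)/2) * ((d:ℝ) - 1) ^ ((3:ℝ)/2))
        ≤ 1 / (4 * ((d:ℝ) - 1)) := one_div_le_one_div_of_le hpos hprod
      _ = p / 2 := by rw [hpdef]; field_simp; ring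
  calc (1 / ((2:ℝ) ^ ((5:ℝ)/2) * ((d:ℝ) - 1) ^ ((3:ℝ)/2))) * T
      ≤ (p/2) * T := mul_le_mul_of_nonneg_right hconst hT0
    _ ≤ ∑ i : Fin n, Real.sqrt (m X i) := hgood
end

section
/- Let n be a positive integer, let d ≥ 2, let U be a d-bounded multilinear Littlewood family on n variables, and set q = 1/(2(d−1)). For X ⊆ {1,…,n} and i ∈ {1,…,n} let m_i(X) = |{S ∈ U : S ∩ X = {i}}|. Then for every i, the expectation of m_i over the random subset X in which each element is included independently with probability q satisfies ∑_{X ⊆ {1,…,n}} q^{|X|} (1−q)^{n−|X|} · m_i(X) ≥ u_i / (4(d−1)), where u_i = |{S ∈ U : i ∈ S}|. -/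
open Finset

lemma sum_powerset_pow {α : Type*} [DecidableEq α] (s : Finset α) (a b : ℝ) :
    ∑ t ∈ s.powerset, a ^ t.card * b ^ (s.card - t.card) = (a + b) ^ s.card := by
  have h := Finset.prod_add (fun _ : α => a) (fun _ : α => b) s
  simp only [Finset.prod_const] at h
  rw [h]
  apply Finset.sum_congr rfl
  intro t ht
  rw [Finset.mem_powerset] at ht
  rw [Finset.card_sdiff_of_subset ht]

/-- expected split size: For `d ≥ 2`, a `d`-bounded multilinear Littlewood
family `U` on `n` variables, and `q = 1/(2(d−1))`, for every `i` the expectation of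
`m i (X) = |{S ∈ U : S ∩ X = {i}}|` over the random subset `X` (each element included
independently with probability `q`) is at least `u i / (4(d−1))`. -/
theorem littlewood_split_expectation
    (n : ℕ) (hn : 0 < n) (d : ℕ) (hd : 2 ≤ d)
    (U : Finset (Finset (Fin n)))
    (hU : ∀ S ∈ U, S.Nonempty ∧ S.card ≤ d) (i : Fin n) :
    ((U.filter (fun S => i ∈ S)).card : ℝ) / (4 * ((d:ℝ) - 1)) ≤
      ∑ X : Finset (Fin n),
        (1 / (2 * ((d:ℝ) - 1))) ^ X.card *
          (1 - 1 / (2 * ((d:ℝ) - 1))) ^ (n - X.card) *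
          ((U.filter (fun S => S ∩ X = {i})).card : ℝ) := by
  classical
  have hd1 : (1:ℝ) ≤ (d:ℝ) - 1 := by
    have : (2:ℝ) ≤ (d:ℝ) := by exact_mod_cast hd
    linarith
  have hq0 : 0 < 1 / (2 * ((d:ℝ) - 1)) := by positivity
  have hq2 : 1 / (2 * ((d:ℝ) - 1)) ≤ 1/2 := by
    rw [div_le_div_iff₀ (by linarith) (by norm_num)]
    linarith
  have hqv : ((d:ℝ) - 1) * (1 / (2 * ((d:ℝ) - 1))) = 1/2 := by
    rw [mul_one_div, div_eq_div_iff (by linarith) (by norm_num)]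
    ring
  have hq4 : (1:ℝ) / (4 * ((d:ℝ) - 1)) = (1 / (2 * ((d:ℝ) - 1))) / 2 := by
    rw [div_div, div_eq_div_iff (by linarith) (by linarith)]
    ring
  set q : ℝ := 1 / (2 * ((d:ℝ) - 1)) with hq
  have h1q : (0:ℝ) ≤ 1 - q := by linarith
  -- key: exact probability that S ∩ X = {i}, for i ∈ S
  have key : ∀ S : Finset (Fin n), i ∈ S →
      (∑ X : Finset (Fin n),
        (if S ∩ X = {i} then q ^ X.card * (1-q) ^ (n - X.card) else 0))
      = q * (1-q) ^ (S.card - 1) := by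
    intro S hiS
    rw [← Finset.sum_filter]
    have hbij : ∑ X ∈ Finset.univ.filter (fun X : Finset (Fin n) => S ∩ X = {i}),
        q ^ X.card * (1-q) ^ (n - X.card)
        = ∑ Y ∈ Sᶜ.powerset, q ^ (Y.card + 1) * (1-q) ^ (n - (Y.card + 1)) := by
      apply Finset.sum_nbij' (fun X => X.erase i) (fun Y => insert i Y)
      · intro X hX
        simp only [Finset.mem_filter, Finset.mem_univ, true_and] at hX
        rw [Finset.mem_powerset]
        intro a ha
        rw [Finset.mem_erase] at ha
        rw [Finset.mem_compl]
        intro haS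
        have : a ∈ S ∩ X := Finset.mem_inter.mpr ⟨haS, ha.2⟩
        rw [hX, Finset.mem_singleton] at this
        exact ha.1 this
      · intro Y hY
        rw [Finset.mem_powerset] at hY
        simp only [Finset.mem_filter, Finset.mem_univ, true_and]
        ext a
        simp only [Finset.mem_inter, Finset.mem_insert, Finset.mem_singleton]
        constructor
        · rintro ⟨haS, rfl | haY⟩
          · rfl
          · exact absurd haS (Finset.mem_compl.mp (hY haY))
        · rintro rfl; exact ⟨hiS, Or.inl rfl⟩
      · intro X hX
        simp only [Finset.mem_filter, Finset.mem_univ, true_and] at hX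
        have hiX : i ∈ X := by
          have : i ∈ S ∩ X := by rw [hX]; exact Finset.mem_singleton_self i
          exact (Finset.mem_inter.mp this).2
        exact Finset.insert_erase hiX
      · intro Y hY
        rw [Finset.mem_powerset] at hY
        have hiY : i ∉ Y := fun h => (Finset.mem_compl.mp (hY h)) hiS
        exact Finset.erase_insert hiY
      · intro X hX
        simp only [Finset.mem_filter, Finset.mem_univ, true_and] at hX
        have hiX : i ∈ X := by
          have : i ∈ S ∩ X := by rw [hX]; exact Finset.mem_singleton_self i
          exact (Finset.mem_inter.mp this).2
        rw [Finset.card_erase_of_mem hiX]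
        have hX1 : 1 ≤ X.card := Finset.card_pos.mpr ⟨i, hiX⟩
        congr 2 <;> omega
    rw [hbij]
    have hcS : Sᶜ.card = n - S.card := by
      rw [Finset.card_compl, Fintype.card_fin]
    have hS1 : 1 ≤ S.card := Finset.card_pos.mpr ⟨i, hiS⟩
    have hSn : S.card ≤ n := by
      have := Finset.card_le_card (Finset.subset_univ S)
      simpa using this
    have step : ∀ Y ∈ Sᶜ.powerset,
        q ^ (Y.card + 1) * (1-q) ^ (n - (Y.card + 1))
        = (q * (1-q) ^ (S.card - 1)) * (q ^ Y.card * (1-q) ^ (Sᶜ.card - Y.card)) := by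
      intro Y hY
      rw [Finset.mem_powerset] at hY
      have hYc : Y.card ≤ Sᶜ.card := Finset.card_le_card hY
      have hexp : n - (Y.card + 1) = (Sᶜ.card - Y.card) + (S.card - 1) := by omega
      rw [hexp, pow_add, pow_succ]
      ring
    rw [Finset.sum_congr rfl step, ← Finset.mul_sum, sum_powerset_pow]
    simp
  -- swap the order of summation
  have swap : ∑ X : Finset (Fin n),
        q ^ X.card * (1-q) ^ (n - X.card) * ((U.filter (fun S => S ∩ X = {i})).card : ℝ)
      = ∑ S ∈ U, ∑ X : Finset (Fin n),
        (if S ∩ X = {i} then q ^ X.card * (1-q) ^ (n - X.card) else 0) := by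
    rw [Finset.sum_comm]
    apply Finset.sum_congr rfl
    intro X _
    rw [Finset.card_filter]
    push_cast
    rw [Finset.mul_sum]
    apply Finset.sum_congr rfl
    intro S _
    split <;> simp
  rw [swap]
  have lower : ∀ S ∈ U, (if i ∈ S then q/2 else 0) ≤
      ∑ X : Finset (Fin n),
        (if S ∩ X = {i} then q ^ X.card * (1-q) ^ (n - X.card) else 0) := by
    intro S hS
    by_cases hiS : i ∈ S
    · rw [if_pos hiS, key S hiS]
      have hScard : S.card ≤ d := (hU S hS).2
      have h1 : (1:ℝ)/2 ≤ (1-q) ^ (d - 1) := by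
        have hber : 1 + (d - 1 : ℕ) * (-q) ≤ (1 + (-q)) ^ (d - 1 : ℕ) :=
          one_add_mul_le_pow (by linarith) (d-1)
        have hd1n : ((d - 1 : ℕ) : ℝ) = (d:ℝ) - 1 := by
          have h1d : 1 ≤ d := by omega
          push_cast [h1d]
          ring
        rw [hd1n] at hber
        calc (1:ℝ)/2 = 1 + ((d:ℝ)-1) * (-q) := by
              rw [mul_neg, hqv]; ring
        _ ≤ (1 + (-q)) ^ (d-1) := hber
        _ = (1-q) ^ (d-1) := by rw [show (1:ℝ) + -q = 1 - q by ring]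
      have h2 : (1-q) ^ (d - 1) ≤ (1-q) ^ (S.card - 1) := by
        apply pow_le_pow_of_le_one h1q (by linarith) (by omega)
      nlinarith
    · rw [if_neg hiS]
      apply Finset.sum_nonneg
      intro X _
      split
      · positivity
      · exact le_rfl
  calc ((U.filter (fun S => i ∈ S)).card : ℝ) / (4 * ((d:ℝ) - 1))
      = ∑ S ∈ U, (if i ∈ S then q/2 else 0) := by
        rw [← Finset.sum_filter, Finset.sum_const, nsmul_eq_mul,
          div_eq_mul_one_div, hq4]
    _ ≤ _ := Finset.sum_le_sum lower
end

section
/- Let n be a positive integer, let d ≥ 2, let U be a d-bounded multilinear Littlewood family on n variables, and set q = 1/(2(d−1)). For X ⊆ {1,…,n} and i ∈ {1,…,n} let m_i(X) = |{S ∈ U : S ∩ X = {i}}| and u_i = |{S ∈ U : i ∈ S}|. Then for every i, ∑_{X ⊆ {1,…,n}} q^{|X|}(1−q)^{n−|X|} · √(m_i(X)) ≥ 2^{−5/2} · (d−1)^{−3/2} · √(u_i). -/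
/-!
Let `u = u_i`, `m = m_i(X)` and write `E` for the expectation over `X`. Every set counted by `m`
contains `i`, so `m ≤ u` and hence `m ≤ √m √u`, giving `E √m ≥ E m / √u`. By linearity,
`E m = ∑_{S ∋ i} q (1 - q)^(|S| - 1) ≥ u q (1 - q)^(d - 1) ≥ u q / 2`, the last step by Bernoulli's
inequality since `(d - 1) q = 1 / 2`. So `E √m ≥ √u q / 2 = √u / (4 (d - 1))`, which dominates
`2^(-5/2) (d - 1)^(-3/2) √u`.
-/

open Finset

lemma Finset.mem_left_of_inter_eq_singleton {α : Type*} [DecidableEq α] {s t : Finset α} {a : α}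
    (h : s ∩ t = {a}) : a ∈ s :=
  (mem_inter.mp (h ▸ mem_singleton_self a)).1

section SubsetWeight

variable {α : Type*} [Fintype α]

/-- The probability that a random subset of `α`, containing each element independently with
probability `q`, equals `X`. -/
def subsetWeight (q : ℝ) (X : Finset α) : ℝ := q ^ #X * (1 - q) ^ (Fintype.card α - #X)

lemma subsetWeight_nonneg {q : ℝ} (hq0 : 0 ≤ q) (hq1 : q ≤ 1) (X : Finset α) :
    0 ≤ subsetWeight q X := by
  unfold subsetWeight
  have : 0 ≤ 1 - q := by linarith
  positivity

variable [DecidableEq α]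

lemma filter_inter_eq_singleton_eq_image_insert {S : Finset α} {i : α} (hi : i ∈ S) :
    ({X | S ∩ X = {i}} : Finset (Finset α)) = Sᶜ.powerset.image (insert i) := by
  ext X
  simp only [mem_filter, mem_univ, true_and, mem_image, mem_powerset]
  constructor
  · intro hX
    have hiX : i ∈ X := mem_left_of_inter_eq_singleton ((inter_comm X S).trans hX)
    refine ⟨X.erase i, fun j hj => mem_compl.mpr fun hjS => ?_, insert_erase hiX⟩
    have : j ∈ S ∩ X := mem_inter.mpr ⟨hjS, mem_of_mem_erase hj⟩
    exact ne_of_mem_erase hj (mem_singleton.mp (hX ▸ this))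
  · rintro ⟨Y, hY, rfl⟩
    ext j
    simp only [mem_inter, mem_insert, mem_singleton]
    constructor
    · rintro ⟨hjS, rfl | hjY⟩
      · rfl
      · exact absurd hjS (mem_compl.mp (hY hjY))
    · rintro rfl
      exact ⟨hi, Or.inl rfl⟩

lemma sum_subsetWeight_inter_eq_singleton (q : ℝ) {S : Finset α} {i : α} (hi : i ∈ S) :
    ∑ X with S ∩ X = {i}, subsetWeight q X = q * (1 - q) ^ (#S - 1) := by
  have hiY : ∀ Y ∈ Sᶜ.powerset, i ∉ Y := fun Y hY hiY =>
    mem_compl.mp (mem_powerset.mp hY hiY) hi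
  have hinj : Set.InjOn (insert i) (Sᶜ.powerset : Set (Finset α)) := fun Y hY Z hZ h => by
    rw [← erase_insert (hiY Y hY), ← erase_insert (hiY Z hZ), h]
  have hterm : ∀ Y ∈ Sᶜ.powerset, subsetWeight q (insert i Y)
      = q * (1 - q) ^ (#S - 1) * (q ^ #Y * (1 - q) ^ (#Sᶜ - #Y)) := by
    intro Y hY
    have hYS : #Y ≤ #Sᶜ := card_le_card (mem_powerset.mp hY)
    have hS : 1 ≤ #S := card_pos.mpr ⟨i, hi⟩
    have hSα : #S ≤ Fintype.card α := card_le_univ S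
    have hcard : Fintype.card α - (#Y + 1) = (#S - 1) + (#Sᶜ - #Y) := by
      rw [card_compl] at hYS ⊢
      omega
    rw [subsetWeight, card_insert_of_notMem (hiY Y hY), hcard, pow_add, pow_succ]
    ring
  rw [filter_inter_eq_singleton_eq_image_insert hi, sum_image hinj, sum_congr rfl hterm,
    ← mul_sum, sum_pow_mul_eq_add_pow]
  simp

lemma sum_subsetWeight_mul_card_inter_eq_singleton (q : ℝ) (U : Finset (Finset α)) (i : α) :
    ∑ X, subsetWeight q X * #{S ∈ U | S ∩ X = {i}}
      = ∑ S ∈ U with i ∈ S, q * (1 - q) ^ (#S - 1) := by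
  calc ∑ X, subsetWeight q X * #{S ∈ U | S ∩ X = {i}}
      = ∑ S ∈ U, ∑ X with S ∩ X = {i}, subsetWeight q X := by
        simp only [card_filter, Nat.cast_sum, Nat.cast_ite, Nat.cast_one, Nat.cast_zero,
          mul_sum, mul_ite, mul_one, mul_zero, sum_filter]
        exact sum_comm
    _ = ∑ S ∈ U with i ∈ S, ∑ X with S ∩ X = {i}, subsetWeight q X := by
        refine (sum_filter_of_ne fun S _ hS => ?_).symm
        obtain ⟨X, hX, -⟩ := exists_ne_zero_of_sum_ne_zero hS
        exact mem_left_of_inter_eq_singleton (mem_filter.mp hX).2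
    _ = ∑ S ∈ U with i ∈ S, q * (1 - q) ^ (#S - 1) :=
        sum_congr rfl fun S hS => sum_subsetWeight_inter_eq_singleton q (mem_filter.mp hS).2

lemma card_mul_le_sum_subsetWeight_mul_card_inter_eq_singleton {q : ℝ} (hq0 : 0 ≤ q)
    (hq1 : q ≤ 1) {d : ℕ} {U : Finset (Finset α)} (hU : ∀ S ∈ U, #S ≤ d) (i : α) :
    #{S ∈ U | i ∈ S} * (q * (1 - q) ^ (d - 1))
      ≤ ∑ X, subsetWeight q X * #{S ∈ U | S ∩ X = {i}} := by
  rw [sum_subsetWeight_mul_card_inter_eq_singleton, ← nsmul_eq_mul, ← sum_const]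
  refine sum_le_sum fun S hS => mul_le_mul_of_nonneg_left ?_ hq0
  exact pow_le_pow_of_le_one (by linarith) (by linarith)
    (Nat.sub_le_sub_right (hU S (mem_filter.mp hS).1) 1)

end SubsetWeight

lemma sqrt_mul_le_sum_mul_sqrt_of_mul_le_sum {ι : Type*} {s : Finset ι} {w m : ι → ℝ} {u c : ℝ}
    (hw : ∀ x ∈ s, 0 ≤ w x) (hm : ∀ x ∈ s, m x ≤ u) (h : u * c ≤ ∑ x ∈ s, w x * m x) :
    √u * c ≤ ∑ x ∈ s, w x * √(m x) := by
  have hmean : ∑ x ∈ s, w x * m x ≤ √u * ∑ x ∈ s, w x * √(m x) := by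
    rw [mul_sum]
    refine sum_le_sum fun x hx => ?_
    have hmx : m x ≤ √(m x) * √u := by
      rcases le_or_gt 0 (m x) with h0 | h0
      · calc m x = √(m x) * √(m x) := (Real.mul_self_sqrt h0).symm
          _ ≤ √(m x) * √u := by gcongr; exact hm x hx
      · exact h0.le.trans (by positivity)
    calc w x * m x ≤ w x * (√(m x) * √u) := mul_le_mul_of_nonneg_left hmx (hw x hx)
      _ = √u * (w x * √(m x)) := by ring
  rcases (Real.sqrt_nonneg u).eq_or_lt with hu | hu
  · rw [← hu, zero_mul]
    exact sum_nonneg fun x hx => mul_nonneg (hw x hx) (Real.sqrt_nonneg _)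
  · refine le_of_mul_le_mul_left ?_ hu
    rw [← mul_assoc, Real.mul_self_sqrt (Real.sqrt_pos.mp hu).le]
    exact h.trans hmean

lemma two_rpow_mul_rpow_le_div_two {x : ℝ} (hx : 1 ≤ x) :
    (2:ℝ) ^ (-(5:ℝ)/2) * x ^ (-(3:ℝ)/2) ≤ 1 / (2 * x) / 2 := by
  have h2 : (2:ℝ) ^ (-(5:ℝ)/2) ≤ 1/4 := by
    calc (2:ℝ) ^ (-(5:ℝ)/2) ≤ (2:ℝ) ^ (-2:ℝ) :=
          Real.rpow_le_rpow_of_exponent_le one_le_two (by norm_num)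
      _ = 1/4 := by norm_num [Real.rpow_neg, Real.rpow_two]
  have hx' : x ^ (-(3:ℝ)/2) ≤ x⁻¹ := by
    simpa [Real.rpow_neg_one] using
      Real.rpow_le_rpow_of_exponent_le hx (show -(3:ℝ)/2 ≤ -1 by norm_num)
  calc (2:ℝ) ^ (-(5:ℝ)/2) * x ^ (-(3:ℝ)/2) ≤ 1/4 * x⁻¹ := by gcongr
    _ = 1 / (2 * x) / 2 := by field_simp; norm_num

lemma half_le_one_sub_inv_two_mul_pow {k : ℕ} (hk : 1 ≤ k) :
    1 / 2 ≤ (1 - 1 / (2 * (k:ℝ))) ^ k := by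
  have hk' : (1:ℝ) ≤ k := by exact_mod_cast hk
  have hbernoulli := one_add_mul_sub_le_pow (a := 1 - 1 / (2 * (k:ℝ)))
    (by linarith [show 1 / (2 * (k:ℝ)) ≤ 1 by rw [div_le_one (by positivity)]; linarith]) k
  calc 1 / 2 = 1 + k * (1 - 1 / (2 * (k:ℝ)) - 1) := by field_simp; ring
    _ ≤ _ := hbernoulli

theorem littlewood_split_sqrt_expectation_general
    (n : ℕ) (d : ℕ) (hd : 2 ≤ d)
    (U : Finset (Finset (Fin n)))
    (hU : ∀ S ∈ U, S.Nonempty ∧ S.card ≤ d) (i : Fin n) :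
    (2:ℝ) ^ (-(5:ℝ)/2) * ((d:ℝ) - 1) ^ (-(3:ℝ)/2) *
        Real.sqrt ((U.filter (fun S => i ∈ S)).card) ≤
      ∑ X : Finset (Fin n),
        (1 / (2 * ((d:ℝ) - 1))) ^ X.card *
          (1 - 1 / (2 * ((d:ℝ) - 1))) ^ (n - X.card) *
          Real.sqrt ((U.filter (fun S => S ∩ X = {i})).card) := by
  set q : ℝ := 1 / (2 * ((d:ℝ) - 1)) with hq
  have hd1 : (1:ℝ) ≤ d - 1 := by
    have : (2:ℝ) ≤ d := by exact_mod_cast hd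
    linarith
  have hq0 : 0 ≤ q := by positivity
  have hq1 : q ≤ 1 := by
    rw [hq, div_le_one (by positivity)]
    linarith
  have hbernoulli : 1 / 2 ≤ (1 - q) ^ (d - 1) := by
    have := half_le_one_sub_inv_two_mul_pow (k := d - 1) (by omega)
    rwa [Nat.cast_sub (by omega), Nat.cast_one] at this
  have hmean : (#{S ∈ U | i ∈ S} : ℝ) * (q / 2)
      ≤ ∑ X, subsetWeight q X * #{S ∈ U | S ∩ X = {i}} := by
    refine le_trans ?_ (card_mul_le_sum_subsetWeight_mul_card_inter_eq_singleton hq0 hq1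
      (fun S hS => (hU S hS).2) i)
    exact mul_le_mul_of_nonneg_left (by nlinarith) (Nat.cast_nonneg _)
  have hroot : √(#{S ∈ U | i ∈ S} : ℝ) * (q / 2)
      ≤ ∑ X, subsetWeight q X * √(#{S ∈ U | S ∩ X = {i}} : ℝ) :=
    sqrt_mul_le_sum_mul_sqrt_of_mul_le_sum (fun X _ => subsetWeight_nonneg hq0 hq1 X)
    (fun X _ => Nat.cast_le.mpr (card_le_card (monotone_filter_right U
      fun _ _ => mem_left_of_inter_eq_singleton))) hmean
  calc _ ≤ q / 2 * √(#{S ∈ U | i ∈ S} : ℝ) := by gcongr; exact two_rpow_mul_rpow_le_div_two hd1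
    _ ≤ ∑ X, subsetWeight q X * √(#{S ∈ U | S ∩ X = {i}} : ℝ) := (mul_comm _ _).trans_le hroot
    _ = _ := by simp only [subsetWeight, Fintype.card_fin]

/-- expected root of split size: For `d ≥ 2`, a `d`-bounded multilinear
Littlewood family `U` on `n` variables, and `q = 1/(2(d−1))`, for every `i` the
expectation of `√(m i (X))` over the random subset `X` (each element included
independently with probability `q`) is at least `2^(−5/2) (d−1)^(−3/2) √(u i)`. -/
theorem littlewood_split_sqrt_expectation
    (n : ℕ) (hn : 0 < n) (d : ℕ) (hd : 2 ≤ d)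
    (U : Finset (Finset (Fin n)))
    (hU : ∀ S ∈ U, S.Nonempty ∧ S.card ≤ d) (i : Fin n) :
    (2:ℝ) ^ (-(5:ℝ)/2) * ((d:ℝ) - 1) ^ (-(3:ℝ)/2) *
        Real.sqrt ((U.filter (fun S => i ∈ S)).card) ≤
      ∑ X : Finset (Fin n),
        (1 / (2 * ((d:ℝ) - 1))) ^ X.card *
          (1 - 1 / (2 * ((d:ℝ) - 1))) ^ (n - X.card) *
          Real.sqrt ((U.filter (fun S => S ∩ X = {i})).card) :=
  littlewood_split_sqrt_expectation_general n d hd U hU i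
end

section
/- Let F be a finite field with q elements where q ≡ 1 (mod 4), and let χ be the quadratic character of F (χ(a) = 1 if a is a nonzero square, χ(a) = −1 if a is a non-square, χ(0) = 0). Then for every function x : F → {−1,+1}, |∑_{(i,j) ∈ F×F, i ≠ j} χ(i−j) · x(i) · x(j)| ≤ 2 · q^{3/2}. -/
/-!
The sum is the quadratic form `xᵀ Q x` of the Jacobsthal matrix `Q i j = χ(i - j)`. The character
sum `∑ₐ χ(a) χ(a + b) = -1` for `b ≠ 0` (a Jacobi sum) gives `Qᵀ Q = q I - J`, so
`‖Q x‖² = q ‖x‖² - (∑ x)² ≤ q ‖x‖²`, and Cauchy–Schwarz yields `|xᵀ Q x| ≤ √q ‖x‖² = q^{3/2}`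
for `x ∈ {±1}^F`.
-/

open Finset Matrix

namespace MulChar

variable {F R : Type*} [Field F] [Fintype F] [CommRing R] [IsDomain R]

theorem sum_mul_inv_apply_add_eq_neg_one {χ : MulChar F R} (hχ : χ ≠ 1) {b : F} (hb : b ≠ 0) :
    ∑ a, χ a * χ⁻¹ (a + b) = -1 := by
  have hterm (x : F) : χ (-b * x) * χ⁻¹ (-b * x + b) = χ (-1) * (χ x * χ⁻¹ (1 - x)) := by
    simp only [inv_apply', ← map_mul]
    congr 1
    rw [show -b * x + b = b * (1 - x) by ring, mul_inv]
    field_simp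
  calc ∑ a, χ a * χ⁻¹ (a + b)
      = ∑ x, χ (-b * x) * χ⁻¹ (-b * x + b) :=
        (Fintype.sum_equiv (Equiv.mulLeft₀ (-b) (neg_ne_zero.mpr hb)) _ _ fun _ => rfl).symm
    _ = χ (-1) * jacobiSum χ χ⁻¹ := by simp only [hterm, jacobiSum, mul_sum]
    _ = -1 := by
      rw [jacobiSum_nontrivial_inv hχ, mul_neg, ← map_mul, neg_one_mul, neg_neg, map_one]

end MulChar

section Jacobsthal

variable {F : Type*} [Field F] [Fintype F] [DecidableEq F]

theorem quadraticChar_sum_sub_mul_sub (hF : ringChar F ≠ 2) (j k : F) :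
    ∑ i, quadraticChar F (i - j) * quadraticChar F (i - k) =
      if j = k then (Fintype.card F : ℤ) - 1 else -1 := by
  have hinv := (quadraticChar_isQuadratic F).inv
  calc ∑ i, quadraticChar F (i - j) * quadraticChar F (i - k)
      = ∑ a, quadraticChar F a * (quadraticChar F)⁻¹ (a + (j - k)) :=
        Fintype.sum_equiv (Equiv.subRight j) _ _ fun i => by
          rw [hinv, Equiv.subRight_apply, sub_add_sub_cancel]
    _ = _ := by
      split_ifs with hjk
      · simp only [hjk, sub_self, add_zero, hinv, ← pow_two, ← MulChar.pow_apply' _ two_ne_zero,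
          (quadraticChar_isQuadratic F).sq_eq_one, MulChar.sum_one_eq_card_units,
          Fintype.card_eq_card_units_add_one (α := F)]
        push_cast
        ring
      · exact MulChar.sum_mul_inv_apply_add_eq_neg_one (quadraticChar_ne_one hF)
          (sub_ne_zero.mpr hjk)

def jacobsthalMatrix (R F : Type*) [IntCast R] [Field F] [Fintype F] [DecidableEq F] :
    Matrix F F R :=
  of fun i j => (quadraticChar F (i - j) : R)

theorem jacobsthalMatrix_apply_self (R : Type*) [Ring R] (i : F) : jacobsthalMatrix R F i i = 0 := by
  simp [jacobsthalMatrix]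

theorem jacobsthalMatrix_transpose_mul_self {R : Type*} [Ring R] (hF : ringChar F ≠ 2) :
    (jacobsthalMatrix R F)ᵀ * jacobsthalMatrix R F =
      (Fintype.card F : R) • 1 - of fun _ _ => 1 := by
  ext j k
  simp only [mul_apply, transpose_apply, jacobsthalMatrix, of_apply, ← Int.cast_mul,
    ← Int.cast_sum, quadraticChar_sum_sub_mul_sub hF, Matrix.sub_apply, Matrix.smul_apply,
    one_apply]
  split_ifs <;> simp

end Jacobsthal

section QuadraticForm

variable {n : Type*} [Fintype n] [DecidableEq n]

theorem sum_ne_mul_mul_eq_dotProduct_mulVec {R : Type*} [CommSemiring R] {Q : Matrix n n R}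
    (hQ : ∀ i, Q i i = 0) (x : n → R) :
    ∑ p ∈ univ.filter (fun p : n × n => p.1 ≠ p.2), Q p.1 p.2 * x p.1 * x p.2 =
      x ⬝ᵥ Q *ᵥ x := by
  rw [sum_filter_of_ne, Fintype.sum_prod_type]
  · simp only [dotProduct, mulVec, mul_sum]
    exact sum_congr rfl fun i _ => sum_congr rfl fun j _ => by ring
  · rintro ⟨i, j⟩ - hij (rfl : i = j)
    simp [hQ] at hij

theorem abs_dotProduct_mulVec_le_of_transpose_mul_self {Q : Matrix n n ℝ} {q : ℝ}
    (hQ : Qᵀ * Q = q • 1 - of fun _ _ => 1) (x : n → ℝ) :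
    |x ⬝ᵥ Q *ᵥ x| ≤ √q * (x ⬝ᵥ x) := by
  have hx : 0 ≤ x ⬝ᵥ x := sum_nonneg fun i _ => mul_self_nonneg (x i)
  have hQx : Q *ᵥ x ⬝ᵥ Q *ᵥ x = q * (x ⬝ᵥ x) - (∑ i, x i) ^ 2 := by
    rw [dotProduct_mulVec, ← vecMul_transpose, vecMul_vecMul, hQ, vecMul_sub, vecMul_smul,
      vecMul_one, sub_dotProduct, smul_dotProduct, smul_eq_mul]
    simp only [vecMul, dotProduct, of_apply, mul_one, ← mul_sum, sq]
  have hcs : (x ⬝ᵥ Q *ᵥ x) ^ 2 ≤ (x ⬝ᵥ x) * (Q *ᵥ x ⬝ᵥ Q *ᵥ x) := by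
    simpa only [dotProduct, ← sq] using sum_mul_sq_le_sq_mul_sq univ x (Q *ᵥ x)
  calc |x ⬝ᵥ Q *ᵥ x| = √((x ⬝ᵥ Q *ᵥ x) ^ 2) := (Real.sqrt_sq_eq_abs _).symm
    _ ≤ √(q * (x ⬝ᵥ x) ^ 2) := Real.sqrt_le_sqrt (by nlinarith [sq_nonneg (∑ i, x i)])
    _ = √q * (x ⬝ᵥ x) := by rw [Real.sqrt_mul' _ (sq_nonneg _), Real.sqrt_sq hx]

end QuadraticForm

/-- Paley graph sup-norm bound: Let `F` be a finite field with
`q ≡ 1 (mod 4)` elements and let `χ` be the quadratic character of `F`. Then for every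
`x : F → {-1,1}`, `|∑_{i ≠ j} χ(i−j) x(i) x(j)| ≤ 2 q^(3/2)`. -/
theorem paley_graph_bound
    (F : Type) [Field F] [Fintype F] [DecidableEq F]
    (hq : Fintype.card F % 4 = 1)
    (x : F → ℝ) (hx : ∀ i, x i = 1 ∨ x i = -1) :
    |∑ p ∈ Finset.univ.filter (fun p : F × F => p.1 ≠ p.2),
        ((quadraticChar F (p.1 - p.2) : ℤ) : ℝ) * x p.1 * x p.2| ≤
      2 * (Fintype.card F : ℝ) ^ ((3:ℝ)/2) := by
  have hF : ringChar F ≠ 2 := fun h => by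
    have := FiniteField.even_card_of_char_two h
    omega
  have hq0 : (0 : ℝ) < Fintype.card F := by exact_mod_cast Fintype.card_pos
  have hxx : x ⬝ᵥ x = Fintype.card F := by
    calc x ⬝ᵥ x = ∑ _i : F, (1 : ℝ) :=
          sum_congr rfl fun i _ => by rcases hx i with h | h <;> simp [h]
      _ = Fintype.card F := by simp
  have hsum := sum_ne_mul_mul_eq_dotProduct_mulVec (jacobsthalMatrix_apply_self ℝ) x
  simp only [jacobsthalMatrix, of_apply] at hsum
  rw [hsum]
  calc _ ≤ √(Fintype.card F : ℝ) * (x ⬝ᵥ x) :=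
        abs_dotProduct_mulVec_le_of_transpose_mul_self (jacobsthalMatrix_transpose_mul_self hF) x
    _ = (Fintype.card F : ℝ) ^ ((3 : ℝ) / 2) := by
      rw [hxx, Real.sqrt_eq_rpow, ← Real.rpow_add_one hq0.ne']
      norm_num
    _ ≤ 2 * (Fintype.card F : ℝ) ^ ((3 : ℝ) / 2) := by
      linarith [Real.rpow_nonneg hq0.le ((3 : ℝ) / 2)]
end

section
/- Let f be a polynomial with complex coefficients of degree at most d, where d ≥ 1. Then the supremum of |f(t)| over real t in the interval [−1,1] is at least |f′(0)|/d. -/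
/-!
Let `n` be odd with `n ≤ d ≤ n + 1`, and let `x_j = cos (j π / n)` for `j < 2 n` (the extrema of
`T_n`, run through a full period). Every `p` of degree at most `n + 1` satisfies the quadrature rule
`∑ⱼ (-1)ʲ p(x_j) / x_j² = ± 2 n p'(0)`: write `p = p(0) + p'(0) X + X² r`; the constant term drops
out by the symmetry `x_{j+n} = -x_j`, the linear term is computed from the identity
`cos θ · (1 - 2 cos 2θ + 2 cos 4θ - ⋯) = ± cos n θ`, and `r`, of degree `< n`, is a combination of
`T_0, …, T_{n-1}`, all orthogonal on the nodes to `(-1)ʲ = T_n(x_j)`. Applied to `T_n`, whose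
derivative at `0` is `± n`, the rule gives `∑ⱼ 1 / x_j² = 2 n²`; bounding each term of the rule by
`sup |p| / x_j²` then yields `|p'(0)| ≤ n sup |p| ≤ d sup |p|`.
-/

open Polynomial Real Finset

theorem sum_range_cos_nat_mul_eq_zero {n N : ℕ} (hN : ¬ 2 * n ∣ N) :
    ∑ j ∈ range (2 * n), cos (N * (j * π / n)) = 0 := by
  rcases eq_or_ne n 0 with rfl | hn
  · simp
  have hζ := Complex.isPrimitiveRoot_exp (2 * n) (by positivity)
  set ζ := Complex.exp (2 * π * Complex.I / (2 * n : ℕ))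
  have hterm (j : ℕ) : cos (N * (j * π / n)) = ((ζ ^ N) ^ j).re := by
    rw [← pow_mul, ← Complex.exp_nat_mul, ← Complex.exp_ofReal_mul_I_re]
    congr 2
    push_cast
    field_simp
  have hsum : ∑ j ∈ range (2 * n), (ζ ^ N) ^ j = 0 := by
    rw [geom_sum_eq (by rwa [Ne, hζ.pow_eq_one_iff_dvd]), ← pow_mul, mul_comm, pow_mul,
      hζ.pow_eq_one, one_pow, sub_self, zero_div]
  simp_rw [hterm, ← Complex.re_sum, hsum, Complex.zero_re]

theorem cos_mul_alternating_sum_cos (m : ℕ) (θ : ℝ) :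
    cos θ * (1 + 2 * ∑ k ∈ range m, (-1) ^ (k + 1) * cos (2 * (k + 1) * θ)) =
      (-1) ^ m * cos ((2 * m + 1) * θ) := by
  induction m with
  | zero => simp
  | succ m ih =>
    have h₁ : cos ((2 * (m + 1 : ℕ) + 1) * θ) = cos (2 * (m + 1) * θ + θ) := by push_cast; ring_nf
    have h₂ : cos ((2 * m + 1) * θ) = cos (2 * (m + 1) * θ - θ) := by ring_nf
    rw [sum_range_succ, h₁, cos_add]
    rw [h₂, cos_sub] at ih
    linear_combination ih

theorem cos_nat_mul_nat_mul_pi_div {n : ℕ} (hn : n ≠ 0) (j : ℕ) :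
    cos (n * (j * π / n)) = (-1) ^ j := by
  rw [← cos_nat_mul_pi]
  congr 1
  field_simp

namespace Polynomial.Chebyshev

theorem node_ne_zero {n : ℕ} (hn : Odd n) (j : ℕ) : node n j ≠ 0 := by
  intro h
  obtain ⟨k, hk⟩ := Real.cos_eq_zero_iff.mp h
  have hcast : ((2 * j : ℤ) : ℝ) = ((2 * k + 1) * n : ℤ) := by
    have hn0 : (n : ℝ) ≠ 0 := by exact_mod_cast hn.pos.ne'
    field_simp at hk
    push_cast
    linear_combination hk
  have hodd : Odd (2 * (j : ℤ)) := by
    rw [Int.cast_injective hcast]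
    exact (odd_two_mul_add_one k).mul (by exact_mod_cast hn)
  exact Int.not_odd_iff_even.mpr (even_two_mul _) hodd

theorem node_add_self {n : ℕ} (hn : n ≠ 0) (j : ℕ) : node n (j + n) = -node n j := by
  rw [node, node, ← cos_add_pi]
  congr 1
  push_cast
  field_simp

theorem eval_T_real_node_of_ne_zero {n : ℕ} (hn : n ≠ 0) (j : ℕ) :
    (T ℝ n).eval (node n j) = (-1) ^ j := by
  rw [node, T_real_cos, Int.cast_natCast, cos_nat_mul_nat_mul_pi_div hn]

theorem eval_zero_derivative_T_of_eq_two_mul_add_one (R : Type*) [CommRing R] {n m : ℕ}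
    (hn : n = 2 * m + 1) : (derivative (T R n)).eval 0 = (-1) ^ m * n := by
  rw [T_derivative_eq_U, eval_mul, show (n : ℤ) - 1 = 2 * m by omega, U_eval_two_mul_zero,
    Int.cast_negOnePow_natCast]
  simp [mul_comm]

theorem sum_neg_one_pow_div_node_sq {n : ℕ} (hn : Odd n) :
    ∑ j ∈ range (2 * n), (-1) ^ j / node n j ^ 2 = 0 := by
  rw [two_mul, sum_range_add, ← sum_add_distrib]
  refine sum_eq_zero fun j _ => ?_
  rw [add_comm n j, node_add_self hn.pos.ne', pow_add, hn.neg_one_pow]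
  ring

theorem sum_neg_one_pow_div_node {n m : ℕ} (hn : n = 2 * m + 1) :
    ∑ j ∈ range (2 * n), (-1) ^ j / node n j = (-1) ^ m * (2 * n) := by
  have hterm (j : ℕ) : (-1) ^ j / node n j =
      (-1) ^ m * (1 + 2 * ∑ k ∈ range m, (-1) ^ (k + 1) * cos (2 * (k + 1) * (j * π / n))) := by
    have h := cos_mul_alternating_sum_cos m (j * π / n)
    rw [show (2 * m + 1 : ℝ) = n by simp [hn], cos_nat_mul_nat_mul_pi_div (by omega)] at h
    have hm : ((-1 : ℝ) ^ m) ^ 2 = 1 := by rw [pow_right_comm, neg_one_sq, one_pow]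
    rw [div_eq_iff (node_ne_zero (by simp [hn]) j), node]
    linear_combination (-(-1) ^ m : ℝ) * h - (-1) ^ j * hm
  have hcos (k : ℕ) (hk : k ∈ range m) :
      ∑ j ∈ range (2 * n), cos (2 * (k + 1) * (j * π / n)) = 0 := by
    have := sum_range_cos_nat_mul_eq_zero (n := n) (N := 2 * (k + 1)) fun h => by
      have := Nat.le_of_dvd (by omega) h
      simp at hk
      omega
    simpa using this
  have hsum : ∑ j ∈ range (2 * n),
      (1 + 2 * ∑ k ∈ range m, (-1) ^ (k + 1) * cos (2 * (k + 1) * (j * π / n))) = 2 * n := by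
    have hzero : ∑ k ∈ range m, (-1) ^ (k + 1) *
        ∑ j ∈ range (2 * n), cos (2 * (k + 1) * (j * π / n)) = 0 :=
      sum_eq_zero fun k hk => by rw [hcos k hk, mul_zero]
    rw [sum_add_distrib, ← mul_sum, sum_comm]
    simp_rw [← mul_sum]
    simp [hzero]
  rw [sum_congr rfl fun j _ => hterm j, ← mul_sum, hsum]

theorem sum_neg_one_pow_mul_eval_node_eq_zero {n : ℕ} {p : ℂ[X]} (hp : p.degree < n) :
    ∑ j ∈ range (2 * n), (-1) ^ j * p.eval (node n j : ℂ) = 0 := by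
  rcases eq_or_ne n 0 with rfl | hn
  · simp
  have hmem : p ∈ degreeLT ℂ n := mem_degreeLT.mpr hp
  rw [← Sequence.span_degreeLT (chebyshevTsequence ℂ) (by simp)] at hmem
  clear hp
  induction hmem using Submodule.span_induction with
  | mem q hq =>
    obtain ⟨k, hk, rfl⟩ := hq
    have hterm (j : ℕ) :
        (-1) ^ j * (T ℝ k).eval (node n j) = cos ((n + k : ℕ) * (j * π / n)) := by
      rw [node, T_real_cos, ← cos_add_nat_mul_pi]
      congr 1
      push_cast
      field_simp
      ring
    have hdvd : ¬ 2 * n ∣ n + k := fun h => by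
      have := Nat.le_of_dvd (by omega) h
      simp at hk
      omega
    have := sum_range_cos_nat_mul_eq_zero hdvd
    simp_rw [← hterm] at this
    change ∑ j ∈ range (2 * n), (-1) ^ j * (T ℂ k).eval (node n j : ℂ) = 0
    simp_rw [← complex_ofReal_eval_T]
    exact_mod_cast this
  | zero => simp
  | add p q _ _ hp hq => simp [mul_add, sum_add_distrib, hp, hq]
  | smul a p _ hp => simp [mul_left_comm, ← mul_sum, hp]

theorem sum_neg_one_pow_mul_eval_node_div_sq {n m : ℕ} (hn : n = 2 * m + 1) {p : ℂ[X]}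
    (hp : p.natDegree ≤ n + 1) :
    ∑ j ∈ range (2 * n), (-1) ^ j * p.eval (node n j : ℂ) / (node n j : ℂ) ^ 2 =
      (-1) ^ m * (2 * n) * (derivative p).eval 0 := by
  have hodd : Odd n := ⟨m, hn⟩
  have hexpand (x : ℂ) : p.eval x = p.coeff 0 + p.coeff 1 * x + x ^ 2 * p.divX.divX.eval x := by
    conv_lhs => rw [← divX_mul_X_add p, ← divX_mul_X_add p.divX]
    simp only [eval_add, eval_mul, eval_X, eval_C, coeff_divX]
    ring
  have hr : p.divX.divX.degree < n := by
    refine degree_le_natDegree.trans_lt ?_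
    rw [natDegree_divX_eq_natDegree_tsub_one, natDegree_divX_eq_natDegree_tsub_one]
    exact_mod_cast (by omega : p.natDegree - 1 - 1 < n)
  have hterm (j : ℕ) : (-1) ^ j * p.eval (node n j : ℂ) / (node n j : ℂ) ^ 2 =
      p.coeff 0 * ((-1) ^ j / node n j ^ 2 : ℝ) + p.coeff 1 * ((-1) ^ j / node n j : ℝ) +
        (-1) ^ j * p.divX.divX.eval (node n j : ℂ) := by
    have := Complex.ofReal_ne_zero.mpr (node_ne_zero hodd j)
    rw [hexpand]
    push_cast
    field_simp
  rw [sum_congr rfl fun j _ => hterm j, sum_add_distrib, sum_add_distrib, ← mul_sum, ← mul_sum,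
    ← Complex.ofReal_sum, ← Complex.ofReal_sum, sum_neg_one_pow_div_node_sq hodd,
    sum_neg_one_pow_div_node hn, sum_neg_one_pow_mul_eval_node_eq_zero hr, ← taylor_coeff_one,
    taylor_zero]
  push_cast
  ring

theorem sum_inv_node_sq {n : ℕ} (hn : Odd n) :
    ∑ j ∈ range (2 * n), (node n j ^ 2)⁻¹ = 2 * n ^ 2 := by
  obtain ⟨m, hm⟩ := hn
  have h := sum_neg_one_pow_mul_eval_node_div_sq hm (p := T ℂ n) (by simp)
  have hterm (j : ℕ) : (-1) ^ j * (T ℂ n).eval (node n j : ℂ) / (node n j : ℂ) ^ 2 =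
      ((node n j ^ 2)⁻¹ : ℝ) := by
    rw [← complex_ofReal_eval_T, eval_T_real_node_of_ne_zero (by omega)]
    push_cast
    rw [← pow_add, ← two_mul, pow_mul, neg_one_sq, one_pow, one_div]
  rw [sum_congr rfl fun j _ => hterm j, eval_zero_derivative_T_of_eq_two_mul_add_one ℂ hm,
    ← Complex.ofReal_sum] at h
  have hm2 : ((-1 : ℂ) ^ m) ^ 2 = 1 := by rw [pow_right_comm, neg_one_sq, one_pow]
  have : ((∑ j ∈ range (2 * n), (node n j ^ 2)⁻¹ : ℝ) : ℂ) = ((2 * n ^ 2 : ℝ) : ℂ) := by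
    rw [h]
    push_cast
    linear_combination (2 * (n : ℂ) ^ 2) * hm2
  exact_mod_cast this

theorem norm_eval_zero_derivative_le {n : ℕ} (hn : Odd n) {p : ℂ[X]} (hp : p.natDegree ≤ n + 1)
    {M : ℝ} (hM : ∀ x ∈ Set.Icc (-1 : ℝ) 1, ‖p.eval (x : ℂ)‖ ≤ M) :
    ‖(derivative p).eval 0‖ ≤ n * M := by
  obtain ⟨m, hm⟩ := hn
  have hpos : (0 : ℝ) < 2 * n := by rw [hm]; positivity
  refine le_of_mul_le_mul_left ?_ hpos
  calc 2 * n * ‖(derivative p).eval 0‖ = ‖(-1) ^ m * (2 * n) * (derivative p).eval 0‖ := by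
        simp
    _ = ‖∑ j ∈ range (2 * n), (-1) ^ j * p.eval (node n j : ℂ) / (node n j : ℂ) ^ 2‖ := by
        rw [sum_neg_one_pow_mul_eval_node_div_sq hm hp]
    _ ≤ ∑ j ∈ range (2 * n), M * (node n j ^ 2)⁻¹ := by
        refine (norm_sum_le _ _).trans (sum_le_sum fun j _ => ?_)
        rw [norm_div, norm_mul, norm_pow, norm_pow, norm_neg, norm_one, one_pow, one_mul,
          Complex.norm_real, Real.norm_eq_abs, sq_abs, div_eq_mul_inv]
        exact mul_le_mul_of_nonneg_right (hM _ node_mem_Icc) (by positivity)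
    _ = 2 * n * (n * M) := by
        rw [← mul_sum, sum_inv_node_sq ⟨m, hm⟩]
        ring

end Polynomial.Chebyshev

/-- Bernstein: For a polynomial `f` with complex coefficients of degree at
most `d ≥ 1`, the supremum of `|f(t)|` over real `t ∈ [−1,1]` is at least `|f′(0)|/d`. -/
theorem bernstein_inequality (d : ℕ) (hd : 1 ≤ d) (f : Polynomial ℂ)
    (hf : f.natDegree ≤ d) :
    ‖(Polynomial.derivative f).eval 0‖ / d ≤
      ⨆ t : Set.Icc (-1:ℝ) 1, ‖f.eval ((t : ℝ) : ℂ)‖ := by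
  have hbdd : BddAbove (Set.range fun t : Set.Icc (-1 : ℝ) 1 => ‖f.eval ((t : ℝ) : ℂ)‖) :=
    (isCompact_range (by fun_prop)).bddAbove
  have hM (x : ℝ) (hx : x ∈ Set.Icc (-1 : ℝ) 1) :
      ‖f.eval (x : ℂ)‖ ≤ ⨆ t : Set.Icc (-1:ℝ) 1, ‖f.eval ((t : ℝ) : ℂ)‖ :=
    le_ciSup hbdd ⟨x, hx⟩
  have hM0 : 0 ≤ ⨆ t : Set.Icc (-1:ℝ) 1, ‖f.eval ((t : ℝ) : ℂ)‖ :=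
    (norm_nonneg _).trans (hM 0 (by norm_num))
  obtain ⟨n, hodd, hnd, hdn⟩ : ∃ n, Odd n ∧ n ≤ d ∧ d ≤ n + 1 :=
    ⟨2 * ((d - 1) / 2) + 1, odd_two_mul_add_one _, by omega, by omega⟩
  rw [div_le_iff₀ (by exact_mod_cast hd), mul_comm]
  calc ‖(derivative f).eval 0‖
      ≤ n * ⨆ t : Set.Icc (-1:ℝ) 1, ‖f.eval ((t : ℝ) : ℂ)‖ :=
        Chebyshev.norm_eval_zero_derivative_le hodd (hf.trans hdn) hM
    _ ≤ d * ⨆ t : Set.Icc (-1:ℝ) 1, ‖f.eval ((t : ℝ) : ℂ)‖ := by gcongr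
end

section
/- Let d be a positive integer. There exists a choice of signs ε(σ) ∈ {−1,+1}, one for each permutation σ of {1,…,d}, such that for every matrix M with entries M_{i,j} ∈ {−1,+1}, |∑_{σ ∈ S_d} ε(σ) · ∏_{i=1}^d M_{i,σ(i)}| ≤ √(2·(d²+1)·d!). -/
/-!
Random signs: for a fixed ±1 vector `X` indexed by a set of `u` monomials, the map `ε ↦ ε * X` is a
bijection of sign vectors, so `∑ σ, ε σ * X σ` has the law of a sum of `u` independent random signs.
Chernoff's bound gives `P(|∑| > a) ≤ 2 exp (-a² / (2u))`, which for `a = √(2 (n + 1) u)` is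
`2 e^{-(n+1)}`. A union bound over the `≤ 2^n` evaluation points leaves total failure probability
`(2/e)^(n+1) < 1`, so some sign vector works for all of them simultaneously. For the permanent
support, the points are the `2^(d²)` sign matrices and the monomials are the `d!` permutations.
-/

open Finset Real

namespace SignVector

variable {P : Type*} [Fintype P] [DecidableEq P]

def signSum (ε : P → ℤˣ) : ℝ := ∑ σ, ((ε σ : ℤ) : ℝ)

lemma sum_units_int_exp_mul (t : ℝ) : ∑ s : ℤˣ, exp (t * ((s : ℤ) : ℝ)) = 2 * cosh t := by
  rw [cosh_eq, show (univ : Finset ℤˣ) = {1, -1} from rfl, sum_pair (by decide)]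
  push_cast
  ring_nf

lemma sum_exp_mul_signSum (t : ℝ) :
    ∑ ε : P → ℤˣ, exp (t * signSum ε) = (2 * cosh t) ^ Fintype.card P := by
  simp_rw [signSum, mul_sum, exp_sum]
  rw [← Fintype.prod_sum (fun (_ : P) (s : ℤˣ) => exp (t * ((s : ℤ) : ℝ))),
    sum_units_int_exp_mul, prod_const, card_univ]

lemma card_le_signSum_mul_exp_le {t : ℝ} (ht : 0 ≤ t) (a : ℝ) :
    #{ε : P → ℤˣ | a ≤ signSum ε} * exp (t * a) ≤ (2 * cosh t) ^ Fintype.card P := by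
  rw [← sum_exp_mul_signSum, ← nsmul_eq_mul, ← sum_const]
  calc ∑ _ε ∈ {ε : P → ℤˣ | a ≤ signSum ε}, exp (t * a)
      ≤ ∑ ε ∈ {ε : P → ℤˣ | a ≤ signSum ε}, exp (t * signSum ε) :=
        sum_le_sum fun ε hε => exp_le_exp.2 (mul_le_mul_of_nonneg_left (mem_filter.1 hε).2 ht)
    _ ≤ ∑ ε : P → ℤˣ, exp (t * signSum ε) :=
        sum_le_sum_of_subset_of_nonneg (filter_subset _ _) fun _ _ _ => (exp_pos _).le

lemma card_le_signSum_le [Nonempty P] {a : ℝ} (ha : 0 ≤ a) :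
    (#{ε : P → ℤˣ | a ≤ signSum ε} : ℝ) ≤
      2 ^ Fintype.card P * exp (-(a ^ 2 / (2 * Fintype.card P))) := by
  set u := Fintype.card P
  have hu : 0 < (u : ℝ) := by positivity
  -- Chernoff's bound at the optimal parameter `t = a / u`, using `cosh t ≤ exp (t ^ 2 / 2)`.
  have hchernoff := card_le_signSum_mul_exp_le (div_nonneg ha hu.le) a (P := P)
  rw [← le_div_iff₀ (exp_pos _), div_eq_mul_inv, ← exp_neg] at hchernoff
  calc (#{ε : P → ℤˣ | a ≤ signSum ε} : ℝ)
      ≤ (2 * cosh (a / u)) ^ u * exp (-(a / u * a)) := hchernoff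
    _ ≤ (2 * exp ((a / u) ^ 2 / 2)) ^ u * exp (-(a / u * a)) := by
        gcongr
        exact cosh_le_exp_half_sq _
    _ = 2 ^ u * exp (-(a ^ 2 / (2 * u))) := by
        rw [mul_pow, ← exp_nat_mul, mul_assoc, ← exp_add]
        congr 2
        field_simp
        ring

lemma card_lt_abs_signSum_le [Nonempty P] {a : ℝ} (ha : 0 ≤ a) :
    (#{ε : P → ℤˣ | a < |signSum ε|} : ℝ) ≤
      2 * (2 ^ Fintype.card P * exp (-(a ^ 2 / (2 * Fintype.card P)))) := by
  have hneg : #{ε : P → ℤˣ | a ≤ -signSum ε} = #{ε : P → ℤˣ | a ≤ signSum ε} :=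
    card_equiv (Equiv.neg (P → ℤˣ)) (fun ε => by
      rw [mem_filter, mem_filter]
      simp [signSum])
  have hsub : ({ε : P → ℤˣ | a < |signSum ε|} : Finset _) ⊆
      ({ε | a ≤ signSum ε} : Finset _) ∪ ({ε | a ≤ -signSum ε} : Finset _) := by
    intro ε hε
    simp only [mem_filter, mem_univ, true_and, mem_union] at hε ⊢
    exact (lt_abs.1 hε).imp le_of_lt le_of_lt
  calc (#{ε : P → ℤˣ | a < |signSum ε|} : ℝ)
      ≤ #{ε : P → ℤˣ | a ≤ signSum ε} + #{ε : P → ℤˣ | a ≤ -signSum ε} := by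
        exact_mod_cast (card_le_card hsub).trans (card_union_le _ _)
    _ ≤ _ := by
        rw [hneg]
        linarith [card_le_signSum_le ha (P := P)]

lemma card_lt_abs_signSum_mul (X : P → ℤˣ) (a : ℝ) :
    #{ε : P → ℤˣ | a < |signSum (ε * X)|} = #{ε : P → ℤˣ | a < |signSum ε|} :=
  card_equiv (Equiv.mulRight X) (by simp)

theorem exists_forall_abs_signSum_mul_le [Nonempty P] {K : Type*} [Fintype K] (X : K → P → ℤˣ)
    (n : ℕ) (hK : Fintype.card K ≤ 2 ^ n) :
    ∃ ε : P → ℤˣ, ∀ k, |signSum (ε * X k)| ≤ √(2 * (n + 1) * Fintype.card P) := by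
  set a := √(2 * (n + 1) * Fintype.card P)
  have ha : a ^ 2 / (2 * Fintype.card P) = n + 1 := by
    rw [sq_sqrt (by positivity)]
    field_simp
  by_contra! hbad
  have hcover : (univ : Finset (P → ℤˣ)) ⊆ univ.biUnion fun k => {ε | a < |signSum (ε * X k)|} :=
    fun ε _ => by
      obtain ⟨k, hk⟩ := hbad ε
      simpa using ⟨k, hk⟩
  have h2e : (2 : ℝ) ^ (n + 1) < exp 1 ^ (n + 1) :=
    pow_lt_pow_left₀ (by linarith [exp_one_gt_d9]) (by norm_num) (Nat.succ_ne_zero _)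
  refine lt_irrefl ((2 : ℝ) ^ Fintype.card P) ?_
  calc
    (2 : ℝ) ^ Fintype.card P = #(univ : Finset (P → ℤˣ)) := by simp
    _ ≤ ∑ k, (#{ε : P → ℤˣ | a < |signSum (ε * X k)|} : ℝ) := by
        exact_mod_cast (card_le_card hcover).trans card_biUnion_le
    _ ≤ ∑ _k : K, 2 * (2 ^ Fintype.card P * exp (-(n + 1))) := by
        gcongr with k
        rw [card_lt_abs_signSum_mul, ← ha]
        exact card_lt_abs_signSum_le (sqrt_nonneg _)
    _ ≤ 2 ^ n * (2 * (2 ^ Fintype.card P * exp (-(n + 1)))) := by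
        rw [sum_const, nsmul_eq_mul, card_univ]
        gcongr
        exact_mod_cast hK
    _ = 2 ^ (n + 1) / exp 1 ^ (n + 1) * 2 ^ Fintype.card P := by
        rw [← exp_nat_mul, mul_one, exp_neg]
        push_cast
        ring
    _ < 2 ^ Fintype.card P := by
        rw [div_mul_eq_mul_div, div_lt_iff₀ (by positivity), mul_comm]
        exact mul_lt_mul_of_pos_left h2e (by positivity)

end SignVector

open SignVector

lemma exists_units_int_cast_eq {x : ℝ} (hx : x = 1 ∨ x = -1) : ∃ s : ℤˣ, ((s : ℤ) : ℝ) = x := by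
  rcases hx with rfl | rfl
  exacts [⟨1, by simp⟩, ⟨-1, by simp⟩]

theorem permanent_support_littlewood_bound_general (d : ℕ) :
    ∃ ε : Equiv.Perm (Fin d) → ℝ,
      (∀ σ, ε σ = 1 ∨ ε σ = -1) ∧
      ∀ M : Fin d → Fin d → ℝ, (∀ i j, M i j = 1 ∨ M i j = -1) →
        |∑ σ : Equiv.Perm (Fin d), ε σ * ∏ i : Fin d, M i (σ i)| ≤
          Real.sqrt (2 * ((d:ℝ) ^ 2 + 1) * (Nat.factorial d : ℝ)) := by
  let monomial (N : Fin d → Fin d → ℤˣ) (σ : Equiv.Perm (Fin d)) : ℤˣ := ∏ i, N i (σ i)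
  obtain ⟨ε, hε⟩ := exists_forall_abs_signSum_mul_le monomial (d ^ 2) (by simp [sq, pow_mul])
  refine ⟨fun σ => ((ε σ : ℤ) : ℝ),
    fun σ => by rcases Int.units_eq_one_or (ε σ) with h | h <;> simp [h], fun M hM => ?_⟩
  choose N hN using fun i j => exists_units_int_cast_eq (hM i j)
  convert hε N using 2
  · simp [signSum, monomial, ← hN]
  · simp [Fintype.card_perm]

/-- quasi-random "determinant" support: For every positive integer `d`
there are signs `ε σ ∈ {-1,1}`, one for each permutation `σ` of `{1,…,d}`, such that for
every matrix `M` with `±1` entries,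
`|∑_σ ε σ ∏_i M i (σ i)| ≤ √(2 (d²+1) d!)`. -/
theorem permanent_support_littlewood_bound (d : ℕ) (hd : 0 < d) :
    ∃ ε : Equiv.Perm (Fin d) → ℝ,
      (∀ σ, ε σ = 1 ∨ ε σ = -1) ∧
      ∀ M : Fin d → Fin d → ℝ, (∀ i j, M i j = 1 ∨ M i j = -1) →
        |∑ σ : Equiv.Perm (Fin d), ε σ * ∏ i : Fin d, M i (σ i)| ≤
          Real.sqrt (2 * ((d:ℝ) ^ 2 + 1) * (Nat.factorial d : ℝ)) :=
  permanent_support_littlewood_bound_general d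
end
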